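/- arXiv:2005.05070 — 11 statements merged into one kernel-verified Lean document; each statement's English description precedes it below -/
import Mathlib

section
/- Let G be a graph with average degree k (i.e. k = 2|E|/|V|, with V nonempty). Then there exists a vertex v of G with degree at least k such that aad(v) ≥ k, where aad(v) = α(v)/β(v), α(v) = deg(v) + |{w ∈ Γ(v) : deg(w) < k}|, and β(v) = 1 + Σ_{w ∈ Γ(v), deg(w) < k} 1/deg(w). -/
open Finset in
open Classical in
/-- Every graph with average degree `k` contains a vertex of degree at least `k`
whose associated average degree is at least `k`. -/
theorem stmt_0 {V : Type*} [Fintype V] [Nonempty V] (G : SimpleGraph V)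
    [DecidableRel G.Adj] (k : ℝ)
    (hk : k = 2 * (G.edgeFinset.card : ℝ) / (Fintype.card V : ℝ)) :
    ∃ v : V, k ≤ (G.degree v : ℝ) ∧
      k ≤ ((G.degree v : ℝ) +
            (((G.neighborFinset v).filter (fun w => (G.degree w : ℝ) < k)).card : ℝ)) /
          (1 + ∑ w ∈ (G.neighborFinset v).filter (fun w => (G.degree w : ℝ) < k),
                (1 : ℝ) / (G.degree w : ℝ)) := by
  classical
  set d : V → ℝ := fun v => (G.degree v : ℝ) with hd
  have hVpos : (0:ℝ) < (Fintype.card V : ℝ) := by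
    exact_mod_cast Fintype.card_pos
  have hk0 : 0 ≤ k := by rw [hk]; positivity
  -- handshake
  have hsum : ∑ v, d v = k * (Fintype.card V : ℝ) := by
    have h := G.sum_degrees_eq_twice_card_edges
    have h' : ∑ v, d v = 2 * (G.edgeFinset.card : ℝ) := by
      simp only [hd]
      rw [← Nat.cast_sum]
      exact_mod_cast congrArg (Nat.cast : ℕ → ℝ) h
    rw [h', hk]
    field_simp
  have hbal : ∑ v, (d v - k) = 0 := by
    rw [Finset.sum_sub_distrib, hsum, Finset.sum_const, Finset.card_univ,
      nsmul_eq_mul]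
    ring
  set A : Finset V := univ.filter (fun v => k ≤ d v) with hA
  set B : Finset V := univ.filter (fun w => d w < k) with hB
  set g : V → ℝ := fun w => 1 - k / d w with hg
  set N : V → Finset V := fun v => (G.neighborFinset v).filter (fun w => d w < k) with hN
  -- A nonempty
  have hAne : A.Nonempty := by
    by_contra h
    have hall : ∀ v : V, d v < k := by
      intro v
      by_contra hv
      exact h ⟨v, by simp [hA, le_of_not_gt hv]⟩
    have : ∑ v : V, (d v - k) < ∑ v : V, (0:ℝ) :=
      Finset.sum_lt_sum_of_nonempty Finset.univ_nonempty
        (fun v _ => by linarith [hall v])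
    simp [hbal] at this
  -- N v as a filter of B
  have hNB : ∀ v, N v = B.filter (fun w => G.Adj v w) := by
    intro v
    ext w
    simp only [hN, hB, Finset.mem_filter, SimpleGraph.mem_neighborFinset,
      Finset.mem_univ, true_and]
    tauto
  -- double counting
  have hdc : ∑ v ∈ A, ∑ w ∈ N v, g w
      = ∑ w ∈ B, ((A.filter (fun v => G.Adj v w)).card : ℝ) * g w := by
    have h1 : ∀ v, ∑ w ∈ N v, g w = ∑ w ∈ B, if G.Adj v w then g w else 0 := by
      intro v; rw [hNB v, Finset.sum_filter]
    calc ∑ v ∈ A, ∑ w ∈ N v, g w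
        = ∑ v ∈ A, ∑ w ∈ B, if G.Adj v w then g w else 0 := by
          exact Finset.sum_congr rfl (fun v _ => h1 v)
      _ = ∑ w ∈ B, ∑ v ∈ A, if G.Adj v w then g w else 0 := Finset.sum_comm
      _ = ∑ w ∈ B, ((A.filter (fun v => G.Adj v w)).card : ℝ) * g w := by
          refine Finset.sum_congr rfl (fun w _ => ?_)
          rw [← Finset.sum_filter, Finset.sum_const, nsmul_eq_mul]
  -- pointwise bound
  have hpt : ∀ w ∈ B, d w - k ≤ ((A.filter (fun v => G.Adj v w)).card : ℝ) * g w := by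
    intro w hw
    have hwk : d w < k := by
      simpa [hB] using hw
    by_cases hdeg : G.degree w = 0
    · have hc : (A.filter (fun v => G.Adj v w)) = ∅ := by
        rw [Finset.filter_eq_empty_iff]
        intro v _ hadj
        have : v ∈ G.neighborFinset w := by
          rw [SimpleGraph.mem_neighborFinset]; exact hadj.symm
        have := Finset.card_pos.mpr ⟨v, this⟩
        rw [G.card_neighborFinset_eq_degree, hdeg] at this
        exact absurd this (lt_irrefl 0)
      rw [hc]
      simp only [Finset.card_empty, Nat.cast_zero, zero_mul]
      have : d w = 0 := by simp [hd, hdeg]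
      linarith
    · have hdpos : (0:ℝ) < d w := by
        simp only [hd]
        exact_mod_cast Nat.pos_of_ne_zero hdeg
      have hgneg : g w ≤ 0 := by
        have : 1 ≤ k / d w := (one_le_div hdpos).mpr (le_of_lt hwk)
        simp only [hg]; linarith
      have hcle : ((A.filter (fun v => G.Adj v w)).card : ℝ) ≤ d w := by
        have hsub : A.filter (fun v => G.Adj v w) ⊆ G.neighborFinset w := by
          intro v hv
          rw [SimpleGraph.mem_neighborFinset]
          exact (Finset.mem_filter.mp hv).2.symm
        have := Finset.card_le_card hsub
        rw [G.card_neighborFinset_eq_degree] at this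
        simp only [hd]; exact_mod_cast this
      have heq : d w * g w = d w - k := by
        simp only [hg]
        field_simp
      calc d w - k = d w * g w := heq.symm
        _ ≤ ((A.filter (fun v => G.Adj v w)).card : ℝ) * g w :=
            mul_le_mul_of_nonpos_right hcle hgneg
  -- total nonnegativity
  have htot : 0 ≤ ∑ v ∈ A, ((d v - k) + ∑ w ∈ N v, g w) := by
    rw [Finset.sum_add_distrib, hdc]
    have h1 : ∑ w ∈ B, (d w - k) ≤ ∑ w ∈ B, ((A.filter (fun v => G.Adj v w)).card : ℝ) * g w :=
      Finset.sum_le_sum hpt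
    have h2 : ∑ v ∈ A, (d v - k) + ∑ w ∈ B, (d w - k) = 0 := by
      have := Finset.sum_filter_add_sum_filter_not Finset.univ (fun v => k ≤ d v)
        (fun v => d v - k)
      rw [hbal] at this
      rw [hA, hB]
      rw [← this]
      congr 1
      exact Finset.sum_congr (Finset.filter_congr (fun v _ => not_le.symm)) (fun _ _ => rfl)
    linarith
  -- pick good vertex
  obtain ⟨v, hvA, hv⟩ := Finset.exists_le_of_sum_le hAne (by
    simpa using htot : ∑ _v ∈ A, (0:ℝ) ≤ ∑ v ∈ A, ((d v - k) + ∑ w ∈ N v, g w))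
  have hvk : k ≤ d v := by simpa [hA] using hvA
  refine ⟨v, hvk, ?_⟩
  have hβpos : (0:ℝ) < 1 + ∑ w ∈ N v, (1:ℝ) / d w := by
    have : (0:ℝ) ≤ ∑ w ∈ N v, (1:ℝ) / d w :=
      Finset.sum_nonneg (fun w _ => by positivity)
    linarith
  rw [le_div_iff₀ hβpos]
  have hexp : ∑ w ∈ N v, g w = (((N v).card : ℝ)) - ∑ w ∈ N v, k / d w := by
    simp only [hg]
    rw [Finset.sum_sub_distrib, Finset.sum_const, nsmul_eq_mul, mul_one]
  have hmul : k * ∑ w ∈ N v, (1:ℝ) / d w = ∑ w ∈ N v, k / d w := by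
    rw [Finset.mul_sum]
    exact Finset.sum_congr rfl (fun w _ => by ring)
  have hv' : (0:ℝ) ≤ (d v - k) + ∑ w ∈ N v, g w := hv
  rw [hexp] at hv'
  have : k * (1 + ∑ w ∈ N v, (1:ℝ) / d w) = k + ∑ w ∈ N v, k / d w := by
    rw [mul_add, mul_one, hmul]
  rw [this]
  linarith
end

section
/- For every real number k ≥ 2, writing K = ⌊k⌋ + 1, we have 2K ≤ D₂(k) ≤ K², where D₂(k) is the minimum integer z such that there exist an integer d ≥ K and a tuple x = (x₁,…,x_d) of integers each at least 2 with Σᵢ xᵢ = z and aad*_K(x) > k. -/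
open Classical

/-- `aad*_K(x)` for a tuple `x` of positive integers. -/
noncomputable def aadStar (K : ℕ) {d : ℕ} (x : Fin d → ℕ) : ℝ :=
  ((d : ℝ) + ((Finset.univ.filter (fun i => x i < K)).card : ℝ)) /
    (1 + ∑ i ∈ Finset.univ.filter (fun i => x i < K), (1 : ℝ) / (x i : ℝ))

/-- `D₂(k)`: the minimum integer `z` such that there is `d ≥ K = ⌊k⌋+1` and a tuple
`x ∈ (ℤ_{≥2})^d` with `Σ xᵢ = z` and `aad*_K(x) > k`. -/
noncomputable def D2 (k : ℝ) : ℕ :=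
  sInf {z : ℕ | ∃ d : ℕ, ⌊k⌋.toNat + 1 ≤ d ∧ ∃ x : Fin d → ℕ,
    (∀ i, 2 ≤ x i) ∧ (∑ i, x i) = z ∧ k < aadStar (⌊k⌋.toNat + 1) x}

/-- For every real `k ≥ 2`, writing `K = ⌊k⌋+1`, we have `2K ≤ D₂(k) ≤ K²`. -/
theorem stmt_1 (k : ℝ) (hk : 2 ≤ k) :
    2 * (⌊k⌋.toNat + 1) ≤ D2 k ∧ D2 k ≤ (⌊k⌋.toNat + 1) ^ 2 := by
  set K := ⌊k⌋.toNat + 1 with hK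
  have hk0 : (0:ℝ) ≤ k := by linarith
  have hfl : ((⌊k⌋.toNat : ℤ) : ℝ) = ((⌊k⌋ : ℤ) : ℝ) := by
    exact_mod_cast congrArg (Int.cast : ℤ → ℝ) (Int.toNat_of_nonneg (Int.floor_nonneg.mpr hk0))
  have h3 : ((⌊k⌋.toNat : ℕ) : ℝ) = ((⌊k⌋ : ℤ) : ℝ) := by
    exact_mod_cast Int.toNat_of_nonneg (Int.floor_nonneg.mpr hk0)
  have hKk : k < (K : ℝ) := by
    have h2 := Int.lt_floor_add_one k
    push_cast [hK]
    rw [h3]; exact h2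
  have hK2 : 2 ≤ K := by
    have : (2:ℤ) ≤ ⌊k⌋ := Int.le_floor.mpr (by exact_mod_cast hk)
    omega
  have haad : aadStar K (fun _ : Fin K => K) = (K : ℝ) := by
    unfold aadStar
    simp
  have hmem : K ^ 2 ∈ {z : ℕ | ∃ d : ℕ, ⌊k⌋.toNat + 1 ≤ d ∧ ∃ x : Fin d → ℕ,
      (∀ i, 2 ≤ x i) ∧ (∑ i, x i) = z ∧ k < aadStar (⌊k⌋.toNat + 1) x} := by
    refine ⟨K, le_refl K, fun _ => K, fun i => hK2, ?_, ?_⟩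
    · simp [Finset.sum_const, sq, mul_comm]
    · rw [show ⌊k⌋.toNat + 1 = K from rfl, haad]; exact hKk
  constructor
  · refine le_csInf ⟨K ^ 2, hmem⟩ ?_
    rintro z ⟨d, hd, x, hx2, hsum, -⟩
    have h1 : 2 * d ≤ ∑ i, x i := by
      calc 2 * d = ∑ _i : Fin d, 2 := by simp [Finset.sum_const, mul_comm]
        _ ≤ ∑ i, x i := Finset.sum_le_sum (fun i _ => hx2 i)
    omega
  · exact Nat.sInf_le hmem
end

section
/- Let k ≥ 2 be real, K = ⌊k⌋ + 1, and let G be a graph with minimum degree at least 2 and average degree in the interval (k, K]. Then G contains a vertex v with deg(v) ≥ K and 2-degree d²(v) ≥ D₂(k), where d²(v) = Σ_{w ∈ Γ(v)} deg(w). -/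
open Classical

/-- Every graph with minimum degree at least 2 and average degree in `(k, K]`
contains a vertex of degree at least `K = ⌊k⌋+1` and 2-degree at least `D₂(k)`. -/
theorem stmt_2 {V : Type*} [Fintype V] (G : SimpleGraph V) [DecidableRel G.Adj]
    (k : ℝ) (hk : 2 ≤ k)
    (hmin : ∀ v : V, 2 ≤ G.degree v)
    (havg1 : k < 2 * (G.edgeFinset.card : ℝ) / (Fintype.card V : ℝ))
    (havg2 : 2 * (G.edgeFinset.card : ℝ) / (Fintype.card V : ℝ) ≤ (⌊k⌋.toNat + 1 : ℕ)) :
    ∃ v : V, ⌊k⌋.toNat + 1 ≤ G.degree v ∧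
      D2 k ≤ ∑ w ∈ G.neighborFinset v, G.degree w := by
  classical
  set K : ℕ := ⌊k⌋.toNat + 1 with hKdef
  -- basic facts about K
  have hk0 : (0:ℝ) ≤ k := by linarith
  have hflr : ((⌊k⌋.toNat : ℕ) : ℝ) = ((⌊k⌋ : ℤ) : ℝ) := by
    rw [← Int.cast_natCast, Int.toNat_of_nonneg (Int.floor_nonneg.mpr hk0)]
  have hsmall_le : ∀ w : V, G.degree w < K → (G.degree w : ℝ) ≤ k := by
    intro w hw
    have h1 : G.degree w ≤ ⌊k⌋.toNat := Nat.lt_succ_iff.mp hw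
    have : (G.degree w : ℝ) ≤ ((⌊k⌋.toNat : ℕ) : ℝ) := by exact_mod_cast h1
    rw [hflr] at this
    exact this.trans (Int.floor_le k)
  -- |V| > 0
  have hn : 0 < Fintype.card V := by
    rcases Nat.eq_zero_or_pos (Fintype.card V) with h | h
    · rw [h] at havg1; norm_num at havg1; linarith
    · exact h
  have hnR : (0:ℝ) < (Fintype.card V : ℝ) := by exact_mod_cast hn
  -- sum of degrees > k * n
  have hsumdeg : k * (Fintype.card V : ℝ) < ∑ v, (G.degree v : ℝ) := by
    have h2 : (∑ v, (G.degree v : ℝ)) = 2 * (G.edgeFinset.card : ℝ) := by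
      have := G.sum_degrees_eq_twice_card_edges
      exact_mod_cast this
    rw [h2]
    calc k * (Fintype.card V : ℝ)
        < (2 * (G.edgeFinset.card : ℝ) / (Fintype.card V : ℝ)) * (Fintype.card V : ℝ) := by
          exact mul_lt_mul_of_pos_right havg1 hnR
      _ = 2 * (G.edgeFinset.card : ℝ) := by field_simp
  -- the key existence
  set B : Finset V := Finset.univ.filter (fun v => K ≤ G.degree v) with hBdef
  set S : Finset V := Finset.univ.filter (fun v => G.degree v < K) with hSdef
  have hBS : ∀ f : V → ℝ, ∑ v ∈ B, f v + ∑ v ∈ S, f v = ∑ v, f v := by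
    intro f
    have : S = Finset.univ.filter (fun v => ¬ K ≤ G.degree v) := by
      apply Finset.filter_congr; intro v _; simp [not_le]
    rw [this, hBdef, Finset.sum_filter_add_sum_filter_not]
  -- b and s counts
  set b : V → ℕ := fun w => ((G.neighborFinset w).filter (fun u => K ≤ G.degree u)).card with hbdef
  set c : V → ℕ := fun w => ((G.neighborFinset w).filter (fun u => G.degree u < K)).card with hcdef
  have hbc : ∀ w, b w + c w = G.degree w := by
    intro w
    have h1 : (G.neighborFinset w).filter (fun u => G.degree u < K)
        = (G.neighborFinset w).filter (fun u => ¬ K ≤ G.degree u) := by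
      apply Finset.filter_congr; intro u _; simp [not_le]
    rw [hbdef, hcdef]
    simp only [h1]
    rw [Finset.card_filter_add_card_filter_not, G.card_neighborFinset_eq_degree]
  -- swap lemma: double counting between B and S
  have hswap : ∀ f : V → ℝ,
      ∑ v ∈ B, ∑ w ∈ (G.neighborFinset v).filter (fun u => G.degree u < K), f w
        = ∑ w ∈ S, (b w : ℝ) * f w := by
    intro f
    have h1 : ∀ v : V, (G.neighborFinset v).filter (fun u => G.degree u < K)
        = S.filter (fun w => G.Adj v w) := by
      intro v; ext w
      simp only [hSdef, Finset.mem_filter, SimpleGraph.mem_neighborFinset, Finset.mem_univ,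
        true_and]
      tauto
    have h2 : ∀ w : V, B.filter (fun v => G.Adj v w)
        = (G.neighborFinset w).filter (fun u => K ≤ G.degree u) := by
      intro w; ext v
      simp only [hBdef, Finset.mem_filter, SimpleGraph.mem_neighborFinset, Finset.mem_univ,
        true_and]
      constructor
      · rintro ⟨h, ha⟩; exact ⟨ha.symm, h⟩
      · rintro ⟨ha, h⟩; exact ⟨h, ha.symm⟩
    calc ∑ v ∈ B, ∑ w ∈ (G.neighborFinset v).filter (fun u => G.degree u < K), f w
        = ∑ v ∈ B, ∑ w ∈ S, if G.Adj v w then f w else 0 := by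
          refine Finset.sum_congr rfl fun v _ => ?_
          rw [h1 v, Finset.sum_filter]
      _ = ∑ w ∈ S, ∑ v ∈ B, if G.Adj v w then f w else 0 := Finset.sum_comm
      _ = ∑ w ∈ S, (b w : ℝ) * f w := by
          refine Finset.sum_congr rfl fun w _ => ?_
          rw [← Finset.sum_filter, h2 w, Finset.sum_const, hbdef]
          simp [mul_comm]
  -- main claim
  have main : ∃ v : V, K ≤ G.degree v ∧
      k * (1 + ∑ w ∈ (G.neighborFinset v).filter (fun u => G.degree u < K),
        (1:ℝ)/(G.degree w : ℝ))
      < (G.degree v : ℝ) + (((G.neighborFinset v).filter (fun u => G.degree u < K)).card : ℝ) := by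
    by_contra hcon
    push_neg at hcon
    -- sum the negation over B
    have hsum : ∑ v ∈ B, ((G.degree v : ℝ) + (c v : ℝ))
        ≤ ∑ v ∈ B, k * (1 + ∑ w ∈ (G.neighborFinset v).filter (fun u => G.degree u < K),
            (1:ℝ)/(G.degree w : ℝ)) := by
      refine Finset.sum_le_sum fun v hv => ?_
      have hvB : K ≤ G.degree v := (Finset.mem_filter.mp hv).2
      exact hcon v hvB
    -- rewrite both sides
    have hL : ∑ v ∈ B, ((G.degree v : ℝ) + (c v : ℝ))
        = ∑ v ∈ B, (G.degree v : ℝ) + ∑ w ∈ S, (b w : ℝ) * 1 := by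
      rw [Finset.sum_add_distrib, ← hswap (fun _ => (1:ℝ))]
      congr 1
      refine Finset.sum_congr rfl fun v _ => ?_
      rw [hcdef]; simp
    have hR : ∑ v ∈ B, k * (1 + ∑ w ∈ (G.neighborFinset v).filter (fun u => G.degree u < K),
            (1:ℝ)/(G.degree w : ℝ))
        = k * (B.card : ℝ) + k * ∑ w ∈ S, (b w : ℝ) * ((1:ℝ)/(G.degree w : ℝ)) := by
      rw [← hswap (fun w => (1:ℝ)/(G.degree w : ℝ))]
      rw [← Finset.mul_sum, Finset.sum_add_distrib, Finset.sum_const]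
      push_cast
      ring
    rw [hL, hR] at hsum
    -- per-vertex bound on S
    have hper : ∀ w ∈ S, k * ((b w : ℝ) * ((1:ℝ)/(G.degree w : ℝ))) + (G.degree w : ℝ)
        - (b w : ℝ) ≤ k := by
      intro w hw
      have hwS : G.degree w < K := (Finset.mem_filter.mp hw).2
      have hdk : (G.degree w : ℝ) ≤ k := hsmall_le w hwS
      have hd2 : (2:ℝ) ≤ (G.degree w : ℝ) := by exact_mod_cast hmin w
      have hdpos : (0:ℝ) < (G.degree w : ℝ) := by linarith
      have hbcw : (b w : ℝ) + (c w : ℝ) = (G.degree w : ℝ) := by exact_mod_cast hbc w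
      have hb0 : (0:ℝ) ≤ (b w : ℝ) := Nat.cast_nonneg _
      have hc0 : (0:ℝ) ≤ (c w : ℝ) := Nat.cast_nonneg _
      have h1 : k * ((b w : ℝ) * ((1:ℝ)/(G.degree w : ℝ))) = (k * (b w : ℝ)) / (G.degree w : ℝ) := by
        field_simp
      rw [h1]
      have h2 : (k * (b w : ℝ)) / (G.degree w : ℝ) ≤ k - (G.degree w : ℝ) + (b w : ℝ) := by
        rw [div_le_iff₀ hdpos]
        nlinarith [mul_le_mul_of_nonneg_left hdk hc0]
      linarith
    have hSsum : ∑ w ∈ S, (k * ((b w : ℝ) * ((1:ℝ)/(G.degree w : ℝ))) + (G.degree w : ℝ)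
        - (b w : ℝ)) ≤ ∑ w ∈ S, k := Finset.sum_le_sum hper
    rw [Finset.sum_const, nsmul_eq_mul] at hSsum
    have hexp : ∑ w ∈ S, (k * ((b w : ℝ) * ((1:ℝ)/(G.degree w : ℝ))) + (G.degree w : ℝ)
        - (b w : ℝ)) = k * ∑ w ∈ S, (b w : ℝ) * ((1:ℝ)/(G.degree w : ℝ))
          + ∑ w ∈ S, (G.degree w : ℝ) - ∑ w ∈ S, (b w : ℝ) := by
      rw [Finset.sum_sub_distrib, Finset.sum_add_distrib, Finset.mul_sum]
    rw [hexp] at hSsum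
    have hpart := hBS (fun v => (G.degree v : ℝ))
    have hcards := hBS (fun _ => (1:ℝ))
    simp only [Finset.sum_const, nsmul_eq_mul, mul_one] at hcards
    have hb1 : ∑ w ∈ S, (b w : ℝ) * 1 = ∑ w ∈ S, (b w : ℝ) := by
      simp
    rw [hb1] at hsum
    have hcardV : (B.card : ℝ) + (S.card : ℝ) = (Fintype.card V : ℝ) := by
      rw [hcards]; simp
    have hkn : k * (B.card : ℝ) + (S.card : ℝ) * k = k * (Fintype.card V : ℝ) := by
      rw [← hcardV]; ring
    linarith
  -- conclude from main
  obtain ⟨v, hv1, hv2⟩ := main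
  refine ⟨v, hv1, ?_⟩
  apply Nat.sInf_le
  simp only [Set.mem_setOf_eq]
  set s : Finset V := G.neighborFinset v with hsdef
  have hcard : s.card = G.degree v := G.card_neighborFinset_eq_degree v
  set e : s ≃ Fin s.card := s.equivFin with hedef
  set x : Fin s.card → ℕ := fun i => G.degree ((e.symm i) : V) with hxdef
  have htransfer : ∀ g : ℕ → ℝ,
      ∑ i ∈ Finset.univ.filter (fun i => x i < K), g (x i)
        = ∑ w ∈ s.filter (fun w => G.degree w < K), g (G.degree w) := by
    intro g
    rw [Finset.sum_filter, Finset.sum_filter]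
    have h1 : ∑ i : Fin s.card, (if x i < K then g (x i) else 0)
        = ∑ a : s, (if G.degree (a : V) < K then g (G.degree (a : V)) else 0) :=
      Equiv.sum_comp e.symm (fun a : s => if G.degree (a : V) < K then g (G.degree (a : V)) else 0)
    rw [h1, Finset.sum_coe_sort s (fun w => if G.degree w < K then g (G.degree w) else 0)]
  refine ⟨s.card, by rw [hcard]; exact hv1, x, fun i => hmin _, ?_, ?_⟩
  · have := Equiv.sum_comp e.symm (fun a : s => G.degree (a : V))
    rw [hxdef]
    rw [show (∑ i, G.degree ((e.symm i) : V)) = ∑ a : s, G.degree (a : V) from this,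
      Finset.sum_coe_sort s (fun w => G.degree w)]
  · unfold aadStar
    have hcardfilter : ((Finset.univ.filter (fun i => x i < K)).card : ℝ)
        = ((s.filter (fun w => G.degree w < K)).card : ℝ) := by
      have h1 := htransfer (fun _ => (1:ℝ))
      rw [Finset.sum_const, Finset.sum_const] at h1
      simpa using h1
    have hsumfilter : ∑ i ∈ Finset.univ.filter (fun i => x i < K), (1:ℝ) / (x i : ℝ)
        = ∑ w ∈ s.filter (fun w => G.degree w < K), (1:ℝ) / (G.degree w : ℝ) :=
      htransfer (fun m => (1:ℝ) / (m : ℝ))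
    rw [hcardfilter, hsumfilter]
    have hpos : (0:ℝ) < 1 + ∑ w ∈ s.filter (fun w => G.degree w < K), (1:ℝ) / (G.degree w : ℝ) := by
      have : (0:ℝ) ≤ ∑ w ∈ s.filter (fun w => G.degree w < K), (1:ℝ) / (G.degree w : ℝ) :=
        Finset.sum_nonneg fun w _ => by positivity
      linarith
    rw [lt_div_iff₀ hpos]
    rw [hcard]
    linarith [hv2]
end

section
/- Let k ≥ 2 be real and z a positive integer that is suitable for k (in the sense defined). Then D₂(k) ≤ z. -/
open Classical

/-- `z` is suitable for `k`: either `z ≥ K²` or there are integers `d`, `s`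
satisfying (S1)–(S4). -/
def Suitable (k : ℝ) (z : ℕ) : Prop :=
  (⌊k⌋.toNat + 1) ^ 2 ≤ z ∨ ∃ d s : ℕ,
    (⌊k⌋.toNat + 1) ≤ d ∧ 2 * d ≤ z ∧ s < d ∧
    (⌊k⌋.toNat + 1) * s + 2 * (d - s) ≤ z ∧
    z ≤ (⌊k⌋.toNat + 1) * s + ((⌊k⌋.toNat + 1) - 1) * (d - s) ∧
    k < (((d : ℝ) + ((d - s - (z - (⌊k⌋.toNat + 1) * s) % (d - s)) : ℕ) +
            (((z - (⌊k⌋.toNat + 1) * s) % (d - s) : ℕ)) ) /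
          (1 + ((d - s - (z - (⌊k⌋.toNat + 1) * s) % (d - s) : ℕ) : ℝ) /
                 (((z - (⌊k⌋.toNat + 1) * s) / (d - s) : ℕ) : ℝ) +
               (((z - (⌊k⌋.toNat + 1) * s) % (d - s) : ℕ) : ℝ) /
                 ((((z - (⌊k⌋.toNat + 1) * s) / (d - s) : ℕ) : ℝ) + 1)))

lemma sum_piece {M : Type*} [AddCommMonoid M] (s t d : ℕ) (hst : s ≤ t) (htd : t ≤ d)
    (a b c : M) :
    ∑ i ∈ Finset.range d, (if i < s then a else if i < t then b else c)
      = s • a + (t - s) • b + (d - t) • c := by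
  rw [Finset.range_eq_Ico, ← Finset.sum_Ico_consecutive _ (Nat.zero_le t) htd,
      ← Finset.sum_Ico_consecutive _ (Nat.zero_le s) hst]
  have h1 : ∑ i ∈ Finset.Ico 0 s, (if i < s then a else if i < t then b else c) = s • a := by
    rw [Finset.sum_congr rfl (g := fun _ => a) ?_, Finset.sum_const, Nat.card_Ico, Nat.sub_zero]
    intro i hi
    simp only [Finset.mem_Ico] at hi
    simp [hi.2]
  have h2 : ∑ i ∈ Finset.Ico s t, (if i < s then a else if i < t then b else c) = (t - s) • b := by
    rw [Finset.sum_congr rfl (g := fun _ => b) ?_, Finset.sum_const, Nat.card_Ico]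
    intro i hi
    simp only [Finset.mem_Ico] at hi
    simp [Nat.not_lt.mpr hi.1, hi.2]
  have h3 : ∑ i ∈ Finset.Ico t d, (if i < s then a else if i < t then b else c) = (d - t) • c := by
    rw [Finset.sum_congr rfl (g := fun _ => c) ?_, Finset.sum_const, Nat.card_Ico]
    intro i hi
    simp only [Finset.mem_Ico] at hi
    simp [Nat.not_lt.mpr hi.1, Nat.not_lt.mpr (hst.trans hi.1)]
  rw [h1, h2, h3]

/-- If `z` is a positive integer suitable for `k ≥ 2`, then `D₂(k) ≤ z`. -/
theorem stmt_3 (k : ℝ) (hk : 2 ≤ k) (z : ℕ) (hz : 0 < z) (h : Suitable k z) :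
    D2 k ≤ z := by
  have hfl : (2:ℤ) ≤ ⌊k⌋ := Int.le_floor.mpr (by exact_mod_cast hk)
  have hK3 : 3 ≤ ⌊k⌋.toNat + 1 := by omega
  rcases h with h1 | ⟨d, s, hKd, h2d, hsd, hlow, hhigh, hS4⟩
  · -- Case z ≥ K²
    have hkK : k < ((⌊k⌋.toNat + 1 : ℕ) : ℝ) := by
      have h0 : ((⌊k⌋.toNat : ℕ) : ℝ) = ((⌊k⌋ : ℤ) : ℝ) := by
        exact_mod_cast Int.toNat_of_nonneg (show (0:ℤ) ≤ ⌊k⌋ by omega)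
      push_cast
      rw [h0]
      exact Int.lt_floor_add_one k
    apply Nat.sInf_le
    simp only [Set.mem_setOf_eq]
    generalize hKg : ⌊k⌋.toNat + 1 = K at h1 hkK hK3 ⊢
    have ep : K ^ 2 = K * K := sq K
    have e : K * (K - 1) = K * K - K := by
      rw [← Nat.pred_eq_sub_one, Nat.mul_pred]
    have hKle : K ≤ K * K := Nat.le_mul_of_pos_left K (by omega)
    have hKKz : K * (K - 1) + K ≤ z := by omega
    refine ⟨K, le_refl K,
      fun i => if i.val < K - 1 then K else if i.val < K - 1 then K else z - K * (K - 1),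
      ?_, ?_, ?_⟩
    · intro i
      dsimp only
      split_ifs <;> omega
    · rw [Fin.sum_univ_eq_sum_range
        (fun j => if j < K - 1 then K else if j < K - 1 then K else z - K * (K - 1)) K,
        sum_piece (K-1) (K-1) K (le_refl _) (by omega)]
      simp only [smul_eq_mul, Nat.sub_self, zero_mul, add_zero, mul_zero]
      rw [show K - (K-1) = 1 from by omega, one_mul]
      have hmc : (K-1) * K = K * (K-1) := Nat.mul_comm _ _
      omega
    · have hF : Finset.univ.filter
          (fun i : Fin K =>
            (if i.val < K - 1 then K else if i.val < K - 1 then K else z - K * (K - 1)) < K)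
          = ∅ := by
        rw [Finset.filter_eq_empty_iff]
        intro i _
        split_ifs <;> omega
      unfold aadStar
      simp only [hF, Finset.card_empty, Finset.sum_empty, Nat.cast_zero, add_zero]
      rw [div_one]
      exact hkK
  · -- Case with parameters d, s
    apply Nat.sInf_le
    simp only [Set.mem_setOf_eq]
    generalize hKg : ⌊k⌋.toNat + 1 = K at hKd hlow hhigh hS4 hK3 ⊢
    set m := d - s with hm
    set N := z - K * s with hN
    set q := N / m with hq
    set r := N % m with hr
    set d0 := m - r with hd0
    have hm0 : 0 < m := by omega
    have hKsz : K * s + 2 * m ≤ z := hlow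
    have hNge : 2 * m ≤ N := by omega
    have hNle : N ≤ (K - 1) * m := by
      have : z - K * s ≤ (K - 1) * m := by omega
      exact this
    have hdm : m * q + r = N := Nat.div_add_mod N m
    have hrm : r < m := Nat.mod_lt _ hm0
    have hq2 : 2 ≤ q := (Nat.le_div_iff_mul_le hm0).mpr hNge
    have hqK : q < K := by
      have h' : q ≤ K - 1 := by
        have := Nat.div_le_div_right (c := m) hNle
        rwa [Nat.mul_div_cancel _ hm0] at this
      omega
    have hq1K : r ≠ 0 → q + 1 < K := by
      intro hr0
      by_contra hcon
      have hqe : q = K - 1 := by omega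
      rw [hqe, Nat.mul_comm] at hdm
      omega
    refine ⟨d, hKd, fun i => if i.val < s then K else if i.val < s + d0 then q else q + 1,
      ?_, ?_, ?_⟩
    · intro i
      dsimp only
      split_ifs <;> omega
    · rw [Fin.sum_univ_eq_sum_range
        (fun j => if j < s then K else if j < s + d0 then q else q + 1) d,
        sum_piece s (s + d0) d (Nat.le_add_right _ _) (by omega)]
      simp only [smul_eq_mul, Nat.add_sub_cancel_left]
      have e1 : d0 * q = m * q - r * q := by rw [hd0, Nat.sub_mul]
      have e2 : r * q ≤ m * q := Nat.mul_le_mul_right q hrm.le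
      have e3 : d - (s + d0) = r := by omega
      rw [e3]
      have e4 : r * (q + 1) = r * q + r := by ring
      have e5 : s * K = K * s := Nat.mul_comm _ _
      omega
    · have hcard : (Finset.univ.filter
          (fun i : Fin d =>
            (if i.val < s then K else if i.val < s + d0 then q else q + 1) < K)).card
          = d0 + r := by
        rw [Finset.card_filter]
        rw [Fin.sum_univ_eq_sum_range
          (fun j => if (if j < s then K else if j < s + d0 then q else q + 1) < K then 1 else 0) d]
        have hcongr : ∀ j ∈ Finset.range d,
            (if (if j < s then K else if j < s + d0 then q else q + 1) < K then (1:ℕ) else 0)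
            = (if j < s then 0 else if j < s + d0 then 1 else 1) := by
          intro j hj
          simp only [Finset.mem_range] at hj
          by_cases hjs : j < s
          · simp [hjs]
          · by_cases hjt : j < s + d0
            · simp [hjs, hjt, hqK]
            · have hr0 : r ≠ 0 := by omega
              simp [hjs, hjt, hq1K hr0]
        rw [Finset.sum_congr rfl hcongr, sum_piece s (s + d0) d (Nat.le_add_right _ _) (by omega)]
        simp only [smul_eq_mul, Nat.add_sub_cancel_left, mul_zero, mul_one]
        omega
      have hsum : ∑ i ∈ Finset.univ.filter
          (fun i : Fin d => (if i.val < s then K else if i.val < s + d0 then q else q + 1) < K),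
          (1:ℝ) / ((if i.val < s then K else if i.val < s + d0 then q else q + 1 : ℕ) : ℝ)
          = (d0 : ℝ) / (q : ℝ) + (r : ℝ) / ((q : ℝ) + 1) := by
        rw [Finset.sum_filter]
        rw [Fin.sum_univ_eq_sum_range
          (fun j => if (if j < s then K else if j < s + d0 then q else q + 1) < K then
            (1:ℝ) / ((if j < s then K else if j < s + d0 then q else q + 1 : ℕ) : ℝ) else 0) d]
        have hcongr : ∀ j ∈ Finset.range d,
            (if (if j < s then K else if j < s + d0 then q else q + 1) < K then
              (1:ℝ) / ((if j < s then K else if j < s + d0 then q else q + 1 : ℕ) : ℝ) else 0)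
            = (if j < s then (0:ℝ) else if j < s + d0 then 1 / (q:ℝ) else 1 / ((q:ℝ)+1)) := by
          intro j hj
          simp only [Finset.mem_range] at hj
          by_cases hjs : j < s
          · simp [hjs]
          · by_cases hjt : j < s + d0
            · simp [hjs, hjt, hqK]
            · have hr0 : r ≠ 0 := by omega
              have := hq1K hr0
              simp [hjs, hjt, this]
        rw [Finset.sum_congr rfl hcongr, sum_piece s (s + d0) d (Nat.le_add_right _ _) (by omega)]
        have e3 : d - (s + d0) = r := by omega
        rw [e3]
        simp only [nsmul_eq_mul, Nat.add_sub_cancel_left, mul_zero, zero_add]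
        rw [mul_one_div, mul_one_div]
      unfold aadStar
      rw [hcard, hsum]
      refine lt_of_lt_of_eq hS4 ?_
      push_cast
      ring
end

section
/- For every real number k ≥ 2, D₂(k) equals the minimum positive integer z which is suitable for k. -/
open Classical

lemma range_sum_split {M : Type*} [AddCommMonoid M] (d s d₁ : ℕ) (h1 : s + d₁ ≤ d)
    (g : ℕ → M) (A B C : M)
    (hA : ∀ i < s, g i = A) (hB : ∀ i, s ≤ i → i < s + d₁ → g i = B)
    (hC : ∀ i, s + d₁ ≤ i → i < d → g i = C) :
    ∑ i ∈ Finset.range d, g i = s • A + d₁ • B + (d - (s + d₁)) • C := by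
  rw [Finset.range_eq_Ico,
    ← Finset.sum_Ico_consecutive g (Nat.zero_le (s + d₁)) h1,
    ← Finset.sum_Ico_consecutive g (Nat.zero_le s) (Nat.le_add_right s d₁)]
  have e1 : ∑ i ∈ Finset.Ico 0 s, g i = ∑ _i ∈ Finset.Ico 0 s, A :=
    Finset.sum_congr rfl (fun i hi => hA i (Finset.mem_Ico.mp hi).2)
  have e2 : ∑ i ∈ Finset.Ico s (s + d₁), g i = ∑ _i ∈ Finset.Ico s (s + d₁), B :=
    Finset.sum_congr rfl (fun i hi => hB i (Finset.mem_Ico.mp hi).1 (Finset.mem_Ico.mp hi).2)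
  have e3 : ∑ i ∈ Finset.Ico (s + d₁) d, g i = ∑ _i ∈ Finset.Ico (s + d₁) d, C :=
    Finset.sum_congr rfl (fun i hi => hC i (Finset.mem_Ico.mp hi).1 (Finset.mem_Ico.mp hi).2)
  rw [e1, e2, e3, Finset.sum_const, Finset.sum_const, Finset.sum_const,
    Nat.card_Ico, Nat.card_Ico, Nat.card_Ico, Nat.sub_zero, Nat.add_sub_cancel_left]

lemma recip_secant (n q : ℕ) (hn : 1 ≤ n) (hq : 1 ≤ q) :
    1 / (q : ℝ) - ((n : ℝ) - q) / ((q : ℝ) * ((q : ℝ) + 1)) ≤ 1 / (n : ℝ) := by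
  have hn0 : (0:ℝ) < n := by exact_mod_cast hn
  have hq0 : (0:ℝ) < q := by exact_mod_cast hq
  have key : 0 ≤ ((n:ℝ) - q) * ((n:ℝ) - q - 1) := by
    rcases le_or_gt n q with h | h
    · have h1 : (n:ℝ) ≤ q := by exact_mod_cast h
      nlinarith
    · have h1 : (q:ℝ) + 1 ≤ n := by exact_mod_cast h
      nlinarith
  have hid : 1/(n:ℝ) - (1/(q:ℝ) - ((n:ℝ) - q)/((q:ℝ)*((q:ℝ)+1)))
      = ((n:ℝ) - q) * ((n:ℝ) - q - 1) / ((n:ℝ)*(q:ℝ)*((q:ℝ)+1)) := by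
    field_simp
    ring
  have := div_nonneg key (by positivity : (0:ℝ) ≤ (n:ℝ)*(q:ℝ)*((q:ℝ)+1))
  linarith

lemma balanced_recip_le {ι : Type*} (S : Finset ι) (x : ι → ℕ)
    (hx : ∀ i ∈ S, 2 ≤ x i) (hS : S.Nonempty) :
    ((S.card - (∑ i ∈ S, x i) % S.card : ℕ) : ℝ) / (((∑ i ∈ S, x i) / S.card : ℕ) : ℝ)
      + (((∑ i ∈ S, x i) % S.card : ℕ) : ℝ) / ((((∑ i ∈ S, x i) / S.card : ℕ) : ℝ) + 1)
      ≤ ∑ i ∈ S, (1:ℝ) / (x i : ℝ) := by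
  set m := S.card with hm
  set T := ∑ i ∈ S, x i with hT
  set q := T / m with hq
  set r := T % m with hr
  have hm0 : 0 < m := Finset.card_pos.mpr hS
  have hT2m : 2 * m ≤ T := by
    calc 2 * m = ∑ _i ∈ S, 2 := by rw [Finset.sum_const, smul_eq_mul, mul_comm, hm]
    _ ≤ T := Finset.sum_le_sum hx
  have hq2 : 2 ≤ q := (Nat.le_div_iff_mul_le hm0).mpr hT2m
  have hrm : r < m := Nat.mod_lt _ hm0
  have hdm : m * q + r = T := Nat.div_add_mod T m
  have hq0 : (0:ℝ) < q := by exact_mod_cast Nat.lt_of_lt_of_le (by norm_num) hq2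
  have step1 : ∀ i ∈ S, 1/(q:ℝ) - ((x i : ℝ) - q)/((q:ℝ)*((q:ℝ)+1)) ≤ 1/(x i : ℝ) := by
    intro i hi
    exact recip_secant (x i) q (le_trans (by norm_num) (hx i hi)) (le_trans (by norm_num) hq2)
  have hsum : ∑ i ∈ S, (1/(q:ℝ) - ((x i : ℝ) - q)/((q:ℝ)*((q:ℝ)+1))) ≤ ∑ i ∈ S, (1:ℝ)/(x i:ℝ) :=
    Finset.sum_le_sum step1
  have h2 : ∑ i ∈ S, ((x i:ℝ) - (q:ℝ)) = (T:ℝ) - (m:ℝ)*(q:ℝ) := by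
    rw [Finset.sum_sub_distrib, Finset.sum_const, ← hm, hT]
    push_cast
    ring
  have hcompute : ∑ i ∈ S, (1/(q:ℝ) - ((x i : ℝ) - q)/((q:ℝ)*((q:ℝ)+1)))
      = (m:ℝ)/q - ((T:ℝ) - (m:ℝ)*q)/((q:ℝ)*((q:ℝ)+1)) := by
    rw [Finset.sum_sub_distrib, Finset.sum_const, ← Finset.sum_div, h2, ← hm,
      nsmul_eq_mul]
    ring
  have hTr : (T:ℝ) - (m:ℝ)*q = (r:ℝ) := by
    rw [← hdm]
    push_cast
    ring
  have hmr : ((m - r : ℕ) : ℝ) = (m:ℝ) - r := by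
    rw [Nat.cast_sub hrm.le]
  rw [hmr]
  rw [hcompute, hTr] at hsum
  have hkey : ((m:ℝ) - r)/q + (r:ℝ)/((q:ℝ)+1) = (m:ℝ)/q - (r:ℝ)/((q:ℝ)*((q:ℝ)+1)) := by
    field_simp
    ring
  linarith [hkey ▸ hsum]

lemma floor_lt (k : ℝ) (hk : 2 ≤ k) :
    3 ≤ ⌊k⌋.toNat + 1 ∧ k < ((⌊k⌋.toNat + 1 : ℕ) : ℝ) := by
  have h2 : (2:ℤ) ≤ ⌊k⌋ := Int.le_floor.mpr (by exact_mod_cast hk)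
  refine ⟨by omega, ?_⟩
  have h3 : ((⌊k⌋.toNat : ℤ) : ℝ) = ((⌊k⌋ : ℤ) : ℝ) := by
    rw [Int.toNat_of_nonneg (by omega)]
  push_cast at h3 ⊢
  calc k < ⌊k⌋ + 1 := Int.lt_floor_add_one k
  _ = (⌊k⌋.toNat : ℝ) + 1 := by rw [h3]

lemma key1 (k : ℝ) (hk : 2 ≤ k) (z : ℕ) (hz : 0 < z) (hsu : Suitable k z) :
    ∃ d : ℕ, ⌊k⌋.toNat + 1 ≤ d ∧ ∃ x : Fin d → ℕ,
      (∀ i, 2 ≤ x i) ∧ (∑ i, x i) = z ∧ k < aadStar (⌊k⌋.toNat + 1) x := by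
  obtain ⟨hK3, hkK⟩ := floor_lt k hk
  set K := ⌊k⌋.toNat + 1 with hKdef
  rcases hsu with hz2 | ⟨d, s, hdK, h2d, hsd, hlo, hhi, hlt⟩
  · -- z ≥ K² : take d = K, one big entry z - (K-1)*K, rest K
    rw [← hKdef] at hz2
    have hKK : K * K ≤ z := by rw [← pow_two]; exact hz2
    have hKle : K ≤ K * K := Nat.le_mul_of_pos_left K (by omega)
    have hsub : (K - 1) * K = K * K - K := by rw [Nat.sub_one_mul]
    set A := z - (K - 1) * K with hA
    have hAK : K ≤ A := by omega
    refine ⟨K, le_refl K, fun i => if (i : ℕ) < 1 then A else K, ?_, ?_, ?_⟩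
    · intro i
      show 2 ≤ if (i : ℕ) < 1 then A else K
      split_ifs <;> omega
    · rw [Fin.sum_univ_eq_sum_range (fun i => if i < 1 then A else K) K,
        range_sum_split K 1 0 (by omega) _ A A K
          (fun i hi => by rw [if_pos hi])
          (fun i h1 h2 => by omega)
          (fun i h1 h2 => by rw [if_neg (by omega)])]
      simp only [smul_eq_mul, one_mul, zero_mul, add_zero, zero_add]
      omega
    · have hemp : Finset.univ.filter (fun i : Fin K => (if (i : ℕ) < 1 then A else K) < K) = ∅ := by
        rw [Finset.filter_eq_empty_iff]
        intro i _
        split_ifs <;> omega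
      rw [aadStar, hemp]
      simpa using hkK
  · -- canonical configuration
    rw [← hKdef] at hdK hlo hhi hlt
    set m := d - s with hm
    have hm0 : 0 < m := by omega
    have hKs : K * s ≤ z := by omega
    set R := z - K * s with hR
    have hR2m : 2 * m ≤ R := by omega
    set q := R / m with hq
    set d₁ := R % m with hd₁def
    have hq2 : 2 ≤ q := (Nat.le_div_iff_mul_le hm0).mpr hR2m
    have hd₁m : d₁ < m := Nat.mod_lt _ hm0
    have hdm : m * q + d₁ = R := Nat.div_add_mod R m
    have hRhi : R ≤ (K - 1) * m := by omega
    have hqK1 : q ≤ K - 1 := by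
      have h1 : q * m ≤ R := Nat.div_mul_le_self R m
      exact Nat.le_of_mul_le_mul_right (h1.trans hRhi) hm0
    have hqK : q < K := by omega
    have hq1K : d₁ ≠ 0 → q + 1 < K := by
      intro hne
      rcases Nat.lt_or_ge (q + 1) K with h | h
      · exact h
      · exfalso
        have hqe : q = K - 1 := by omega
        have hme : m * q = (K - 1) * m := by rw [hqe]; exact mul_comm m (K-1)
        omega
    have hsd₁ : s + d₁ ≤ d := by omega
    have hcast : ((⌊k⌋.toNat : ℤ) + 1) * (s:ℤ) - (K:ℤ) * (s:ℤ) = 0 := by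
      rw [hKdef]; push_cast; ring
    have hRz : (R : ℤ) = (z : ℤ) - (K : ℤ) * (s : ℤ) := by
      have h : K * s + R = z := by omega
      zify at h
      linarith
    refine ⟨d, hdK, fun i => (fun j => if j < s then K else if j < s + d₁ then q + 1 else q) (i : ℕ), ?_, ?_, ?_⟩
    · intro i
      show 2 ≤ if (i:ℕ) < s then K else if (i:ℕ) < s + d₁ then q + 1 else q
      split_ifs <;> omega
    · rw [Fin.sum_univ_eq_sum_range (fun j => if j < s then K else if j < s + d₁ then q + 1 else q) d,
        range_sum_split d s d₁ hsd₁ _ K (q+1) q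
          (fun i hi => by rw [if_pos hi])
          (fun i h1 h2 => by simp only [if_neg (show ¬ i < s by omega), if_pos h2])
          (fun i h1 h2 => by
            simp only [if_neg (show ¬ i < s by omega), if_neg (show ¬ i < s + d₁ by omega)])]
      simp only [smul_eq_mul]
      have hds : d - (s + d₁) = m - d₁ := by omega
      rw [hds]
      have hdm' : (m:ℤ) * q + d₁ = (z:ℤ) - K * s := by
        have h := hdm
        zify at h
        linarith [hRz]
      zify [hd₁m.le]
      linear_combination hdm'
    · have hcard : (Finset.univ.filter
          (fun i : Fin d => (fun j => if j < s then K else if j < s + d₁ then q + 1 else q) (i : ℕ) < K)).card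
          = d - s := by
        rw [Finset.card_filter]
        rw [Fin.sum_univ_eq_sum_range
          (fun j => if (if j < s then K else if j < s + d₁ then q + 1 else q) < K then 1 else 0) d,
          range_sum_split d s d₁ hsd₁ _ 0 1 1
            (fun i hi => by simp only [if_pos hi]; rw [if_neg (lt_irrefl K)])
            (fun i h1 h2 => by
              simp only [if_neg (show ¬ i < s by omega), if_pos h2]
              rw [if_pos (hq1K (by omega))])
            (fun i h1 h2 => by
              simp only [if_neg (show ¬ i < s by omega), if_neg (show ¬ i < s + d₁ by omega)]
              rw [if_pos hqK])]
        simp only [smul_eq_mul]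
        omega
      have hrecip : ∑ i ∈ Finset.univ.filter
          (fun i : Fin d => (fun j => if j < s then K else if j < s + d₁ then q + 1 else q) (i : ℕ) < K),
          (1:ℝ) / (((fun j => if j < s then K else if j < s + d₁ then q + 1 else q) (i : ℕ) : ℕ) : ℝ)
          = (d₁ : ℝ) * (1 / ((q:ℝ) + 1)) + ((m - d₁ : ℕ) : ℝ) * (1 / (q:ℝ)) := by
        rw [Finset.sum_filter]
        rw [Fin.sum_univ_eq_sum_range
          (fun j => if (if j < s then K else if j < s + d₁ then q + 1 else q) < K
            then (1:ℝ) / (((if j < s then K else if j < s + d₁ then q + 1 else q) : ℕ) : ℝ) else 0) d,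
          range_sum_split d s d₁ hsd₁ _ 0 ((1:ℝ)/((q:ℝ)+1)) ((1:ℝ)/(q:ℝ))
            (fun i hi => by simp only [if_pos hi]; rw [if_neg (lt_irrefl K)])
            (fun i h1 h2 => by
              simp only [if_neg (show ¬ i < s by omega), if_pos h2]
              rw [if_pos (hq1K (by omega))]
              push_cast
              ring)
            (fun i h1 h2 => by
              simp only [if_neg (show ¬ i < s by omega), if_neg (show ¬ i < s + d₁ by omega)]
              rw [if_pos hqK])]
        have hds : d - (s + d₁) = m - d₁ := by omega
        rw [hds]
        simp only [nsmul_eq_mul, smul_eq_mul]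
        ring
      rw [aadStar, hcard, hrecip]
      have hnum : ((d - s : ℕ) : ℝ) = ((m - d₁ : ℕ) : ℝ) + (d₁ : ℝ) := by
        rw [← Nat.cast_add]
        congr 1
        omega
      have heq : ((d : ℝ) + ((d - s : ℕ) : ℝ)) /
            (1 + ((d₁:ℝ) * (1/((q:ℝ)+1)) + ((m - d₁ : ℕ):ℝ) * (1/(q:ℝ))))
          = ((d : ℝ) + ((m - d₁ : ℕ) : ℝ) + (d₁ : ℝ)) /
            (1 + ((m - d₁ : ℕ) : ℝ) / (q:ℝ) + (d₁ : ℝ) / ((q:ℝ) + 1)) := by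
        rw [hnum]
        congr 1 <;> ring
      rw [heq]
      exact hlt

lemma key2 (k : ℝ) (hk : 2 ≤ k) (z : ℕ)
    (h : ∃ d : ℕ, ⌊k⌋.toNat + 1 ≤ d ∧ ∃ x : Fin d → ℕ,
      (∀ i, 2 ≤ x i) ∧ (∑ i, x i) = z ∧ k < aadStar (⌊k⌋.toNat + 1) x) :
    ∃ z' : ℕ, z' ≤ z ∧ 0 < z' ∧ Suitable k z' := by
  obtain ⟨d, hdK, x, hx2, hxsum, hxk⟩ := h
  obtain ⟨K, hKdef⟩ : ∃ K, K = ⌊k⌋.toNat + 1 := ⟨_, rfl⟩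
  rw [← hKdef] at hdK hxk
  have hK3 : 3 ≤ K := by
    have h2 : (2:ℤ) ≤ ⌊k⌋ := Int.le_floor.mpr (by exact_mod_cast hk)
    omega
  obtain ⟨S, hSdef⟩ : ∃ S', S' = Finset.univ.filter (fun i : Fin d => x i < K) := ⟨_, rfl⟩
  rw [aadStar, ← hSdef] at hxk
  obtain ⟨m, hm⟩ : ∃ m, m = S.card := ⟨_, rfl⟩
  rw [← hm] at hxk
  have hmem : ∀ i, i ∈ S ↔ x i < K := by
    intro i
    rw [hSdef, Finset.mem_filter]
    simp
  have hmd : m ≤ d := by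
    rw [hm, hSdef]
    calc (Finset.univ.filter (fun i : Fin d => x i < K)).card
        ≤ (Finset.univ : Finset (Fin d)).card := Finset.card_filter_le _ _
    _ = d := by rw [Finset.card_univ, Fintype.card_fin]
  rcases Nat.eq_zero_or_pos m with hm0 | hm0
  · -- no small entries : z ≥ K²
    have hemp : S = ∅ := Finset.card_eq_zero.mp (by omega)
    have hbig : ∀ i, K ≤ x i := by
      intro i
      by_contra hc
      have : i ∈ S := (hmem i).mpr (by omega)
      rw [hemp] at this
      exact absurd this (Finset.notMem_empty i)
    have hzK : K * K ≤ z := by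
      calc K * K ≤ d * K := Nat.mul_le_mul_right K hdK
      _ = ∑ _i : Fin d, K := by
          rw [Finset.sum_const, Finset.card_univ, Fintype.card_fin, smul_eq_mul]
      _ ≤ ∑ i, x i := Finset.sum_le_sum (fun i _ => hbig i)
      _ = z := hxsum
    have hKKpos : 0 < K * K := Nat.mul_pos (by omega) (by omega)
    refine ⟨z, le_refl z, by omega, Or.inl ?_⟩
    rw [← hKdef, pow_two]
    exact hzK
  · -- at least one small entry
    have hSne : S.Nonempty := Finset.card_pos.mp (by omega)
    obtain ⟨T, hT⟩ : ∃ T, T = ∑ i ∈ S, x i := ⟨_, rfl⟩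
    obtain ⟨s, hs⟩ : ∃ s, s = d - m := ⟨_, rfl⟩
    have hds : d - s = m := by omega
    have hT2m : 2 * m ≤ T := by
      rw [hT, hm]
      calc 2 * S.card = ∑ _i ∈ S, 2 := by rw [Finset.sum_const, smul_eq_mul, mul_comm]
      _ ≤ _ := Finset.sum_le_sum (fun i _ => hx2 i)
    have hTK1m : T ≤ (K - 1) * m := by
      rw [hT, hm]
      calc ∑ i ∈ S, x i ≤ ∑ _i ∈ S, (K - 1) := by
            refine Finset.sum_le_sum (fun i hi => ?_)
            have := (hmem i).mp hi
            omega
      _ = (K - 1) * S.card := by rw [Finset.sum_const, smul_eq_mul, mul_comm]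
    have hKsT : K * s + T ≤ z := by
      have hsplit : T + ∑ i ∈ Finset.univ.filter (fun i : Fin d => ¬ x i < K), x i = z := by
        rw [hT, hSdef, ← hxsum]
        exact Finset.sum_filter_add_sum_filter_not _ _ _
      have hcardc : (Finset.univ.filter (fun i : Fin d => ¬ x i < K)).card = d - m := by
        have h2 := Finset.card_filter_add_card_filter_not
          (s := (Finset.univ : Finset (Fin d))) (p := fun i : Fin d => x i < K)
        rw [Finset.card_univ, Fintype.card_fin, ← hSdef, ← hm] at h2
        omega
      have hbigsum : K * s ≤ ∑ i ∈ Finset.univ.filter (fun i : Fin d => ¬ x i < K), x i := by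
        calc K * s = ∑ _i ∈ Finset.univ.filter (fun i : Fin d => ¬ x i < K), K := by
              rw [Finset.sum_const, hcardc, smul_eq_mul, mul_comm, hs]
        _ ≤ _ := Finset.sum_le_sum (fun i hi => by
              rw [Finset.mem_filter] at hi
              exact Nat.le_of_not_lt hi.2)
      omega
    have h2sKs : 2 * s ≤ K * s := Nat.mul_le_mul_right s (by omega)
    refine ⟨K * s + T, hKsT, by omega, Or.inr ⟨d, s, ?_, ?_, ?_, ?_, ?_, ?_⟩⟩
    · rw [← hKdef]; exact hdK
    · omega
    · omega
    · rw [← hKdef, hds]; omega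
    · rw [← hKdef, hds]; omega
    · rw [← hKdef, hds, Nat.add_sub_cancel_left]
      have hbal := balanced_recip_le S x (fun i _ => hx2 i) hSne
      rw [← hm, ← hT] at hbal
      have hq2 : 2 ≤ T / m := (Nat.le_div_iff_mul_le hm0).mpr hT2m
      have hrm : T % m < m := Nat.mod_lt _ hm0
      have hnum : ((m - T % m : ℕ) : ℝ) + ((T % m : ℕ) : ℝ) = (m : ℝ) := by
        rw [← Nat.cast_add]
        congr 1
        omega
      have hqpos : (0:ℝ) < ((T / m : ℕ) : ℝ) := by
        have h0 : (0:ℕ) < T / m := by omega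
        exact_mod_cast h0
      have hdenpos : (0:ℝ) < 1 + ((m - T % m : ℕ) : ℝ) / ((T / m : ℕ) : ℝ)
          + ((T % m : ℕ) : ℝ) / (((T / m : ℕ) : ℝ) + 1) := by positivity
      have hstep : ((d:ℝ) + (m:ℝ)) / (1 + ∑ i ∈ S, (1:ℝ) / (x i : ℝ))
          ≤ ((d:ℝ) + (m:ℝ)) / (1 + ((m - T % m : ℕ) : ℝ) / ((T / m : ℕ) : ℝ)
              + ((T % m : ℕ) : ℝ) / (((T / m : ℕ) : ℝ) + 1)) := by
        apply div_le_div_of_nonneg_left (by positivity) hdenpos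
        linarith
      calc k < ((d:ℝ) + (m:ℝ)) / (1 + ∑ i ∈ S, (1:ℝ) / (x i : ℝ)) := hxk
      _ ≤ _ := hstep
      _ = ((d:ℝ) + ((m - T % m : ℕ) : ℝ) + ((T % m : ℕ) : ℝ)) /
            (1 + ((m - T % m : ℕ) : ℝ) / ((T / m : ℕ) : ℝ)
              + ((T % m : ℕ) : ℝ) / (((T / m : ℕ) : ℝ) + 1)) := by
        rw [← hnum]; ring_nf

/-- For every real `k ≥ 2`, `D₂(k)` equals the minimum positive integer suitable for `k`. -/
theorem stmt_4 (k : ℝ) (hk : 2 ≤ k) :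
    D2 k = sInf {z : ℕ | 0 < z ∧ Suitable k z} := by
  have hBne : {z : ℕ | 0 < z ∧ Suitable k z}.Nonempty := by
    refine ⟨(⌊k⌋.toNat + 1) ^ 2, ?_, Or.inl (le_refl _)⟩
    positivity
  have hAmem := key1 k hk _ (Nat.sInf_mem hBne).1 (Nat.sInf_mem hBne).2
  have hAne : {z : ℕ | ∃ d : ℕ, ⌊k⌋.toNat + 1 ≤ d ∧ ∃ x : Fin d → ℕ,
      (∀ i, 2 ≤ x i) ∧ (∑ i, x i) = z ∧ k < aadStar (⌊k⌋.toNat + 1) x}.Nonempty := ⟨_, hAmem⟩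
  rw [D2]
  apply le_antisymm
  · exact Nat.sInf_le hAmem
  · obtain ⟨z', hz'le, hz'pos, hz'suit⟩ := key2 k hk _ (Nat.sInf_mem hAne)
    exact le_trans (Nat.sInf_le ⟨hz'pos, hz'suit⟩) hz'le
end

section
/- Let H be a graph, z ∈ V(H) with deg_H(z) ≥ 2, and suppose H − z has no tree components. Let m₁ be the number of edges of H inside Γ_H(z), m₂ the number of edges of H between Γ_H(z) and Γ²_H(z), and r the number of tree components of H − z − Γ_H(z). Then m₁ + m₂ ≥ r + 2. -/
open SimpleGraph Finset

namespace Aux7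

variable {α : Type*}

lemma end_mem_support_tail {G : SimpleGraph α} {u v : α} (p : G.Walk u v) (h : ¬ p.Nil) :
    v ∈ p.support.tail := by
  cases p with
  | nil => simp at h
  | cons h q => simpa using q.end_mem_support

lemma tail_get_mem_edges_get {G : SimpleGraph α} {u v : α} (p : G.Walk u v) (i : ℕ)
    (hi' : i < p.support.tail.length) (hi'' : i < p.edges.length) :
    p.support.tail[i] ∈ p.edges[i] := by
  induction p generalizing i with
  | nil => simp at hi''
  | cons h q ih =>
    cases i with
    | zero =>
      simp only [SimpleGraph.Walk.support_cons, SimpleGraph.Walk.edges_cons, List.tail_cons,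
        List.getElem_cons_zero]
      have h0 : 0 < q.support.length := by simp [SimpleGraph.Walk.length_support]
      rw [List.getElem_zero]
      simp [SimpleGraph.Walk.head_support]
    | succ n =>
      simp only [SimpleGraph.Walk.support_cons, SimpleGraph.Walk.edges_cons, List.tail_cons,
        List.getElem_cons_succ]
      have h1 : n < q.support.tail.length := by
        simp only [List.length_tail, SimpleGraph.Walk.length_support,
          SimpleGraph.Walk.length_cons] at hi' ⊢
        omega
      have h2 : n < q.edges.length := by simpa using hi''
      have := ih n h1 h2
      rwa [List.getElem_tail] at this

end Aux7

namespace Aux7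

lemma mem_support_of_mem_edges_of_mem {G : SimpleGraph α} {u v : α} {p : G.Walk u v}
    {e : Sym2 α} (he : e ∈ p.edges) {y : α} (hy : y ∈ e) : y ∈ p.support := by
  induction e with
  | _ a b =>
    rcases Sym2.mem_iff.1 hy with rfl | rfl
    · exact SimpleGraph.Walk.fst_mem_support_of_mem_edges p he
    · exact SimpleGraph.Walk.snd_mem_support_of_mem_edges p he

lemma exists_good_fn (G : SimpleGraph α)
    (h : ∀ c : G.ConnectedComponent,
      ∃ w, ∃ p : G.Walk w w, p.IsCycle ∧ G.connectedComponentMk w = c) :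
    ∃ φ : α → Sym2 α, Function.Injective φ ∧ ∀ v, φ v ∈ G.edgeSet ∧ v ∈ φ v := by
  classical
  choose w p hcyc hbase using h
  have hsupp : ∀ (c : G.ConnectedComponent) (x : α), x ∈ (p c).support →
      G.connectedComponentMk x = c := by
    intro c x hx
    have h1 : G.Reachable (w c) x := ((p c).takeUntil x hx).reachable
    rw [← hbase c]
    exact SimpleGraph.ConnectedComponent.sound h1.symm
  set cmp : α → G.ConnectedComponent := G.connectedComponentMk with hcmp
  set Zf : α → Finset α := fun x => ((p (cmp x)).support).toFinset with hZf
  have hZne : ∀ x, (Zf x).Nonempty :=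
    fun x => ⟨w (cmp x), by simp [hZf, SimpleGraph.Walk.start_mem_support]⟩
  have hZcomp : ∀ x, ∀ z ∈ Zf x, G.connectedComponentMk z = cmp x := by
    intro x z hz
    exact hsupp _ _ (by simpa [hZf] using hz)
  have hZreach : ∀ x, ∀ z ∈ Zf x, G.Reachable x z := by
    intro x z hz
    have h1 : G.connectedComponentMk z = G.connectedComponentMk x := hZcomp x z hz
    exact SimpleGraph.ConnectedComponent.exact h1.symm
  have hZadj : ∀ {x y}, G.Adj x y → Zf x = Zf y := by
    intro x y hxy
    have h1 : cmp x = cmp y := SimpleGraph.ConnectedComponent.sound hxy.reachable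
    simp only [hZf]
    rw [h1]
  set d : α → ℕ := fun x => (Zf x).inf' (hZne x) (fun z => G.dist x z) with hd
  have hd_lt : ∀ x, x ∉ Zf x → ∃ u, G.Adj x u ∧ d u < d x := by
    intro x hx
    obtain ⟨z0, hz0, hdz0⟩ := Finset.exists_mem_eq_inf' (hZne x) (fun z => G.dist x z)
    have hxz : x ≠ z0 := fun hh => hx (hh ▸ hz0)
    have hreach := hZreach x z0 hz0
    have hpos : 0 < G.dist x z0 := hreach.pos_dist_of_ne hxz
    obtain ⟨q, hq⟩ := hreach.exists_walk_length_eq_dist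
    obtain ⟨u, hadj, q', rfl⟩ := SimpleGraph.Walk.exists_eq_cons_of_ne hxz q
    refine ⟨u, hadj, ?_⟩
    have h1 : G.dist u z0 ≤ q'.length := SimpleGraph.dist_le q'
    have h2 : d u ≤ G.dist u z0 :=
      Finset.inf'_le _ (by rw [← hZadj hadj]; exact hz0)
    have h3 : q'.length + 1 = G.dist x z0 := by simpa using hq
    have h4 : d x = G.dist x z0 := hdz0
    omega
  -- the cycle-edge assignment
  set L : G.ConnectedComponent → List α := fun c => (p c).support.tail with hL
  have hmemL : ∀ x, x ∈ Zf x → x ∈ L (cmp x) := by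
    intro x hx
    have hx' : x ∈ (p (cmp x)).support := by simpa [hZf] using hx
    rw [SimpleGraph.Walk.support_eq_cons] at hx'
    rcases List.mem_cons.1 hx' with hx0 | hx'
    · have hw : w (cmp x) ∈ L (cmp x) := end_mem_support_tail _ (hcyc (cmp x)).not_nil
      rwa [← hx0] at hw
    · exact hx'
  have hLlen : ∀ c, (L c).length = (p c).edges.length := by
    intro c
    simp [hL, SimpleGraph.Walk.length_support]
  have hidx : ∀ x (hx : x ∈ Zf x),
      List.idxOf x (L (cmp x)) < (p (cmp x)).edges.length := by
    intro x hx
    rw [← hLlen]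
    exact List.idxOf_lt_length_iff.2 (hmemL x hx)
  set φ : α → Sym2 α := fun x =>
    if hx : x ∈ Zf x then (p (cmp x)).edges[List.idxOf x (L (cmp x))]'(hidx x hx)
    else s(x, Classical.choose (hd_lt x hx)) with hφ
  have hφ_pos : ∀ x (hx : x ∈ Zf x),
      φ x = (p (cmp x)).edges[List.idxOf x (L (cmp x))]'(hidx x hx) := by
    intro x hx; simp only [hφ, dif_pos hx]
  have hφ_neg : ∀ x (hx : ¬ x ∈ Zf x),
      φ x = s(x, Classical.choose (hd_lt x hx)) := by
    intro x hx; simp only [hφ, dif_neg hx]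
  have hmem_pos : ∀ x (hx : x ∈ Zf x), φ x ∈ (p (cmp x)).edges := by
    intro x hx; rw [hφ_pos x hx]; exact List.getElem_mem _
  have hxmem_pos : ∀ x (hx : x ∈ Zf x), x ∈ φ x := by
    intro x hx
    rw [hφ_pos x hx]
    have hl : List.idxOf x (L (cmp x)) < (L (cmp x)).length :=
      List.idxOf_lt_length_iff.2 (hmemL x hx)
    have := tail_get_mem_edges_get (p (cmp x)) (List.idxOf x (L (cmp x)))
      (by simpa [hL] using hl) (hidx x hx)
    rwa [show (p (cmp x)).support.tail[List.idxOf x (L (cmp x))]'(by simpa [hL] using hl)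
      = x from List.getElem_idxOf hl] at this
  have hend_pos : ∀ x (hx : x ∈ Zf x), ∀ y ∈ φ x, y ∈ Zf x := by
    intro x hx y hy
    have := mem_support_of_mem_edges_of_mem (hmem_pos x hx) hy
    simpa [hZf] using this
  refine ⟨φ, ?_, ?_⟩
  · -- injectivity
    have key : ∀ x y, x ∈ Zf x → ¬ y ∈ Zf y → φ x ≠ φ y := by
      intro x y hx hy hxy
      have h1 : y ∈ φ y := by
        rw [hφ_neg y hy]; simp
      have h2 : y ∈ Zf x := hend_pos x hx y (hxy ▸ h1)
      have h3 : cmp y = cmp x := hZcomp x y h2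
      apply hy
      rw [show Zf y = Zf x by simp only [hZf]; rw [h3]]
      exact h2
    intro x y hxy
    by_cases hx : x ∈ Zf x <;> by_cases hy : y ∈ Zf y
    · -- both on cycles
      have h2 : x ∈ Zf y := by
        refine hend_pos y hy x ?_
        rw [← hxy]; exact hxmem_pos x hx
      have h3 : cmp x = cmp y := hZcomp y x h2
      rw [hφ_pos x hx, hφ_pos y hy] at hxy
      have hnd : (p (cmp x)).edges.Nodup := (hcyc (cmp x)).edges_nodup
      have hlx : List.idxOf x (L (cmp x)) < (L (cmp x)).length :=
        List.idxOf_lt_length_iff.2 (hmemL x hx)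
      have hly : List.idxOf y (L (cmp y)) < (L (cmp y)).length :=
        List.idxOf_lt_length_iff.2 (hmemL y hy)
      have hEeq : (p (cmp y)).edges = (p (cmp x)).edges := by rw [h3]
      have hLeq : L (cmp y) = L (cmp x) := by rw [h3]
      have hjx : List.idxOf y (L (cmp y)) < (p (cmp x)).edges.length := by
        rw [← hEeq]; exact hidx y hy
      have hxy2 : (p (cmp x)).edges[List.idxOf x (L (cmp x))]'(hidx x hx)
          = (p (cmp x)).edges[List.idxOf y (L (cmp y))]'hjx := by
        rw [hxy]
        exact List.getElem_of_eq hEeq _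
      have hij : List.idxOf x (L (cmp x)) = List.idxOf y (L (cmp y)) :=
        (hnd.getElem_inj_iff).1 hxy2
      have e1 : (L (cmp x))[List.idxOf x (L (cmp x))]'hlx = x := List.getElem_idxOf hlx
      have e2 : (L (cmp y))[List.idxOf y (L (cmp y))]'hly = y := List.getElem_idxOf hly
      rw [← e1, ← e2]
      rw [List.getElem_of_eq hLeq.symm]
      congr 1
    · exact absurd hxy (key x y hx hy)
    · exact absurd hxy.symm (key y x hy hx)
    · -- both off cycles
      rw [hφ_neg x hx, hφ_neg y hy] at hxy
      rcases Sym2.eq_iff.1 hxy with ⟨h1, _⟩ | ⟨h1, h2⟩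
      · exact h1
      · exfalso
        have d1 := (Classical.choose_spec (hd_lt x hx)).2
        have d2 := (Classical.choose_spec (hd_lt y hy)).2
        rw [h2] at d1
        rw [← h1] at d2
        omega
  · intro v
    by_cases hv : v ∈ Zf v
    · exact ⟨(p (cmp v)).edges_subset_edgeSet (hmem_pos v hv), hxmem_pos v hv⟩
    · rw [hφ_neg v hv]
      refine ⟨(Classical.choose_spec (hd_lt v hv)).1, ?_⟩
      simp

end Aux7

lemma comp_induce_connected {G : SimpleGraph α} (c : G.ConnectedComponent) :
    (G.induce c.supp).Connected := by
  classical
  obtain ⟨v, rfl⟩ := c.exists_rep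
  rw [SimpleGraph.connected_iff_exists_forall_reachable]
  refine ⟨⟨v, rfl⟩, ?_⟩
  rintro ⟨u, hu⟩
  have hu' : G.connectedComponentMk u = G.connectedComponentMk v :=
    (SimpleGraph.ConnectedComponent.mem_supp_iff _ _).1 hu
  have hr : G.Reachable v u := SimpleGraph.ConnectedComponent.exact hu'.symm
  obtain ⟨q⟩ := hr
  have hsub : {t | t ∈ q.support} ⊆ (G.connectedComponentMk v).supp := by
    intro t ht
    have : G.Reachable v t := (q.takeUntil t ht).reachable
    simpa [SimpleGraph.ConnectedComponent.mem_supp_iff] using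
      (SimpleGraph.ConnectedComponent.sound this.symm)
  have hconn := q.connected_induce_support
  have h1 := hconn ⟨v, by simp⟩ ⟨u, by simp⟩
  have h2 := h1.map (G.induceHomOfLE hsub).toHom
  convert h2 using 2 <;> rfl

lemma exists_cycle_of_not_tree {G : SimpleGraph α} (c : G.ConnectedComponent)
    (h : ¬ (G.induce c.supp).IsTree) :
    ∃ w0, ∃ q : G.Walk w0 w0, q.IsCycle ∧ G.connectedComponentMk w0 = c := by
  have hconn := comp_induce_connected c
  have hnac : ¬ (G.induce c.supp).IsAcyclic := fun hac => h ⟨hconn, hac⟩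
  rw [SimpleGraph.IsAcyclic] at hnac
  push_neg at hnac
  obtain ⟨v, p, hp⟩ := hnac
  let f := SimpleGraph.Embedding.induce (G := G) c.supp
  refine ⟨f v, p.map f.toHom, ?_, ?_⟩
  · exact (SimpleGraph.Walk.map_isCycle_iff_of_injective (p := p) f.injective).2 hp
  · exact (SimpleGraph.ConnectedComponent.mem_supp_iff _ _).1 v.2



/-- A connected component `c` of `K` is a *tree component* if the subgraph induced
on its vertex set is a tree. -/
def IsTreeComponent {α : Type*} (K : SimpleGraph α) (c : K.ConnectedComponent) : Prop :=
  (K.induce c.supp).IsTree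


open Classical in
/-- Let `H` be a graph, `z` a vertex of degree at least 2, and suppose `H − z` has no
tree components. If `m₁` is the number of edges of `H` inside `Γ(z)`, `m₂` the number
of edges between `Γ(z)` and `Γ²(z)` (vertices at distance exactly 2 from `z`), and
`r` the number of tree components of `H − z − Γ(z)`, then `m₁ + m₂ ≥ r + 2`. -/
theorem stmt_7 {V : Type*} [Fintype V] (H : SimpleGraph V) [DecidableRel H.Adj]
    (z : V) (hz : 2 ≤ H.degree z)
    (hnt : ∀ c : (H.induce {x | x ≠ z}).ConnectedComponent,
      ¬ IsTreeComponent (H.induce {x | x ≠ z}) c) :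
    Nat.card {c : (H.induce {x | x ≠ z ∧ ¬H.Adj z x}).ConnectedComponent //
        IsTreeComponent (H.induce {x | x ≠ z ∧ ¬H.Adj z x}) c} + 2 ≤
      (H.edgeFinset.filter
        (fun e => ∀ x ∈ e, x ∈ H.neighborFinset z)).card +
      (H.edgeFinset.filter
        (fun e => ∃ a b, e = s(a, b) ∧ H.Adj z a ∧
          (b ≠ z ∧ ¬H.Adj z b ∧ ∃ w, H.Adj z w ∧ H.Adj w b))).card := by
  classical
  set G' := H.induce {x | x ≠ z} with hG'
  set K := H.induce {x | x ≠ z ∧ ¬H.Adj z x} with hK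
  obtain ⟨φ, hφinj, hφ⟩ := Aux7.exists_good_fn G'
    (fun c => exists_cycle_of_not_tree c (hnt c))
  set pu : Sym2 {x : V // x ≠ z} → Sym2 V := Sym2.map Subtype.val with hpu
  have hpuinj : Function.Injective pu := Sym2.map.injective Subtype.val_injective
  -- two neighbours of z
  have hcard : 1 < (H.neighborFinset z).card := by
    rw [SimpleGraph.card_neighborFinset_eq_degree]; omega
  obtain ⟨a1, ha1, a2, ha2, hane⟩ := Finset.one_lt_card.1 hcard
  rw [SimpleGraph.mem_neighborFinset] at ha1 ha2
  set s1 : {x : V // x ≠ z} := ⟨a1, ha1.ne'⟩ with hs1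
  set s2 : {x : V // x ≠ z} := ⟨a2, ha2.ne'⟩ with hs2
  -- inclusion of K-vertices into G'-vertices
  set ι : {x : V // x ≠ z ∧ ¬H.Adj z x} → {x : V // x ≠ z} := fun b => ⟨b.1, b.2.1⟩ with hι
  have hιinj : Function.Injective ι := by
    intro a b hab
    exact Subtype.ext (congrArg (fun q : {x : V // x ≠ z} => (q : V)) hab)
  -- adjacency transfer
  have hG'adj : ∀ {a b : {x : V // x ≠ z}}, G'.Adj a b ↔ H.Adj ↑a ↑b := by
    intro a b; rw [hG']; exact Iff.rfl
  have hKadj : ∀ {a b : {x : V // x ≠ z ∧ ¬H.Adj z x}}, K.Adj a b ↔ H.Adj ↑a ↑b := by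
    intro a b; rw [hK]; exact Iff.rfl
  -- the tree-component extraction
  have htree : ∀ c : K.ConnectedComponent, IsTreeComponent K c →
      ∃ t, t ∈ c.supp ∧ ∃ u : {x : V // x ≠ z},
        φ (ι t) = s(ι t, u) ∧ H.Adj z ↑u := by
    intro c hc
    by_contra hcon
    push_neg at hcon
    -- every t ∈ supp has its φ-edge inside the component
    have step : ∀ t (ht : t ∈ c.supp), ∃ u, φ (ι t) = s(ι t, u) ∧
        ∃ hu : (↑u : V) ≠ z ∧ ¬H.Adj z ↑u, (⟨↑u, hu⟩ : {x : V // x ≠ z ∧ ¬H.Adj z x}) ∈ c.supp := by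
      intro t ht
      obtain ⟨hedge, hmem⟩ := hφ (ι t)
      obtain ⟨u, hu⟩ := Sym2.mem_iff_exists.1 hmem
      have hnadj : ¬H.Adj z ↑u := hcon t ht u hu
      refine ⟨u, hu, ⟨u.2, hnadj⟩, ?_⟩
      have hadj : G'.Adj (ι t) u := by
        rw [← SimpleGraph.mem_edgeSet, ← hu]; exact hedge
      have hadj' : K.Adj t ⟨↑u, u.2, hnadj⟩ := hKadj.2 (hG'adj.1 hadj)
      rw [SimpleGraph.ConnectedComponent.mem_supp_iff] at ht ⊢
      rw [← ht]
      exact SimpleGraph.ConnectedComponent.sound hadj'.symm.reachable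
    choose ufn hueq hup humem using step
    -- an injection from the component's vertices into the edges of the component's tree
    haveI : Fintype ↥c.supp := Fintype.ofFinite _
    haveI : Fintype ↥(K.induce c.supp).edgeSet := Fintype.ofFinite _
    have hinj : ∃ F : ↥c.supp → ↥(K.induce c.supp).edgeSet, Function.Injective F := by
      refine ⟨fun t => ⟨s(t, ⟨⟨↑(ufn t.1 t.2), hup t.1 t.2⟩, humem t.1 t.2⟩), ?_⟩, ?_⟩
      · rw [SimpleGraph.mem_edgeSet]
        have he := (hφ (ι t.1)).1
        rw [hueq t.1 t.2] at he
        have hadj : G'.Adj (ι t.1) (ufn t.1 t.2) := (SimpleGraph.mem_edgeSet G').1 he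
        exact hG'adj.1 hadj
      · intro x y hxy
        have hval : _ = _ := congrArg (fun e : ↥(K.induce c.supp).edgeSet =>
          Sym2.map (fun (v : ↥c.supp) => ι v.1) (e : Sym2 ↥c.supp)) hxy
        simp only [Sym2.map_pair_eq] at hval
        have hx2 : ι (⟨↑(ufn x.1 x.2), hup x.1 x.2⟩ : {x : V // x ≠ z ∧ ¬H.Adj z x})
            = ufn x.1 x.2 := Subtype.ext rfl
        have hy2 : ι (⟨↑(ufn y.1 y.2), hup y.1 y.2⟩ : {x : V // x ≠ z ∧ ¬H.Adj z x})
            = ufn y.1 y.2 := Subtype.ext rfl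
        rw [hx2, hy2] at hval
        have h1 : φ (ι x.1) = φ (ι y.1) := by
          rw [hueq x.1 x.2, hueq y.1 y.2]
          exact hval
        exact Subtype.ext (hιinj (hφinj h1))
    obtain ⟨F, hF⟩ := hinj
    have hcard1 := Fintype.card_le_of_injective F hF
    have hcard2 : (K.induce c.supp).edgeFinset.card + 1 = Fintype.card ↥c.supp :=
      hc.card_edgeFinset
    have hcard3 : Fintype.card ↥(K.induce c.supp).edgeSet
        = (K.induce c.supp).edgeFinset.card := by
      rw [SimpleGraph.edgeFinset, Set.toFinset_card]
    have hpos : 0 < Fintype.card ↥c.supp := by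
      obtain ⟨v, hv⟩ := c.exists_rep
      exact Fintype.card_pos_iff.2 ⟨⟨v, by rw [SimpleGraph.ConnectedComponent.mem_supp_iff]; exact hv⟩⟩
    omega
  -- choose representatives for tree components
  haveI : Finite K.ConnectedComponent := Quot.finite _
  haveI : Fintype {c : K.ConnectedComponent // IsTreeComponent K c} := Fintype.ofFinite _
  have hch : ∀ c : {c : K.ConnectedComponent // IsTreeComponent K c},
      ∃ t, t ∈ (c : K.ConnectedComponent).supp ∧ ∃ u : {x : V // x ≠ z},
        φ (ι t) = s(ι t, u) ∧ H.Adj z ↑u := fun c => htree c.1 c.2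
  choose tf htf uf huf hufadj using hch
  set A : Finset (Sym2 V) :=
    (Finset.univ.image (fun c : {c : K.ConnectedComponent // IsTreeComponent K c} =>
      pu (φ (ι (tf c))))) ∪ {pu (φ s1), pu (φ s2)} with hA
  -- the map into edges is injective
  have hmapinj : Function.Injective
      (fun c : {c : K.ConnectedComponent // IsTreeComponent K c} => pu (φ (ι (tf c)))) := by
    intro c c' hcc
    have h1 : tf c = tf c' := hιinj (hφinj (hpuinj hcc))
    have h2 : (c : K.ConnectedComponent) = (c' : K.ConnectedComponent) := by
      have e1 := (SimpleGraph.ConnectedComponent.mem_supp_iff _ _).1 (htf c)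
      have e2 := (SimpleGraph.ConnectedComponent.mem_supp_iff _ _).1 (htf c')
      rw [← e1, ← e2, h1]
    exact Subtype.ext h2
  have hAcard : Nat.card {c : K.ConnectedComponent // IsTreeComponent K c} + 2 ≤ A.card := by
    rw [hA, Finset.card_union_of_disjoint, Finset.card_image_of_injective _ hmapinj]
    · have hpair : pu (φ s1) ≠ pu (φ s2) := by
        intro hcc
        have : s1 = s2 := hφinj (hpuinj hcc)
        exact hane (congrArg (fun q : {x : V // x ≠ z} => (q : V)) this)
      rw [Finset.card_pair hpair, Finset.card_univ, Nat.card_eq_fintype_card]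
    · rw [Finset.disjoint_left]
      rintro e he1 he2
      simp only [Finset.mem_image, Finset.mem_univ, true_and] at he1
      obtain ⟨c, rfl⟩ := he1
      simp only [Finset.mem_insert, Finset.mem_singleton] at he2
      have hne1 : ¬H.Adj z ↑(ι (tf c)) := (tf c).2.2
      rcases he2 with hcc | hcc
      · rw [show ι (tf c) = s1 from hφinj (hpuinj hcc)] at hne1
        exact hne1 ha1
      · rw [show ι (tf c) = s2 from hφinj (hpuinj hcc)] at hne1
        exact hne1 ha2
  refine le_trans hAcard (le_trans (Finset.card_le_card ?_) (Finset.card_union_le _ _))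
  intro e he
  rw [hA, Finset.mem_union] at he
  rcases he with he | he
  · -- a tree-component edge: goes into the second filter
    simp only [Finset.mem_image, Finset.mem_univ, true_and] at he
    obtain ⟨c, rfl⟩ := he
    have hadj : G'.Adj (ι (tf c)) (uf c) := by
      have h1 := (hφ (ι (tf c))).1
      rw [huf c] at h1
      exact (SimpleGraph.mem_edgeSet G').1 h1
    have hadjH : H.Adj ↑(ι (tf c)) ↑(uf c) := hG'adj.1 hadj
    rw [Finset.mem_union]
    right
    rw [Finset.mem_filter]
    constructor
    · rw [huf c, hpu, Sym2.map_pair_eq, SimpleGraph.mem_edgeFinset]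
      exact hadjH
    · refine ⟨↑(uf c), ↑(ι (tf c)), ?_, hufadj c, (tf c).2.1, (tf c).2.2,
        ↑(uf c), hufadj c, hadjH.symm⟩
      rw [huf c, hpu, Sym2.map_pair_eq, Sym2.eq_swap]
  · -- an edge at s1 or s2
    have main : ∀ s : {x : V // x ≠ z}, H.Adj z ↑s →
        pu (φ s) ∈ (H.edgeFinset.filter
          (fun e => ∀ x ∈ e, x ∈ H.neighborFinset z)) ∪
        (H.edgeFinset.filter
          (fun e => ∃ a b, e = s(a, b) ∧ H.Adj z a ∧
            (b ≠ z ∧ ¬H.Adj z b ∧ ∃ w, H.Adj z w ∧ H.Adj w b))) := by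
      intro s hs
      obtain ⟨u, hu⟩ := Sym2.mem_iff_exists.1 (hφ s).2
      have hadj : G'.Adj s u := by
        have h1 := (hφ s).1
        rw [hu] at h1
        exact (SimpleGraph.mem_edgeSet G').1 h1
      have hadjH : H.Adj ↑s ↑u := hG'adj.1 hadj
      have hmemE : pu (φ s) ∈ H.edgeFinset := by
        rw [hu, hpu, Sym2.map_pair_eq, SimpleGraph.mem_edgeFinset]
        exact hadjH
      rw [Finset.mem_union]
      by_cases hzu : H.Adj z ↑u
      · left
        rw [Finset.mem_filter]
        refine ⟨hmemE, ?_⟩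
        intro x hx
        rw [hu, hpu, Sym2.map_pair_eq] at hx
        rw [SimpleGraph.mem_neighborFinset]
        rcases Sym2.mem_iff.1 hx with rfl | rfl
        · exact hs
        · exact hzu
      · right
        rw [Finset.mem_filter]
        refine ⟨hmemE, ↑s, ↑u, ?_, hs, u.2, hzu, ↑s, hs, hadjH⟩
        rw [hu, hpu, Sym2.map_pair_eq]
    rcases Finset.mem_insert.1 he with rfl | he
    · exact main s1 ha1
    · rw [Finset.mem_singleton] at he
      rw [he]
      exact main s2 ha2
end

section
/- Let G be a connected reduced graph and v ∈ V(G). Then in the standard decomposition of G from v, the set S = (V(H₁) ∪ … ∪ V(H_k)) ∩ Γ²(v) satisfies |S| ≥ 2, where H₁,…,H_k are the non-tree components of G − v − Γ(v). -/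
/-- A graph is a *near-forest* if it is empty or has a vertex `v` such that
deleting `v` and its neighbourhood leaves a forest. -/
def NearForest {α : Type*} (G : SimpleGraph α) : Prop :=
  IsEmpty α ∨ ∃ v : α, (G.induce {x | x ≠ v ∧ ¬G.Adj v x}).IsAcyclic

/-- A graph is *reduced* if every nonempty vertex set spanning a near-forest has at
least two outside neighbours. -/
def Reduced {V : Type*} (G : SimpleGraph V) : Prop :=
  ∀ X : Set V, X.Nonempty → NearForest (G.induce X) →
    2 ≤ {y | y ∉ X ∧ ∃ x ∈ X, G.Adj x y}.ncard


open SimpleGraph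

/-- Lift a walk whose support lies in `s` to the induced subgraph on `s`. -/
lemma liftWalk {V : Type*} {G : SimpleGraph V} (s : Set V) :
    ∀ {a b : V} (p : G.Walk a b), (∀ x ∈ p.support, x ∈ s) → ∀ (ha : a ∈ s) (hb : b ∈ s),
      ∃ q : (G.induce s).Walk ⟨a, ha⟩ ⟨b, hb⟩,
        q.map (SimpleGraph.Embedding.induce s).toHom = p
  | a, _, SimpleGraph.Walk.nil, _, ha, hb => ⟨SimpleGraph.Walk.nil, rfl⟩
  | a, b, SimpleGraph.Walk.cons (v := c) h p, hp, ha, hb => by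
      have hc : c ∈ s := hp c (by simp)
      obtain ⟨q, hq⟩ := liftWalk s p (fun x hx => hp x (by simp [hx])) hc hb
      refine ⟨SimpleGraph.Walk.cons (by exact h) q, ?_⟩
      subst hq; rfl

/-- No cycle can live inside a tree component. -/
lemma noCycleInTree {α : Type*} (K : SimpleGraph α) {a : α} (q : K.Walk a a)
    (hq : q.IsCycle) (ht : IsTreeComponent K (K.connectedComponentMk a)) : False := by
  classical
  set C := K.connectedComponentMk a with hC
  have hsupp : ∀ x ∈ q.support, x ∈ C.supp := by
    intro x hx
    have : K.Reachable a x := (q.takeUntil x hx).reachable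
    simp [SimpleGraph.ConnectedComponent.mem_supp_iff, hC,
      SimpleGraph.ConnectedComponent.eq]
    exact this.symm
  have haC : a ∈ C.supp := hsupp a q.start_mem_support
  obtain ⟨q', hq'⟩ := liftWalk C.supp q hsupp haC haC
  have : q'.IsCycle := by
    have hinj : Function.Injective
        ((SimpleGraph.Embedding.induce (G := K) C.supp).toHom : _ → α) :=
      Subtype.val_injective
    exact (SimpleGraph.Walk.map_isCycle_iff_of_injective hinj).mp (hq' ▸ hq)
  exact ht.IsAcyclic q' this

/-- In the standard decomposition of a connected reduced graph `G` from any vertex `v`,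
the set `S` (vertices at distance exactly 2 from `v` lying in non-tree components of
`G − v − Γ(v)`) has at least two elements. -/
theorem stmt_8 {V : Type*} [Fintype V] (G : SimpleGraph V)
    (hconn : G.Connected) (hred : Reduced G) (v : V) :
    2 ≤ {y : V | ∃ hy : y ≠ v ∧ ¬G.Adj v y,
          (∃ w, G.Adj v w ∧ G.Adj w y) ∧
          ¬ IsTreeComponent (G.induce {x | x ≠ v ∧ ¬G.Adj v x})
              ((G.induce {x | x ≠ v ∧ ¬G.Adj v x}).connectedComponentMk
                ⟨y, hy⟩)}.ncard := by
  classical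
  set Kset : Set V := {x | x ≠ v ∧ ¬G.Adj v x} with hKset
  set K := G.induce Kset with hK
  set U : Set V := {x | ∃ h : x ∈ Kset,
    IsTreeComponent K (K.connectedComponentMk ⟨x, h⟩)} with hU
  set X : Set V := insert v ({y | G.Adj v y} ∪ U) with hX
  have hUK : U ⊆ Kset := fun x hx => hx.1
  have hvX : v ∈ X := Set.mem_insert _ _
  -- near-forest property of G[X]
  have hNF : NearForest (G.induce X) := by
    right
    refine ⟨⟨v, hvX⟩, ?_⟩
    intro z c hc
    -- map the cycle down to G
    set T : Set ↥X := {x | x ≠ ⟨v, hvX⟩ ∧ ¬(G.induce X).Adj ⟨v, hvX⟩ x} with hT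
    have hinj1 : Function.Injective
        ((SimpleGraph.Embedding.induce (G := G.induce X) T).toHom : _ → ↥X) :=
      Subtype.val_injective
    have hinj2 : Function.Injective
        ((SimpleGraph.Embedding.induce (G := G) X).toHom : _ → V) :=
      Subtype.val_injective
    set p := (c.map (SimpleGraph.Embedding.induce (G := G.induce X) T).toHom).map
      (SimpleGraph.Embedding.induce (G := G) X).toHom with hp
    have hpc : p.IsCycle := (hc.map hinj1).map hinj2
    -- support of p lies in U
    have hpU : ∀ x ∈ p.support, x ∈ U := by
      intro x hx
      rw [hp, SimpleGraph.Walk.support_map] at hx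
      obtain ⟨y, hy, rfl⟩ := List.mem_map.mp hx
      rw [SimpleGraph.Walk.support_map] at hy
      obtain ⟨z', hz', rfl⟩ := List.mem_map.mp hy
      have hz'T : (z' : ↥X) ∈ T := z'.2
      have h1 : ((z' : ↥X) : V) ≠ v := by
        intro h
        exact hz'T.1 (Subtype.ext h)
      have h2 : ¬G.Adj v ((z' : ↥X) : V) := by
        intro h
        exact hz'T.2 (by exact h)
      have hXmem : ((z' : ↥X) : V) ∈ X := (z' : ↥X).2
      rcases hXmem with h | h | h
      · exact absurd h h1
      · exact absurd h h2
      · exact h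
    -- lift p into K and contradict tree-ness
    have hpK : ∀ x ∈ p.support, x ∈ Kset := fun x hx => hUK (hpU x hx)
    have hstart := hpK _ p.start_mem_support
    obtain ⟨q, hq⟩ := liftWalk Kset p hpK hstart hstart
    have hqc : q.IsCycle := by
      have hinj : Function.Injective
          ((SimpleGraph.Embedding.induce (G := G) Kset).toHom : _ → V) :=
        Subtype.val_injective
      exact (SimpleGraph.Walk.map_isCycle_iff_of_injective hinj).mp (hq ▸ hpc)
    obtain ⟨h, ht⟩ := hpU _ p.start_mem_support
    exact noCycleInTree K q hqc ht
  -- apply reducedness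
  have h2 := hred X ⟨v, hvX⟩ hNF
  refine le_trans h2 (Set.ncard_le_ncard ?_ (Set.toFinite _))
  rintro y ⟨hyX, x, hxX, hxy⟩
  have hyv : y ≠ v := fun h => hyX (h ▸ hvX)
  have hyA : ¬G.Adj v y := fun h => hyX (Set.mem_insert_iff.mpr (Or.inr (Or.inl h)))
  have hyK : y ∈ Kset := ⟨hyv, hyA⟩
  have hnt : ¬IsTreeComponent K (K.connectedComponentMk ⟨y, hyK⟩) := by
    intro ht
    exact hyX (Set.mem_insert_iff.mpr (Or.inr (Or.inr ⟨hyK, ht⟩)))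
  refine ⟨hyK, ?_, hnt⟩
  rcases hxX with rfl | hx | hx
  · exact absurd hxy hyA
  · exact ⟨x, hx, hxy⟩
  · -- x in a tree component: then y would be too, contradiction
    exfalso
    have hxK : x ∈ Kset := hUK hx
    have hadj : K.Adj ⟨x, hxK⟩ ⟨y, hyK⟩ := by exact hxy
    have : K.connectedComponentMk ⟨y, hyK⟩ = K.connectedComponentMk ⟨x, hxK⟩ :=
      SimpleGraph.ConnectedComponent.sound hadj.symm.reachable
    obtain ⟨h, ht⟩ := hx
    exact hnt (this ▸ ht)
end

section
/- Let G be a connected reduced graph, v ∈ V(G), and suppose |S| = 2 in the standard decomposition of G from v. Then in the extended decomposition of G from v, x ∉ V(P) and deg_H(z) ≥ 2. -/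
/-- The set `S` of the standard decomposition of `G` from `v`: vertices at distance
exactly 2 from `v` lying in non-tree components of `G − v − Γ(v)`. -/
def Sdec {V : Type*} (G : SimpleGraph V) (v : V) : Set V :=
  {y | ∃ hy : y ≠ v ∧ ¬G.Adj v y,
    (∃ w, G.Adj v w ∧ G.Adj w y) ∧
    ¬ IsTreeComponent (G.induce {x | x ≠ v ∧ ¬G.Adj v x})
        ((G.induce {x | x ≠ v ∧ ¬G.Adj v x}).connectedComponentMk ⟨y, hy⟩)}

/-- The set `X` of the standard decomposition of `G` from `v`:
`{v} ∪ Γ(v)` together with the vertices of the tree components of `G − v − Γ(v)`. -/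
def Xdec {V : Type*} (G : SimpleGraph V) (v : V) : Set V :=
  {v} ∪ G.neighborSet v ∪
    {y | ∃ hy : y ≠ v ∧ ¬G.Adj v y,
      IsTreeComponent (G.induce {x | x ≠ v ∧ ¬G.Adj v x})
        ((G.induce {x | x ≠ v ∧ ¬G.Adj v x}).connectedComponentMk ⟨y, hy⟩)}

/-- The degree of `y` in the subgraph of `G` induced on the vertex set `A`. -/
noncomputable def degOn {V : Type*} (G : SimpleGraph V) (A : Set V) (y : V) : ℕ :=
  {w | w ∈ A ∧ G.Adj y w}.ncard

section AuxLemmas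

open SimpleGraph

variable {V : Type*} {G : SimpleGraph V}

lemma degOn_eq (G : SimpleGraph V) (A : Set V) (u : V) :
    degOn G A u = {w | w ∈ A ∧ G.Adj u w}.ncard := rfl

/-- The spanning subgraph of `G` keeping only edges inside `s`. -/
def edgesWithin (G : SimpleGraph V) (s : Set V) : SimpleGraph V where
  Adj a b := a ∈ s ∧ b ∈ s ∧ G.Adj a b
  symm := ⟨fun _a _b h => ⟨h.2.1, h.1, h.2.2.symm⟩⟩
  loopless := ⟨fun _a h => h.2.2.ne rfl⟩

lemma edgesWithin_le (s : Set V) : edgesWithin G s ≤ G := fun _a _b h => h.2.2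

lemma acyclic_of_hom {α β : Type*} {A : SimpleGraph α} {B : SimpleGraph β}
    (f : A →g B) (hf : Function.Injective f) (hB : B.IsAcyclic) : A.IsAcyclic := by
  intro a c hc
  exact hB (c.map f) ((SimpleGraph.Walk.map_isCycle_iff_of_injective hf).mpr hc)

/-- Inclusion hom from an induced subgraph. -/
def inducedHom (G : SimpleGraph V) (s : Set V) : G.induce s →g G where
  toFun := Subtype.val
  map_rel' := fun h => h

def liftWalk_s9 {s : Set V} :
    ∀ {a b : V} (p : G.Walk a b), (∀ u ∈ p.support, u ∈ s) → ∀ (ha : a ∈ s) (hb : b ∈ s),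
      (G.induce s).Walk ⟨a, ha⟩ ⟨b, hb⟩
  | _, _, .nil, _, _, _ => .nil
  | _, _, .cons h q, hs, _ha, hb =>
      .cons (by exact h)
        (liftWalk_s9 q (fun u hu => hs u (by simp [hu])) (hs _ (by simp)) hb)

lemma liftWalk_map {s : Set V} :
    ∀ {a b : V} (p : G.Walk a b) (hs : ∀ u ∈ p.support, u ∈ s) (ha : a ∈ s) (hb : b ∈ s),
      (liftWalk_s9 p hs ha hb).map (inducedHom G s) = p
  | _, _, .nil, _, _, _ => rfl
  | _, _, .cons h q, hs, ha, hb => by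
      rw [liftWalk_s9]
      exact congrArg (SimpleGraph.Walk.cons h) (liftWalk_map q _ _ hb)

lemma cycle_induce_of_supp {s : Set V} {a : V} (c : G.Walk a a) (hc : c.IsCycle)
    (hs : ∀ u ∈ c.support, u ∈ s) : ¬ (G.induce s).IsAcyclic := by
  intro hac
  have ha := hs a c.start_mem_support
  have h1 : (liftWalk_s9 c hs ha ha).IsCycle := by
    have hinj : Function.Injective (inducedHom G s) := Subtype.val_injective
    refine (SimpleGraph.Walk.map_isCycle_iff_of_injective hinj).mp ?_
    rw [liftWalk_map]; exact hc
  exact hac _ h1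

lemma getVert_inj {a b : V} {p : G.Walk a b} (hp : p.IsPath) :
    ∀ {i j : ℕ}, i ≤ p.length → j ≤ p.length → p.getVert i = p.getVert j → i = j := by
  induction p with
  | nil => intro i j hi hj _; simp at hi hj; omega
  | @cons u c b h q ih =>
    rw [SimpleGraph.Walk.cons_isPath_iff] at hp
    intro i j hi hj hij
    match i, j with
    | 0, 0 => rfl
    | 0, (j+1) =>
      exfalso
      rw [SimpleGraph.Walk.getVert_zero, SimpleGraph.Walk.getVert_cons_succ] at hij
      exact hp.2 (SimpleGraph.Walk.mem_support_iff_exists_getVert.mpr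
        ⟨j, hij.symm, by simpa using hj⟩)
    | (i+1), 0 =>
      exfalso
      rw [SimpleGraph.Walk.getVert_zero, SimpleGraph.Walk.getVert_cons_succ] at hij
      exact hp.2 (SimpleGraph.Walk.mem_support_iff_exists_getVert.mpr
        ⟨i, hij, by simpa using hi⟩)
    | (i+1), (j+1) =>
      rw [SimpleGraph.Walk.getVert_cons_succ, SimpleGraph.Walk.getVert_cons_succ] at hij
      have := ih hp.1 (by simpa using hi) (by simpa using hj) hij
      omega

lemma edge_getVert_mem {a b : V} (p : G.Walk a b) {i : ℕ} (hi : i < p.length) :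
    s(p.getVert i, p.getVert (i+1)) ∈ p.edges := by
  have := SimpleGraph.Walk.toSubgraph_adj_getVert p hi
  rw [← SimpleGraph.Subgraph.mem_edgeSet, SimpleGraph.Walk.mem_edges_toSubgraph] at this
  exact this

lemma edgesWithin_walk_prop {s t : Set V} {Q : Sym2 V → Prop}
    (hstep : ∀ a b, a ∈ t → (edgesWithin G s).Adj a b → b ∈ t ∧ Q s(a, b)) :
    ∀ {a b : V} (p : (edgesWithin G s).Walk a b), a ∈ t →
      (∀ u ∈ p.support, u ∈ t) ∧ (∀ e ∈ p.edges, Q e) := by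
  intro a b p
  induction p with
  | nil => intro ha; exact ⟨by simpa using ha, by simp⟩
  | @cons u c b h q ih =>
    intro ha
    obtain ⟨hc, hQ⟩ := hstep u c ha h
    obtain ⟨ih1, ih2⟩ := ih hc
    constructor
    · intro w hw
      rcases (SimpleGraph.Walk.mem_support_iff _).mp hw with rfl | hw
      · exact ha
      · exact ih1 w (by simpa using hw)
    · intro e he
      rw [SimpleGraph.Walk.edges_cons] at he
      rcases List.mem_cons.mp he with rfl | he
      · exact hQ
      · exact ih2 e he

lemma mapLe_support {G' : SimpleGraph V} (hle : G ≤ G') {a b : V} (p : G.Walk a b) :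
    (p.mapLe hle).support = p.support := by
  rw [SimpleGraph.Walk.mapLe, SimpleGraph.Walk.support_map]
  have : ⇑(SimpleGraph.Hom.ofLE hle) = id := rfl
  rw [this, List.map_id]

lemma mapLe_edges {G' : SimpleGraph V} (hle : G ≤ G') {a b : V} (p : G.Walk a b) :
    (p.mapLe hle).edges = p.edges := by
  rw [SimpleGraph.Walk.mapLe, SimpleGraph.Walk.edges_map]
  have : ⇑(SimpleGraph.Hom.ofLE hle) = id := rfl
  rw [this, Sym2.map_id, List.map_id]

lemma no_cycle_in_path [DecidableEq V] {u w : V} (p : G.Walk u w) (hp : p.IsPath) :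
    ∀ {a : V} (c : G.Walk a a), c.IsCycle → ¬(∀ e ∈ c.edges, e ∈ p.edges) := by
  induction p with
  | nil =>
    intro a c hc hce
    have h3 := hc.three_le_length
    have : c.edges ≠ [] := by
      intro h
      have := SimpleGraph.Walk.length_edges c
      rw [h] at this
      simp at this
      omega
    obtain ⟨e, he⟩ := List.exists_mem_of_ne_nil _ this
    simpa using hce e he
  | @cons u u' w h q ih =>
    intro a c hc hce
    rw [SimpleGraph.Walk.cons_isPath_iff] at hp
    by_cases hall : ∀ e ∈ c.edges, e ∈ q.edges
    · exact ih hp.1 c hc hall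
    · push_neg at hall
      obtain ⟨e, hec, heq⟩ := hall
      have he' : e = s(u, u') := by
        have := hce e hec
        rw [SimpleGraph.Walk.edges_cons, List.mem_cons] at this
        tauto
      subst he'
      have hu_supp : u ∈ c.support := SimpleGraph.Walk.fst_mem_support_of_mem_edges c hec
      set c' := c.rotate u hu_supp with hc'def
      have hc' : c'.IsCycle := hc.rotate hu_supp
      have hedges : ∀ e ∈ c'.edges, e ∈ (SimpleGraph.Walk.cons h q).edges := by
        intro e he
        exact hce e ((SimpleGraph.Walk.rotate_edges c u hu_supp).mem_iff.mp he)
      have hnotq : ∀ b : V, s(u, b) ∈ q.edges → False := by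
        intro b hb
        exact hp.2 (SimpleGraph.Walk.fst_mem_support_of_mem_edges q hb)
      have hmemcons : ∀ b : V, s(u, b) ∈ (SimpleGraph.Walk.cons h q).edges → b = u' := by
        intro b hb
        rw [SimpleGraph.Walk.edges_cons, List.mem_cons] at hb
        rcases hb with hb | hb
        · rw [Sym2.eq_iff] at hb
          rcases hb with ⟨-, rfl⟩ | ⟨h1, h2⟩
          · rfl
          · exact absurd h1 h.ne
        · exact absurd hb (hnotq b)
      have hnn : ¬ c'.Nil := hc'.not_nil
      obtain ⟨b, hab, d, hd⟩ := SimpleGraph.Walk.not_nil_iff.mp hnn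
      have hbu' : b = u' := by
        apply hmemcons
        apply hedges
        rw [hd, SimpleGraph.Walk.edges_cons]
        exact List.mem_cons_self
      subst hbu'
      have hcyc2 := hc'
      rw [hd, SimpleGraph.Walk.cons_isCycle_iff] at hcyc2
      have hdlen : 0 < d.length := by
        have := hc'.three_le_length
        rw [hd] at this
        simp only [SimpleGraph.Walk.length_cons] at this
        omega
      have hdrevnn : ¬ d.reverse.Nil := by
        rw [SimpleGraph.Walk.nil_iff_length_eq, SimpleGraph.Walk.length_reverse]
        omega
      obtain ⟨b₃, hb₃, d₃, hd₃⟩ := SimpleGraph.Walk.not_nil_iff.mp hdrevnn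
      have hedge3 : s(u, b₃) ∈ d.edges := by
        have : s(u, b₃) ∈ d.reverse.edges := by
          rw [hd₃, SimpleGraph.Walk.edges_cons]
          exact List.mem_cons_self
        rw [SimpleGraph.Walk.edges_reverse, List.mem_reverse] at this
        exact this
      have hmem : s(u, b₃) ∈ (SimpleGraph.Walk.cons h q).edges := by
        apply hedges
        rw [hd, SimpleGraph.Walk.edges_cons]
        exact List.mem_cons_of_mem _ hedge3
      have hb3 := hmemcons b₃ hmem
      rw [hb3] at hedge3
      exact hcyc2.2 hedge3

end AuxLemmas

/-- Extended decomposition (Lemma `extend-decomp`): let `G` be a connected reduced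
graph, `v` a vertex with `S = {x, y}` (`x < y`) in the standard decomposition. Let
`z` and the `y`–`z` path `P` in `G − X` be as in the extended decomposition: either
`z = y` and `deg_{G−X}(y) ≥ 2`, or `deg_{G−X}(y) = 1`, `deg_{G−X}(z) > 2`, and every
internal vertex of `P` has degree 2 in `G − X`. Then `x ∉ V(P)` and `deg_H(z) ≥ 2`,
where `H = G − X⁺` and `X⁺ = X ∪ V(P) \ {z}`. -/
theorem stmt_9 {V : Type*} [Fintype V] [LinearOrder V] (G : SimpleGraph V)
    (hconn : G.Connected) (hred : Reduced G) (v x y : V)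
    (hS : Sdec G v = {x, y}) (hxy : x < y)
    (z : V) (P : G.Walk y z) (hP : P.IsPath)
    (hPX : ∀ u ∈ P.support, u ∉ Xdec G v)
    (hz : (z = y ∧ 2 ≤ degOn G (Xdec G v)ᶜ y) ∨
          (degOn G (Xdec G v)ᶜ y = 1 ∧ 2 < degOn G (Xdec G v)ᶜ z ∧
            ∀ u ∈ P.support, u ≠ y → u ≠ z → degOn G (Xdec G v)ᶜ u = 2)) :
    x ∉ P.support ∧
    2 ≤ degOn G ((Xdec G v ∪ {u | u ∈ P.support}) \ {z})ᶜ z := by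
  classical
  have hXmem : ∀ u : V, u ∈ Xdec G v ↔ u = v ∨ G.Adj v u ∨
      ∃ hu : u ≠ v ∧ ¬G.Adj v u,
        IsTreeComponent (G.induce {x | x ≠ v ∧ ¬G.Adj v x})
          ((G.induce {x | x ≠ v ∧ ¬G.Adj v x}).connectedComponentMk ⟨u, hu⟩) := by
    intro u
    simp only [Xdec, Set.mem_union, Set.mem_singleton_iff, SimpleGraph.mem_neighborSet,
      Set.mem_setOf_eq]
    tauto
  rcases hz with ⟨hzy', hdeg⟩ | ⟨hdy, hdz, hdeg⟩
  · -- Case z = y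
    subst hzy'
    have hnil : P = SimpleGraph.Walk.nil := SimpleGraph.Walk.isPath_iff_eq_nil.mp hP
    subst hnil
    have hyX : z ∉ Xdec G v := hPX z (SimpleGraph.Walk.start_mem_support _)
    constructor
    · intro hx
      simp only [SimpleGraph.Walk.support_nil, List.mem_singleton] at hx
      exact hxy.ne hx
    · have hset : ((Xdec G v ∪ {u | u ∈ (SimpleGraph.Walk.nil : G.Walk z z).support}) \ {z})
          = Xdec G v := by
        ext u
        simp only [SimpleGraph.Walk.support_nil, List.mem_singleton, Set.mem_diff,
          Set.mem_union, Set.mem_setOf_eq, Set.mem_singleton_iff]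
        constructor
        · rintro ⟨h1 | h1, h2⟩
          · exact h1
          · exact absurd h1 h2
        · intro h
          exact ⟨Or.inl h, fun he => hyX (he ▸ h)⟩
      rw [hset]
      exact hdeg
  · -- Case z ≠ y
    have hzy : z ≠ y := by
      intro h; rw [h, hdy] at hdz; omega
    have hlen : 0 < P.length := by
      rcases Nat.eq_zero_or_pos P.length with h0 | h
      · exact absurd (SimpleGraph.Walk.nil_iff_length_eq.mpr h0).eq.symm hzy
      · exact h
    have hyX : y ∉ Xdec G v := hPX y P.start_mem_support
    have hzX : z ∉ Xdec G v := hPX z P.end_mem_support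
    have hinj : ∀ {i j : ℕ}, i ≤ P.length → j ≤ P.length → P.getVert i = P.getVert j → i = j :=
      fun hi hj hij => getVert_inj hP hi hj hij
    have hcore : ∀ u w : V, u ∈ P.support → u ≠ z → w ∉ Xdec G v → G.Adj u w →
        ∃ i, i < P.length ∧ P.getVert i = u ∧
          (w = P.getVert (i+1) ∨ (0 < i ∧ w = P.getVert (i-1))) := by
      intro u w hu huz hwX hadj
      obtain ⟨i, hgv, hile⟩ := SimpleGraph.Walk.mem_support_iff_exists_getVert.mp hu
      have hilt : i < P.length := by
        rcases lt_or_eq_of_le hile with h | h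
        · exact h
        · exact absurd (by rw [← hgv, h, SimpleGraph.Walk.getVert_length]) huz
      refine ⟨i, hilt, hgv, ?_⟩
      by_cases hi0 : i = 0
      · subst hi0
        have huy : u = y := by rw [← hgv, SimpleGraph.Walk.getVert_zero]
        have hadj1 : G.Adj y (P.getVert 1) := by
          have := P.adj_getVert_succ hlen
          rwa [SimpleGraph.Walk.getVert_zero] at this
        have h1X : P.getVert 1 ∉ Xdec G v :=
          hPX _ (SimpleGraph.Walk.mem_support_iff_exists_getVert.mpr ⟨1, rfl, hlen⟩)
        have hNcard : ({w | w ∈ (Xdec G v)ᶜ ∧ G.Adj y w}).ncard = 1 := hdy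
        obtain ⟨a, ha⟩ := Set.ncard_eq_one.mp hNcard
        have h1mem : P.getVert 1 ∈ {w | w ∈ (Xdec G v)ᶜ ∧ G.Adj y w} := ⟨h1X, hadj1⟩
        have hwmem : w ∈ {w | w ∈ (Xdec G v)ᶜ ∧ G.Adj y w} := ⟨hwX, by rwa [huy] at hadj⟩
        rw [ha, Set.mem_singleton_iff] at h1mem hwmem
        left
        rw [hwmem, h1mem]
      · have hu_ne_y : u ≠ y := by
          intro h
          exact hi0 (hinj hile (Nat.zero_le _) (by rw [hgv, SimpleGraph.Walk.getVert_zero, h]))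
        have hcard : ({w | w ∈ (Xdec G v)ᶜ ∧ G.Adj u w}).ncard = 2 := hdeg u hu hu_ne_y huz
        have hprev_adj : G.Adj (P.getVert (i-1)) u := by
          have h1 : i - 1 < P.length := by omega
          have := P.adj_getVert_succ h1
          rw [show i - 1 + 1 = i by omega, hgv] at this
          exact this
        have hnext_adj : G.Adj u (P.getVert (i+1)) := by
          have := P.adj_getVert_succ hilt; rwa [hgv] at this
        have hprevX : P.getVert (i-1) ∉ Xdec G v :=
          hPX _ (SimpleGraph.Walk.mem_support_iff_exists_getVert.mpr ⟨i-1, rfl, by omega⟩)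
        have hnextX : P.getVert (i+1) ∉ Xdec G v :=
          hPX _ (SimpleGraph.Walk.mem_support_iff_exists_getVert.mpr ⟨i+1, rfl, by omega⟩)
        have hne : P.getVert (i-1) ≠ P.getVert (i+1) := by
          intro h
          have := hinj (show i-1 ≤ P.length by omega) (show i+1 ≤ P.length by omega) h
          omega
        have hsub : ({P.getVert (i-1), P.getVert (i+1)} : Set V)
            ⊆ {w | w ∈ (Xdec G v)ᶜ ∧ G.Adj u w} := by
          intro t ht
          simp only [Set.mem_insert_iff, Set.mem_singleton_iff] at ht
          rcases ht with rfl | rfl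
          · exact ⟨hprevX, hprev_adj.symm⟩
          · exact ⟨hnextX, hnext_adj⟩
        have heq : ({P.getVert (i-1), P.getVert (i+1)} : Set V)
            = {w | w ∈ (Xdec G v)ᶜ ∧ G.Adj u w} := by
          apply Set.eq_of_subset_of_ncard_le hsub
          rw [hcard, Set.ncard_pair hne]
        have hwmem : w ∈ ({P.getVert (i-1), P.getVert (i+1)} : Set V) := by
          rw [heq]; exact ⟨hwX, hadj⟩
        simp only [Set.mem_insert_iff, Set.mem_singleton_iff] at hwmem
        rcases hwmem with h | h
        · exact Or.inr ⟨by omega, h⟩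
        · exact Or.inl h
    have hedge : ∀ u w : V, u ∈ P.support → u ≠ z → w ∉ Xdec G v → G.Adj u w →
        w ∈ P.support ∧ s(u, w) ∈ P.edges := by
      intro u w hu huz hwX hadj
      obtain ⟨i, hilt, hgv, hc⟩ := hcore u w hu huz hwX hadj
      rcases hc with rfl | ⟨hpos, rfl⟩
      · exact ⟨SimpleGraph.Walk.mem_support_iff_exists_getVert.mpr ⟨i+1, rfl, hilt⟩,
          by rw [← hgv]; exact edge_getVert_mem P hilt⟩
      · constructor
        · exact SimpleGraph.Walk.mem_support_iff_exists_getVert.mpr ⟨i-1, rfl, by omega⟩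
        · have h1 : s(P.getVert (i-1), P.getVert (i-1+1)) ∈ P.edges :=
            edge_getVert_mem P (by omega)
          rw [show i-1+1 = i by omega, hgv] at h1
          rw [Sym2.eq_swap]
          exact h1
    have hzpred : ∀ u : V, u ∈ P.support → u ≠ z → u ∉ Xdec G v → G.Adj u z →
        u = P.getVert (P.length - 1) := by
      intro u hu huz huX hadj
      obtain ⟨i, hilt, hgv, hc⟩ := hcore u z hu huz hzX hadj
      rcases hc with hz1 | ⟨hpos, hz2⟩
      · have : i + 1 = P.length := by
          apply hinj (by omega) le_rfl
          rw [SimpleGraph.Walk.getVert_length]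
          exact hz1.symm
        rw [← hgv]
        congr 1
        omega
      · exfalso
        have : i - 1 = P.length := by
          apply hinj (by omega) le_rfl
          rw [SimpleGraph.Walk.getVert_length]
          exact hz2.symm
        omega
    -- Part 1 : x ∉ P.support
    have hxPn : x ∉ P.support := by
      intro hxP
      set Y : Set V := {u | u ∈ P.support ∧ u ≠ z} with hYdef
      set A : Set V := Xdec G v ∪ Y with hAdef
      set W : Set V := {u | u ∈ A ∧ u ≠ v ∧ ¬G.Adj v u} with hWdef
      have hvX : v ∈ Xdec G v := by rw [hXmem]; left; rfl
      have hadjX : ∀ u, G.Adj v u → u ∈ Xdec G v := by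
        intro u h; rw [hXmem]; right; left; exact h
      have htreeX : ∀ (u : V) (hu : u ≠ v ∧ ¬G.Adj v u),
          IsTreeComponent (G.induce {x | x ≠ v ∧ ¬G.Adj v x})
            ((G.induce {x | x ≠ v ∧ ¬G.Adj v x}).connectedComponentMk ⟨u, hu⟩) →
          u ∈ Xdec G v := by
        intro u hu ht; rw [hXmem]; right; right; exact ⟨hu, ht⟩
      have hYX : ∀ u ∈ Y, u ∉ Xdec G v := fun u hu => hPX u hu.1
      have hYD : ∀ u ∈ Y, u ≠ v ∧ ¬G.Adj v u := by
        intro u hu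
        constructor
        · intro h; exact hYX u hu (h ▸ hvX)
        · intro h; exact hYX u hu (hadjX u h)
      have hWTY : ∀ u ∈ W,
          (∃ hu : u ≠ v ∧ ¬G.Adj v u,
            IsTreeComponent (G.induce {x | x ≠ v ∧ ¬G.Adj v x})
              ((G.induce {x | x ≠ v ∧ ¬G.Adj v x}).connectedComponentMk ⟨u, hu⟩)) ∨ u ∈ Y := by
        rintro u ⟨huA, huv, hune⟩
        rcases huA with huX | huY
        · rw [hXmem] at huX
          rcases huX with rfl | h | h
          · exact absurd rfl huv
          · exact absurd h hune
          · left; exact h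
        · right; exact huY
      have hcomp_adj : ∀ (a b : V) (ha : a ≠ v ∧ ¬G.Adj v a) (hb : b ≠ v ∧ ¬G.Adj v b),
          G.Adj a b →
          (G.induce {x | x ≠ v ∧ ¬G.Adj v x}).connectedComponentMk ⟨a, ha⟩
            = (G.induce {x | x ≠ v ∧ ¬G.Adj v x}).connectedComponentMk ⟨b, hb⟩ := by
        intro a b ha hb hadj
        exact SimpleGraph.ConnectedComponent.connectedComponentMk_eq_of_adj (by exact hadj)
      have hYnt : ∀ u ∈ Y, ∀ (hu : u ≠ v ∧ ¬G.Adj v u),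
          ¬ IsTreeComponent (G.induce {x | x ≠ v ∧ ¬G.Adj v x})
            ((G.induce {x | x ≠ v ∧ ¬G.Adj v x}).connectedComponentMk ⟨u, hu⟩) := by
        intro u huY hu ht
        exact hYX u huY (htreeX u hu ht)
      have hstep : ∀ a b : V, a ∈ Y → (edgesWithin G W).Adj a b →
          b ∈ Y ∧ s(a, b) ∈ P.edges := by
        rintro a b haY ⟨haW, hbW, hadj⟩
        have hbY : b ∈ Y := by
          rcases hWTY b hbW with ⟨hbD, hbt⟩ | hbY
          · exfalso
            have haD := hYD a haY
            have hcc := hcomp_adj a b haD hbD hadj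
            rw [← hcc] at hbt
            exact hYnt a haY haD hbt
          · exact hbY
        exact ⟨hbY, (hedge a b haY.1 haY.2 (hYX b hbY) hadj).2⟩
      have hEW : (edgesWithin G W).IsAcyclic := by
        intro a c hc
        have hne : ¬ c.Nil := hc.not_nil
        obtain ⟨b, hab, q, hq⟩ := SimpleGraph.Walk.not_nil_iff.mp hne
        have haW : a ∈ W := hab.1
        have hsuppW : ∀ u ∈ c.support, u ∈ W :=
          (edgesWithin_walk_prop (t := W) (Q := fun _ => True)
            (fun _a _b _ha hadj => ⟨hadj.2.1, trivial⟩) c haW).1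
        have hle := edgesWithin_le (G := G) W
        have hcGc : (c.mapLe hle).IsCycle := (SimpleGraph.Walk.mapLe_isCycle hle).mpr hc
        have hsupG : ∀ u ∈ (c.mapLe hle).support, u ∈ W := by
          intro u hu
          rw [mapLe_support] at hu
          exact hsuppW u hu
        rcases hWTY a haW with ⟨haD, hat⟩ | haY
        · -- tree component case
          have haD' : a ∈ {x | x ≠ v ∧ ¬G.Adj v x} := haD
          have hsupD : ∀ u ∈ (c.mapLe hle).support, u ∈ {x | x ≠ v ∧ ¬G.Adj v x} :=
            fun u hu => (hsupG u hu).2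
          have hkc : (liftWalk_s9 (c.mapLe hle) hsupD haD' haD').IsCycle := by
            have hinj' : Function.Injective (inducedHom G {x | x ≠ v ∧ ¬G.Adj v x}) :=
              Subtype.val_injective
            refine (SimpleGraph.Walk.map_isCycle_iff_of_injective hinj').mp ?_
            rw [liftWalk_map]; exact hcGc
          have hsupcc : ∀ p ∈ (liftWalk_s9 (c.mapLe hle) hsupD haD' haD').support,
              p ∈ ((G.induce {x | x ≠ v ∧ ¬G.Adj v x}).connectedComponentMk ⟨a, haD⟩).supp := by
            intro p hp
            have hreach : (G.induce {x | x ≠ v ∧ ¬G.Adj v x}).Reachable ⟨a, haD'⟩ p :=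
              ⟨(liftWalk_s9 (c.mapLe hle) hsupD haD' haD').takeUntil p hp⟩
            rw [SimpleGraph.ConnectedComponent.mem_supp_iff]
            exact SimpleGraph.ConnectedComponent.sound hreach.symm
          exact cycle_induce_of_supp _ hkc hsupcc
            (SimpleGraph.IsTree.IsAcyclic hat)
        · -- path case
          have hYQ := edgesWithin_walk_prop (t := Y) (Q := fun e => e ∈ P.edges) hstep c haY
          have hedgesc : ∀ e ∈ (c.mapLe hle).edges, e ∈ P.edges := by
            intro e he
            rw [mapLe_edges] at he
            exact hYQ.2 e he
          exact no_cycle_in_path P hP (c.mapLe hle) hcGc hedgesc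
      have hvA : v ∈ A := Or.inl hvX
      have hNF : NearForest (G.induce A) := by
        right
        refine ⟨⟨v, hvA⟩, ?_⟩
        refine acyclic_of_hom (B := edgesWithin G W)
          ⟨fun q => (q.1 : V), ?_⟩ (fun q r h => Subtype.ext (Subtype.ext h)) hEW
        intro q r hqr
        exact ⟨⟨q.1.2, fun h => q.2.1 (Subtype.ext h), fun h => q.2.2 (by exact h)⟩,
          ⟨r.1.2, fun h => r.2.1 (Subtype.ext h), fun h => r.2.2 (by exact h)⟩,
          by exact hqr⟩
      have hRed := hred A ⟨v, hvA⟩ hNF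
      have hsubz : {u | u ∉ A ∧ ∃ t ∈ A, G.Adj t u} ⊆ {z} := by
        rintro u ⟨huA, t, htA, hadj⟩
        have huX : u ∉ Xdec G v := fun h => huA (Or.inl h)
        have huY : u ∉ Y := fun h => huA (Or.inr h)
        rcases htA with htX | htY
        · have huv : u ≠ v := fun h => huX (h ▸ hvX)
          have huadj : ¬G.Adj v u := fun h => huX (hadjX u h)
          rw [hXmem] at htX
          rcases htX with rfl | hvt | ⟨htD, htt⟩
          · exact absurd hadj huadj
          · have huS : u ∈ Sdec G v :=
              ⟨⟨huv, huadj⟩, ⟨t, hvt, hadj⟩, fun ht => huX (htreeX u ⟨huv, huadj⟩ ht)⟩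
            rw [hS] at huS
            simp only [Set.mem_insert_iff, Set.mem_singleton_iff] at huS
            rcases huS with rfl | rfl
            · by_cases h : u = z
              · simp [h]
              · exact absurd (Or.inr ⟨hxP, h⟩) huA
            · exact absurd (Or.inr ⟨P.start_mem_support, fun h => hzy h.symm⟩) huA
          · have hcc := hcomp_adj t u htD ⟨huv, huadj⟩ hadj
            rw [hcc] at htt
            exact absurd (htreeX u ⟨huv, huadj⟩ htt) huX
        · have := hedge t u htY.1 htY.2 huX hadj
          by_cases h : u = z
          · simp [h]
          · exact absurd (Or.inr ⟨this.1, h⟩) huA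
      have hle1 : ({u | u ∉ A ∧ ∃ t ∈ A, G.Adj t u}).ncard ≤ 1 := by
        calc ({u | u ∉ A ∧ ∃ t ∈ A, G.Adj t u}).ncard
            ≤ ({z} : Set V).ncard := Set.ncard_le_ncard hsubz (Set.toFinite _)
          _ = 1 := Set.ncard_singleton z
      omega
    refine ⟨hxPn, ?_⟩
    -- Part 2 : degree of z in H
    rw [degOn_eq]
    have hNz : 2 < ({w | w ∈ (Xdec G v)ᶜ ∧ G.Adj z w}).ncard := hdz
    have hsub2 : {w | w ∈ (Xdec G v)ᶜ ∧ G.Adj z w} \ {P.getVert (P.length - 1)}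
        ⊆ {w | w ∈ ((Xdec G v ∪ {u | u ∈ P.support}) \ {z})ᶜ ∧ G.Adj z w} := by
      rintro t ⟨⟨htX, hadj⟩, htp⟩
      refine ⟨?_, hadj⟩
      intro htC
      obtain ⟨htU, htz⟩ := htC
      rcases htU with htX' | htsupp
      · exact htX htX'
      · apply htp
        rw [Set.mem_singleton_iff] at htz ⊢
        exact hzpred t htsupp (by simpa using htz) htX hadj.symm
    have h2le : 2 ≤ ({w | w ∈ (Xdec G v)ᶜ ∧ G.Adj z w}
        \ {P.getVert (P.length - 1)}).ncard := by
      have hsplit : {w | w ∈ (Xdec G v)ᶜ ∧ G.Adj z w}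
          ⊆ ({w | w ∈ (Xdec G v)ᶜ ∧ G.Adj z w} \ {P.getVert (P.length - 1)})
            ∪ {P.getVert (P.length - 1)} := by
        intro t ht
        by_cases h : t = P.getVert (P.length - 1)
        · right; simp [h]
        · left; exact ⟨ht, by simp [h]⟩
      have h1 : ({w | w ∈ (Xdec G v)ᶜ ∧ G.Adj z w}).ncard
          ≤ ({w | w ∈ (Xdec G v)ᶜ ∧ G.Adj z w} \ {P.getVert (P.length - 1)}).ncard + 1 := by
        calc ({w | w ∈ (Xdec G v)ᶜ ∧ G.Adj z w}).ncard
            ≤ (({w | w ∈ (Xdec G v)ᶜ ∧ G.Adj z w} \ {P.getVert (P.length - 1)})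
              ∪ {P.getVert (P.length - 1)}).ncard :=
              Set.ncard_le_ncard hsplit (Set.toFinite _)
          _ ≤ ({w | w ∈ (Xdec G v)ᶜ ∧ G.Adj z w} \ {P.getVert (P.length - 1)}).ncard
              + ({P.getVert (P.length - 1)} : Set V).ncard := Set.ncard_union_le _ _
          _ = _ := by rw [Set.ncard_singleton]
      omega
    calc 2 ≤ ({w | w ∈ (Xdec G v)ᶜ ∧ G.Adj z w} \ {P.getVert (P.length - 1)}).ncard := h2le
      _ ≤ _ := Set.ncard_le_ncard hsub2 (Set.toFinite _)
end

section
/- Let G be a connected reduced graph, v ∈ V(G), and let f(m,n) = ρm + σn be a good slice (ρ ≥ 0, ρ + σ ≥ 0, not both zero). Let G_out = G − v and G_in = TR(G − v − Γ(v)) (tree components removed). Then, with S as in the standard decomposition of G from v: f(G) − f(G_out) = ρ·deg(v) + σ, and f(G) − f(G_in) ≥ ρ·⌈(d²(v) + deg(v) + |S|)/2⌉ + σ·(1 + deg(v)), where f(H) = ρ|E(H)| + σ|V(H)| and d²(v) is the 2-degree of v. -/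
/-- `TR(K)`: the graph `K` with all of its tree components removed. -/
def TR {α : Type*} (K : SimpleGraph α) :
    SimpleGraph {x : α // ¬ IsTreeComponent K (K.connectedComponentMk x)} :=
  K.induce {x | ¬ IsTreeComponent K (K.connectedComponentMk x)}

/-- The value `f(H) = ρ·|E(H)| + σ·|V(H)|` of the sliceVal `f(m,n) = ρm + σn` on a graph. -/
noncomputable def sliceVal {α : Type*} (ρ σ : ℝ) (K : SimpleGraph α) : ℝ :=
  ρ * (Nat.card K.edgeSet : ℝ) + σ * (Nat.card α : ℝ)

open Finset SimpleGraph

section AuxLemmas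

/-- An injective graph hom into an acyclic graph forces acyclicity. -/
lemma aux_isAcyclic_of_injective_hom {α β : Type*} {H : SimpleGraph α} {H' : SimpleGraph β}
    (φ : H →g H') (hφ : Function.Injective φ) (h : H'.IsAcyclic) : H.IsAcyclic := by
  intro v c hc
  exact h (c.map φ) ((SimpleGraph.Walk.map_isCycle_iff_of_injective hφ).2 hc)

/-- Edge count of an induced subgraph, as edges of the ambient graph inside `s`. -/
lemma aux_card_edgeSet_induce {α : Type*} [Fintype α] (H : SimpleGraph α) (s : Set α) :
    Nat.card (H.induce s).edgeSet = {e ∈ H.edgeSet | ∀ x ∈ e, x ∈ s}.ncard := by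
  classical
  have himg : {e ∈ H.edgeSet | ∀ x ∈ e, x ∈ s}
      = (Sym2.map (Subtype.val : s → α)) '' (H.induce s).edgeSet := by
    ext e
    constructor
    · rintro ⟨he, hs⟩
      induction e with
      | _ x y =>
        refine ⟨s(⟨x, hs x (Sym2.mem_mk_left x y)⟩, ⟨y, hs y (Sym2.mem_mk_right x y)⟩), ?_, rfl⟩
        simpa using he
    · rintro ⟨e', he', rfl⟩
      induction e' with
      | _ x y =>
        refine ⟨by simpa using he', ?_⟩
        intro z hz
        rcases Sym2.mem_iff.1 hz with rfl | rfl
        · exact x.2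
        · exact y.2
  rw [himg, Set.ncard_image_of_injective _ (Sym2.map.injective Subtype.val_injective),
    ← Nat.card_coe_set_eq]

lemma aux_mk_eq_of_mem_edge {W : Type*} (K : SimpleGraph W) {e : Sym2 W} (he : e ∈ K.edgeSet)
    {x : W} (hx : x ∈ e) : K.connectedComponentMk x = K.connectedComponentMk e.out.1 := by
  induction e with
  | _ a b =>
    have hab : K.Adj a b := he
    have h1 : s(a,b).out.1 = a ∨ s(a,b).out.1 = b := Sym2.mem_iff.1 (Sym2.out_fst_mem _)
    have h2 : x = a ∨ x = b := Sym2.mem_iff.1 hx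
    have hmk : K.connectedComponentMk a = K.connectedComponentMk b :=
      SimpleGraph.ConnectedComponent.sound hab.reachable
    rcases h1 with h1 | h1 <;> rcases h2 with rfl | rfl <;> rw [h1] <;> simp [hmk]

lemma aux_vertex_comp {W : Type*} [Fintype W] (K : SimpleGraph W)
    [Fintype K.ConnectedComponent] (P : K.ConnectedComponent → Prop) [DecidablePred P] :
    Nat.card {x : W // P (K.connectedComponentMk x)} =
      ∑ c ∈ univ.filter P, c.supp.ncard := by
  classical
  rw [Nat.card_eq_fintype_card, Fintype.card_subtype]
  rw [Finset.card_eq_sum_card_fiberwise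
    (f := fun x => K.connectedComponentMk x) (t := univ.filter P)
    (fun x hx => by simpa using (Finset.mem_filter.1 hx).2)]
  refine Finset.sum_congr rfl fun c hc => ?_
  have hPc : P c := (Finset.mem_filter.1 hc).2
  have : (univ.filter fun x => P (K.connectedComponentMk x)).filter
      (fun x => K.connectedComponentMk x = c)
      = univ.filter (fun x => K.connectedComponentMk x = c) := by
    ext x
    simp only [Finset.mem_filter, Finset.mem_univ, true_and]
    exact ⟨fun h => h.2, fun h => ⟨h ▸ hPc, h⟩⟩
  rw [this]
  have : c.supp = {x | K.connectedComponentMk x = c} := rfl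
  rw [this, Set.ncard_eq_toFinset_card', Set.toFinset_setOf]

lemma aux_edge_comp {W : Type*} [Fintype W] (K : SimpleGraph W)
    [Fintype K.ConnectedComponent] (P : K.ConnectedComponent → Prop) [DecidablePred P] :
    {e ∈ K.edgeSet | ∀ x ∈ e, P (K.connectedComponentMk x)}.ncard =
      ∑ c ∈ univ.filter P, {e ∈ K.edgeSet | ∀ x ∈ e, x ∈ c.supp}.ncard := by
  classical
  have hset : {e ∈ K.edgeSet | ∀ x ∈ e, P (K.connectedComponentMk x)}
      = ↑(univ.filter fun e : Sym2 W =>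
          e ∈ K.edgeSet ∧ ∀ x ∈ e, P (K.connectedComponentMk x)) := by
    ext e; simp
  rw [hset, Set.ncard_coe_finset]
  rw [Finset.card_eq_sum_card_fiberwise
    (f := fun e => K.connectedComponentMk e.out.1) (t := univ.filter P)
    (fun e he => by
      simp only [Finset.mem_coe, Finset.mem_filter, Finset.mem_univ, true_and] at he ⊢
      exact he.2 _ (Sym2.out_fst_mem e))]
  refine Finset.sum_congr rfl fun c hc => ?_
  have hPc : P c := (Finset.mem_filter.1 hc).2
  have hset2 : {e ∈ K.edgeSet | ∀ x ∈ e, x ∈ c.supp}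
      = ↑((univ.filter fun e : Sym2 W =>
          e ∈ K.edgeSet ∧ ∀ x ∈ e, P (K.connectedComponentMk x)).filter
          (fun e => K.connectedComponentMk e.out.1 = c)) := by
    ext e
    simp only [Set.mem_setOf_eq, Finset.coe_filter, Finset.mem_filter, Finset.mem_univ, true_and,
      SimpleGraph.ConnectedComponent.mem_supp_iff]
    constructor
    · rintro ⟨he, hall⟩
      exact ⟨⟨he, fun x hx => by rw [hall x hx]; exact hPc⟩,
        by rw [← aux_mk_eq_of_mem_edge K he (Sym2.out_fst_mem e), hall _ (Sym2.out_fst_mem e)]⟩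
    · rintro ⟨⟨he, -⟩, hout⟩
      exact ⟨he, fun x hx => by rw [aux_mk_eq_of_mem_edge K he hx]; exact hout⟩
  rw [hset2, Set.ncard_coe_finset]

/-- A tree component: edge count is vertex count minus one. -/
lemma aux_tree_comp_card {W : Type*} [Fintype W] (K : SimpleGraph W)
    (c : K.ConnectedComponent) (hc : IsTreeComponent K c) :
    {e ∈ K.edgeSet | ∀ x ∈ e, x ∈ c.supp}.ncard + 1 = c.supp.ncard := by
  classical
  rw [← aux_card_edgeSet_induce K c.supp]
  have htree : (K.induce c.supp).IsTree := hc
  have h := htree.card_edgeFinset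
  have h1 : Nat.card (K.induce c.supp).edgeSet = (K.induce c.supp).edgeFinset.card := by
    rw [Nat.card_eq_fintype_card, SimpleGraph.edgeFinset, Set.toFinset_card]
  have h2 : c.supp.ncard = Fintype.card c.supp := by
    rw [← Nat.card_eq_fintype_card, Nat.card_coe_set_eq]
  rw [h1, h2, ← h]

lemma aux_filter_pair {α : Type*} [DecidableEq α] (N : Finset α) (x y : α) (hxy : x ≠ y) :
    (N.filter (· ∈ s(x,y))).card = (if x ∈ N then 1 else 0) + (if y ∈ N then 1 else 0) := by
  have : N.filter (· ∈ s(x,y)) = N.filter (fun w => w = x ∨ w = y) := by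
    apply Finset.filter_congr; intro w _; simp [Sym2.mem_iff]
  rw [this, Finset.filter_or, Finset.filter_eq', Finset.filter_eq',
    Finset.card_union_of_disjoint (by split_ifs <;> simp [hxy, hxy.symm, Finset.disjoint_singleton])]
  split_ifs <;> simp

/-- From reducedness: every tree component of `G − v − Γ(v)` receives edges from two
distinct neighbours of `v`. -/
lemma aux_tree_comp_two_nbrs {V : Type*} [Fintype V] (G : SimpleGraph V)
    (hred : Reduced G) (v : V)
    (c : (G.induce {x | x ≠ v ∧ ¬G.Adj v x}).ConnectedComponent)
    (hc : IsTreeComponent _ c) :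
    ∃ y₁ y₂ x₁ x₂ : V, y₁ ≠ y₂ ∧ G.Adj v y₁ ∧ G.Adj v y₂ ∧
      x₁ ∈ Subtype.val '' c.supp ∧ x₂ ∈ Subtype.val '' c.supp ∧
      G.Adj y₁ x₁ ∧ G.Adj y₂ x₂ := by
  classical
  set X : Set V := Subtype.val '' c.supp with hX
  obtain ⟨x₀, hx₀⟩ := c.exists_rep
  have hx₀supp : x₀ ∈ c.supp := by rw [SimpleGraph.ConnectedComponent.mem_supp_iff]; exact hx₀
  have hXne : X.Nonempty := ⟨x₀.1, ⟨x₀, hx₀supp, rfl⟩⟩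
  have hF : ∀ z : X, ∃ a : c.supp, (a.1 : V) = z.1 := by
    rintro ⟨z, a, ha, rfl⟩
    exact ⟨⟨a, ha⟩, rfl⟩
  have hNF : NearForest (G.induce X) := by
    refine Or.inr ⟨⟨x₀.1, ⟨x₀, hx₀supp, rfl⟩⟩, ?_⟩
    refine aux_isAcyclic_of_injective_hom
      (H' := (G.induce {x | x ≠ v ∧ ¬G.Adj v x}).induce c.supp)
      ⟨fun z => (hF z.1).choose, ?_⟩ ?_ hc.IsAcyclic
    · intro z z' hzz
      have h1 : ((hF z.1).choose.1 : V) = (z.1 : V) := (hF z.1).choose_spec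
      have h2 : ((hF z'.1).choose.1 : V) = (z'.1 : V) := (hF z'.1).choose_spec
      have hGz : G.Adj (z.1 : V) (z'.1 : V) := hzz
      simp only [comap_adj, Function.Embedding.coe_subtype]
      rw [h1, h2]
      exact hGz
    · intro z z' hzz
      have h1 : ((hF z.1).choose.1 : V) = (z.1 : V) := (hF z.1).choose_spec
      have h2 : ((hF z'.1).choose.1 : V) = (z'.1 : V) := (hF z'.1).choose_spec
      have hvv : ((hF z.1).choose.1 : V) = ((hF z'.1).choose.1 : V) :=
        congrArg (fun w : c.supp => ((w : {x | x ≠ v ∧ ¬G.Adj v x}) : V)) hzz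
      rw [h1, h2] at hvv
      ext1
      exact Subtype.ext hvv
  have h2le := hred X hXne hNF
  obtain ⟨y₁, hy₁, y₂, hy₂, hne⟩ :=
    (Set.one_lt_ncard (Set.toFinite _)).1 (lt_of_lt_of_le one_lt_two h2le)
  have hnbr : ∀ y, y ∈ {y | y ∉ X ∧ ∃ x ∈ X, G.Adj x y} → G.Adj v y ∧ ∃ x ∈ X, G.Adj y x := by
    rintro y ⟨hyX, x, hxX, hxy⟩
    refine ⟨?_, x, hxX, hxy.symm⟩
    obtain ⟨a, ha, rfl⟩ := hxX
    have haR : (a : V) ∈ {x | x ≠ v ∧ ¬G.Adj v x} := a.2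
    by_cases hyv : y = v
    · exact absurd (hyv ▸ hxy.symm) haR.2
    by_cases hyadj : G.Adj v y
    · exact hyadj
    · exfalso
      have hyR : y ∈ {x | x ≠ v ∧ ¬G.Adj v x} := ⟨hyv, hyadj⟩
      have hadjK : (G.induce {x | x ≠ v ∧ ¬G.Adj v x}).Adj a ⟨y, hyR⟩ := by
        simp only [comap_adj, Function.Embedding.coe_subtype]
        exact hxy
      have : (⟨y, hyR⟩ : {x | x ≠ v ∧ ¬G.Adj v x}) ∈ c.supp := by
        rw [SimpleGraph.ConnectedComponent.mem_supp_iff]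
        rw [← (SimpleGraph.ConnectedComponent.mem_supp_iff c a).1 ha]
        exact SimpleGraph.ConnectedComponent.sound hadjK.symm.reachable
      exact hyX ⟨⟨y, hyR⟩, this, rfl⟩
  obtain ⟨hvy₁, x₁, hx₁, hyx₁⟩ := hnbr y₁ hy₁
  obtain ⟨hvy₂, x₂, hx₂, hyx₂⟩ := hnbr y₂ hy₂
  exact ⟨y₁, y₂, x₁, x₂, hne, hvy₁, hvy₂, hx₁, hx₂, hyx₁, hyx₂⟩

/-- Bool-indexed version of `aux_tree_comp_two_nbrs`, convenient for choice. -/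
lemma aux_tree_comp_two_nbrs' {V : Type*} [Fintype V] (G : SimpleGraph V)
    (hred : Reduced G) (v : V)
    (c : (G.induce {x | x ≠ v ∧ ¬G.Adj v x}).ConnectedComponent)
    (hc : IsTreeComponent _ c) :
    ∃ g : Bool → V × V, (g true).1 ≠ (g false).1 ∧
      ∀ b, G.Adj v (g b).1 ∧ (g b).2 ∈ Subtype.val '' c.supp ∧ G.Adj (g b).1 (g b).2 := by
  obtain ⟨y₁, y₂, x₁, x₂, hne, h1, h2, h3, h4, h5, h6⟩ := aux_tree_comp_two_nbrs G hred v c hc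
  refine ⟨fun b => cond b (y₁, x₁) (y₂, x₂), hne, fun b => ?_⟩
  cases b
  · exact ⟨h2, h4, h6⟩
  · exact ⟨h1, h3, h5⟩

end AuxLemmas

/-- Branching bounds (Lemma `base-branch`): for a connected reduced graph `G`, a vertex
`v` and a good sliceVal `f(m,n) = ρm + σn`, with `G_out = G − v` and
`G_in = TR(G − v − Γ(v))`, we have `f(G) − f(G_out) = ρ·deg(v) + σ` and
`f(G) − f(G_in) ≥ ρ·⌈(d²(v) + deg(v) + |S|)/2⌉ + σ·(1 + deg(v))`. -/
theorem stmt_10 {V : Type*} [Fintype V] (G : SimpleGraph V) [DecidableRel G.Adj]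
    (hconn : G.Connected) (hred : Reduced G) (v : V)
    (ρ σ : ℝ) (hρ : 0 ≤ ρ) (hρσ : 0 ≤ ρ + σ) (hne : ¬(ρ = 0 ∧ σ = 0)) :
    sliceVal ρ σ G - sliceVal ρ σ (G.induce {x | x ≠ v}) = ρ * (G.degree v : ℝ) + σ ∧
    sliceVal ρ σ G - sliceVal ρ σ (TR (G.induce {x | x ≠ v ∧ ¬G.Adj v x})) ≥
      ρ * (⌈(((∑ w ∈ G.neighborFinset v, G.degree w : ℕ) : ℝ) + (G.degree v : ℝ) +
              ((Sdec G v).ncard : ℝ)) / 2⌉ : ℝ) +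
      σ * (1 + (G.degree v : ℝ)) := by
  classical
  -- common notation
  set E : Finset (Sym2 V) := G.edgeFinset with hE
  set N : Finset V := G.neighborFinset v with hN
  set d : ℕ := G.degree v with hd
  have hm : Nat.card G.edgeSet = E.card := by
    rw [Nat.card_eq_fintype_card, hE, SimpleGraph.edgeFinset_card]
  have hnV : Nat.card V = Fintype.card V := Nat.card_eq_fintype_card
  constructor
  · -- Part 1
    have hsub : {e ∈ G.edgeSet | ∀ x ∈ e, x ∈ {x : V | x ≠ v}}
        = ↑(E.filter (fun e => ¬ v ∈ e)) := by
      ext e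
      simp only [Set.mem_setOf_eq, Finset.coe_filter, Finset.mem_filter, hE,
        SimpleGraph.mem_edgeFinset]
      constructor
      · rintro ⟨he, hall⟩; exact ⟨he, fun hv => hall v hv rfl⟩
      · rintro ⟨he, hv⟩; exact ⟨he, fun x hx hxv => hv (hxv ▸ hx)⟩
    have hmout : Nat.card (G.induce {x : V | x ≠ v}).edgeSet
        = (E.filter (fun e => ¬ v ∈ e)).card := by
      rw [aux_card_edgeSet_induce, hsub, Set.ncard_coe_finset]
    have hP0 : (E.filter (fun e => v ∈ e)).card = d := by
      rw [hE, hd, ← SimpleGraph.incidenceFinset_eq_filter,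
        SimpleGraph.card_incidenceFinset_eq_degree]
    have hsplit := Finset.card_filter_add_card_filter_not (s := E) (p := fun e => v ∈ e)
    have A1 : Nat.card G.edgeSet = Nat.card (G.induce {x : V | x ≠ v}).edgeSet + d := by
      omega
    have A2 : Nat.card V = Nat.card {x : V | x ≠ v} + 1 := by
      have hcompl : ({v}ᶜ : Set V) = {x : V | x ≠ v} := by ext x; simp
      have := Set.ncard_add_ncard_compl ({v} : Set V)
      rw [hcompl, Set.ncard_singleton] at this
      rw [← this, Nat.card_coe_set_eq]
      omega
    simp only [sliceVal]
    have A1R : ((Nat.card G.edgeSet : ℕ) : ℝ)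
        = (Nat.card (G.induce {x : V | x ≠ v}).edgeSet : ℝ) + (d : ℝ) := by exact_mod_cast A1
    have A2R : ((Nat.card V : ℕ) : ℝ) = (Nat.card {x : V | x ≠ v} : ℝ) + 1 := by
      exact_mod_cast A2
    rw [A1R, A2R]
    ring
  · -- Part 2
    set R : Set V := {x | x ≠ v ∧ ¬G.Adj v x} with hR
    set K : SimpleGraph R := G.induce R with hK
    haveI instCC : Fintype K.ConnectedComponent :=
      Fintype.ofSurjective (Quot.mk _) Quot.mk_surjective
    set TC : Finset K.ConnectedComponent := univ.filter (fun c => IsTreeComponent K c) with hTC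
    set fib : K.ConnectedComponent → ℕ :=
      fun c => {e ∈ K.edgeSet | ∀ x ∈ e, x ∈ c.supp}.ncard with hfib
    set t : ℕ := ∑ c ∈ TC, c.supp.ncard with ht
    -- edge decomposition of K by components
    have hKedges : Nat.card K.edgeSet = ∑ c ∈ univ, fib c := by
      calc Nat.card K.edgeSet = K.edgeSet.ncard := Nat.card_coe_set_eq _
        _ = {e ∈ K.edgeSet | ∀ x ∈ e, (fun _ => True) (K.connectedComponentMk x)}.ncard := by
            congr 1; ext e; simp
        _ = ∑ c ∈ univ.filter (fun _ => True), fib c := aux_edge_comp K (fun _ => True)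
        _ = ∑ c ∈ univ, fib c := by rw [Finset.filter_true]
    have hmin : Nat.card (TR K).edgeSet
        = ∑ c ∈ univ.filter (fun c => ¬ IsTreeComponent K c), fib c := by
      have h0 : TR K = K.induce {x : R | ¬ IsTreeComponent K (K.connectedComponentMk x)} := rfl
      rw [h0, aux_card_edgeSet_induce]
      have h1 : {e ∈ K.edgeSet |
            ∀ x ∈ e, x ∈ {x : R | ¬ IsTreeComponent K (K.connectedComponentMk x)}}
          = {e ∈ K.edgeSet |
            ∀ x ∈ e, (fun c => ¬ IsTreeComponent K c) (K.connectedComponentMk x)} := by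
        congr 1
      rw [h1]
      exact aux_edge_comp K (fun c => ¬ IsTreeComponent K c)
    have htreefib : ∑ c ∈ TC, fib c + TC.card = t := by
      rw [ht, Finset.card_eq_sum_ones TC, ← Finset.sum_add_distrib]
      exact Finset.sum_congr rfl fun c hc =>
        aux_tree_comp_card K c (by simpa [hTC] using (Finset.mem_filter.1 hc).2)
    have hsumsplit : ∑ c ∈ univ, fib c
        = ∑ c ∈ TC, fib c + ∑ c ∈ univ.filter (fun c => ¬ IsTreeComponent K c), fib c := by
      rw [hTC]
      exact (Finset.sum_filter_add_sum_filter_not univ _ fib).symm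
    have hmK : Nat.card K.edgeSet + TC.card = Nat.card (TR K).edgeSet + t := by omega
    -- vertex decomposition by components
    have hnW : Nat.card R = ∑ c ∈ (univ : Finset K.ConnectedComponent), c.supp.ncard := by
      have h1 := aux_vertex_comp K (fun _ => True)
      rw [Finset.filter_true] at h1
      rw [← h1]
      exact Nat.card_congr (Equiv.subtypeUnivEquiv fun x => trivial).symm
    have hnin : (Nat.card {x : R // ¬ IsTreeComponent K (K.connectedComponentMk x)})
        = ∑ c ∈ univ.filter (fun c => ¬ IsTreeComponent K c), c.supp.ncard :=
      aux_vertex_comp K (fun c => ¬ IsTreeComponent K c)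
    have hvsplit : ∑ c ∈ (univ : Finset K.ConnectedComponent), c.supp.ncard
        = ∑ c ∈ TC, c.supp.ncard
          + ∑ c ∈ univ.filter (fun c => ¬ IsTreeComponent K c), c.supp.ncard := by
      rw [hTC]
      exact (Finset.sum_filter_add_sum_filter_not univ _ _).symm
    have hnsplit : Nat.card R
        = t + Nat.card {x : R // ¬ IsTreeComponent K (K.connectedComponentMk x)} := by omega
    have hnR : Nat.card R + d + 1 = Nat.card V := by
      have hvN : v ∉ (↑N : Set V) := by
        simp [hN, SimpleGraph.mem_neighborFinset]
      have hRc : R = (insert v (↑N : Set V))ᶜ := by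
        ext x
        simp only [hR, hN, Set.mem_setOf_eq, Set.mem_compl_iff, Set.mem_insert_iff,
          Finset.mem_coe, SimpleGraph.mem_neighborFinset, not_or]
      have hcard := Set.ncard_add_ncard_compl (insert v (↑N : Set V))
      rw [Set.ncard_insert_of_notMem hvN, Set.ncard_coe_finset] at hcard
      have hNd : N.card = d := by rw [hN, hd]; rfl
      rw [← hRc] at hcard
      rw [Nat.card_coe_set_eq]
      omega
    -- partition of the edges of G
    set P0 : Finset (Sym2 V) := E.filter (fun e => v ∈ e) with hP0
    set E1 : Finset (Sym2 V) := E.filter (fun e => ¬ v ∈ e) with hE1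
    set P2 : Finset (Sym2 V) := E1.filter (fun e => ∀ x ∈ e, G.Adj v x) with hP2
    set E2 : Finset (Sym2 V) := E1.filter (fun e => ¬ ∀ x ∈ e, G.Adj v x) with hE2
    set P3 : Finset (Sym2 V) := E2.filter (fun e => ∀ x ∈ e, x ∈ R) with hP3
    set P1 : Finset (Sym2 V) := E2.filter (fun e => ¬ ∀ x ∈ e, x ∈ R) with hP1
    have hc0 : P0.card + E1.card = E.card :=
      Finset.card_filter_add_card_filter_not _
    have hc1 : P2.card + E2.card = E1.card :=
      Finset.card_filter_add_card_filter_not _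
    have hc2 : P3.card + P1.card = E2.card :=
      Finset.card_filter_add_card_filter_not _
    have hP0card : P0.card = d := by
      rw [hP0, hE, hd, ← SimpleGraph.incidenceFinset_eq_filter,
        SimpleGraph.card_incidenceFinset_eq_degree]
    -- membership characterizations
    have hP3mem : ∀ e, e ∈ P3 ↔ e ∈ E ∧ ∀ x ∈ e, x ∈ R := by
      intro e
      simp only [hP3, hE2, hE1, Finset.mem_filter]
      constructor
      · rintro ⟨⟨⟨he, -⟩, -⟩, h3⟩
        exact ⟨he, h3⟩
      · rintro ⟨he, h3⟩
        have hadj : G.Adj e.out.1 e.out.2 := by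
          rw [hE, SimpleGraph.mem_edgeFinset] at he
          have := he
          rw [← e.out_eq] at this
          exact this
        have h1 : e.out.1 ∈ R := h3 _ (Sym2.out_fst_mem e)
        refine ⟨⟨⟨he, fun hv => ?_⟩, fun hall => ?_⟩, h3⟩
        · exact (h3 v hv).1 rfl
        · exact h1.2 (hall _ (Sym2.out_fst_mem e))
    have hP1mem : ∀ e, e ∈ P1 ↔ ∃ p q : V, G.Adj p q ∧ e = s(p,q) ∧ G.Adj v p ∧ q ∈ R := by
      intro e
      simp only [hP1, hE2, hE1, Finset.mem_filter, hE, SimpleGraph.mem_edgeFinset]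
      constructor
      · rintro ⟨⟨⟨he, hv0⟩, hv2⟩, hv3⟩
        induction e with
        | _ x y =>
          have hadj : G.Adj x y := he
          have hxv : x ≠ v := fun h => hv0 (by simp [h])
          have hyv : y ≠ v := fun h => hv0 (by simp [h])
          by_cases hax : G.Adj v x <;> by_cases hay : G.Adj v y
          · exact absurd (fun z hz => by
              rcases Sym2.mem_iff.1 hz with rfl | rfl
              exacts [hax, hay]) hv2
          · exact ⟨x, y, hadj, rfl, hax, ⟨hyv, hay⟩⟩
          · exact ⟨y, x, hadj.symm, Sym2.eq_swap.symm, hay, ⟨hxv, hax⟩⟩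
          · exact absurd (fun z hz => by
              rcases Sym2.mem_iff.1 hz with rfl | rfl
              exacts [⟨hxv, hax⟩, ⟨hyv, hay⟩]) hv3
      · rintro ⟨p, q, hadj, rfl, hvp, hqR⟩
        refine ⟨⟨⟨hadj, fun hv => ?_⟩, fun hall => ?_⟩, fun hall => ?_⟩
        · rcases Sym2.mem_iff.1 hv with rfl | rfl
          · exact G.irrefl hvp
          · exact hqR.1 rfl
        · exact hqR.2 (hall q (Sym2.mem_mk_right p q))
        · exact (hall p (Sym2.mem_mk_left p q)).2 hvp
    have hP3card : P3.card = Nat.card K.edgeSet := by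
      rw [hK, aux_card_edgeSet_induce G R]
      have : {e ∈ G.edgeSet | ∀ x ∈ e, x ∈ R} = ↑P3 := by
        ext e
        simp only [Set.mem_setOf_eq, Finset.mem_coe, hP3mem, hE, SimpleGraph.mem_edgeFinset]
      rw [this, Set.ncard_coe_finset]
    -- the degree sum
    set D : ℕ := ∑ w ∈ N, G.degree w with hD
    set cnt : Sym2 V → ℕ := fun e => (N.filter (· ∈ e)).card with hcnt
    have hDsum : D = ∑ e ∈ E, cnt e := by
      have hdegw : ∀ w : V, G.degree w = (E.filter (fun e => w ∈ e)).card := fun w => by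
        rw [hE, ← SimpleGraph.incidenceFinset_eq_filter,
          SimpleGraph.card_incidenceFinset_eq_degree]
      calc D = ∑ w ∈ N, ∑ e ∈ E, if w ∈ e then 1 else 0 := by
            rw [hD]
            refine Finset.sum_congr rfl fun w _ => ?_
            rw [hdegw w, Finset.card_filter]
        _ = ∑ e ∈ E, ∑ w ∈ N, if w ∈ e then 1 else 0 := Finset.sum_comm
        _ = ∑ e ∈ E, cnt e := by
            refine Finset.sum_congr rfl fun e _ => ?_
            simp only [hcnt]
            rw [Finset.card_filter]
    have hcnt0 : ∀ e ∈ P0, cnt e = 1 := by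
      intro e he
      rw [hP0, Finset.mem_filter, hE, SimpleGraph.mem_edgeFinset] at he
      obtain ⟨he, hv⟩ := he
      induction e with
      | _ x y =>
        have hadj : G.Adj x y := he
        simp only [hcnt]
        rw [aux_filter_pair N x y hadj.ne]
        rcases Sym2.mem_iff.1 hv with rfl | rfl
        · simp [hN, SimpleGraph.mem_neighborFinset, hadj, G.irrefl]
        · simp [hN, SimpleGraph.mem_neighborFinset, hadj.symm, G.irrefl]
    have hcnt2 : ∀ e ∈ P2, cnt e = 2 := by
      intro e he
      rw [hP2, Finset.mem_filter, hE1, Finset.mem_filter, hE,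
        SimpleGraph.mem_edgeFinset] at he
      obtain ⟨⟨he, -⟩, hall⟩ := he
      induction e with
      | _ x y =>
        have hadj : G.Adj x y := he
        have hx : G.Adj v x := hall x (Sym2.mem_mk_left x y)
        have hy : G.Adj v y := hall y (Sym2.mem_mk_right x y)
        simp only [hcnt]
        rw [aux_filter_pair N x y hadj.ne]
        simp [hN, SimpleGraph.mem_neighborFinset, hx, hy]
    have hcnt1 : ∀ e ∈ P1, cnt e = 1 := by
      intro e he
      obtain ⟨p, q, hadj, rfl, hvp, hqR⟩ := (hP1mem e).1 he
      simp only [hcnt]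
      rw [aux_filter_pair N p q hadj.ne]
      simp [hN, SimpleGraph.mem_neighborFinset, hvp, hqR.2]
    have hcnt3 : ∀ e ∈ P3, cnt e = 0 := by
      intro e he
      obtain ⟨he, hall⟩ := (hP3mem e).1 he
      simp only [hcnt]
      rw [Finset.card_eq_zero, Finset.filter_eq_empty_iff]
      intro w hw
      intro hwe
      exact (hall w hwe).2 (by rwa [hN, SimpleGraph.mem_neighborFinset] at hw)
    have hDval : D = P0.card + 2 * P2.card + P1.card := by
      have hs0 : ∑ e ∈ E, cnt e = ∑ e ∈ P0, cnt e + ∑ e ∈ E1, cnt e := by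
        rw [hP0, hE1]; exact (Finset.sum_filter_add_sum_filter_not E _ cnt).symm
      have hs1 : ∑ e ∈ E1, cnt e = ∑ e ∈ P2, cnt e + ∑ e ∈ E2, cnt e := by
        rw [hP2, hE2]; exact (Finset.sum_filter_add_sum_filter_not E1 _ cnt).symm
      have hs2 : ∑ e ∈ E2, cnt e = ∑ e ∈ P3, cnt e + ∑ e ∈ P1, cnt e := by
        rw [hP3, hP1]; exact (Finset.sum_filter_add_sum_filter_not E2 _ cnt).symm
      have hv0 : ∑ e ∈ P0, cnt e = P0.card := by
        rw [Finset.card_eq_sum_ones]; exact Finset.sum_congr rfl hcnt0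
      have hv2 : ∑ e ∈ P2, cnt e = 2 * P2.card := by
        calc ∑ e ∈ P2, cnt e = ∑ _e ∈ P2, 2 := Finset.sum_congr rfl hcnt2
          _ = 2 * P2.card := by rw [Finset.sum_const, smul_eq_mul, mul_comm]
      have hv1 : ∑ e ∈ P1, cnt e = P1.card := by
        rw [Finset.card_eq_sum_ones]; exact Finset.sum_congr rfl hcnt1
      have hv3 : ∑ e ∈ P3, cnt e = 0 := Finset.sum_eq_zero hcnt3
      omega
    -- the S-bound via an injection into P1
    have hSmem : ∀ y : V, y ∈ Sdec G v → y ∈ R ∧ (∃ w, G.Adj v w ∧ G.Adj w y) ∧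
        ∀ h : y ∈ R, ¬ IsTreeComponent K (K.connectedComponentMk ⟨y, h⟩) := by
      rintro y ⟨hy, hw, hnt⟩
      exact ⟨hy, hw, fun _ => hnt⟩
    have hSchoice : ∀ y : (Sdec G v), ∃ w : V, G.Adj v w ∧ G.Adj w y.1 :=
      fun y => (hSmem y.1 y.2).2.1
    have hTchoice : ∀ c : TC, ∃ g : Bool → V × V, (g true).1 ≠ (g false).1 ∧
        ∀ b, G.Adj v (g b).1 ∧ (g b).2 ∈ Subtype.val '' (c.1.supp) ∧ G.Adj (g b).1 (g b).2 := by
      intro c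
      exact aux_tree_comp_two_nbrs' G hred v c.1 (Finset.mem_filter.1 c.2).2
    set gS : (Sdec G v) → V := fun y => (hSchoice y).choose with hgS
    have hgSspec : ∀ y, G.Adj v (gS y) ∧ G.Adj (gS y) y.1 := fun y => (hSchoice y).choose_spec
    set gT : TC → Bool → V × V := fun c => (hTchoice c).choose with hgT
    have hgTne : ∀ c, (gT c true).1 ≠ (gT c false).1 := fun c => (hTchoice c).choose_spec.1
    have hgTspec : ∀ c b, G.Adj v (gT c b).1 ∧ (gT c b).2 ∈ Subtype.val '' (c.1.supp)
        ∧ G.Adj (gT c b).1 (gT c b).2 := fun c => (hTchoice c).choose_spec.2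
    have hgTR : ∀ c b, (gT c b).2 ∈ R := by
      intro c b
      obtain ⟨a, -, ha⟩ := (hgTspec c b).2.1
      exact ha ▸ a.2
    have hPmemS : ∀ y : (Sdec G v), s(gS y, y.1) ∈ P1 := fun y =>
      (hP1mem _).2 ⟨gS y, y.1, (hgSspec y).2, rfl, (hgSspec y).1, (hSmem y.1 y.2).1⟩
    have hPmemT : ∀ (c : TC) (b : Bool), s((gT c b).1, (gT c b).2) ∈ P1 := fun c b =>
      (hP1mem _).2 ⟨_, _, (hgTspec c b).2.2, rfl, (hgTspec c b).1, hgTR c b⟩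
    have hkey : ∀ p q p' q' : V, G.Adj v p → q ∈ R → G.Adj v p' → q' ∈ R →
        s(p,q) = s(p',q') → p = p' ∧ q = q' := by
      intro p q p' q' hp hq hp' hq' heq
      rcases Sym2.eq_iff.1 heq with ⟨rfl, rfl⟩ | ⟨h1, h2⟩
      · exact ⟨rfl, rfl⟩
      · exfalso
        subst h1
        exact hq'.2 hp
    have hmkimg : ∀ (c : K.ConnectedComponent) (q : V) (hq : q ∈ R),
        q ∈ Subtype.val '' c.supp → K.connectedComponentMk ⟨q, hq⟩ = c := by
      rintro c q hq ⟨a, ha, rfl⟩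
      have h : (⟨(a : V), hq⟩ : R) = a := Subtype.ext rfl
      rw [h]
      exact (SimpleGraph.ConnectedComponent.mem_supp_iff _ _).1 ha
    set F : ((Sdec G v) ⊕ (TC × Bool)) → {e // e ∈ P1} :=
      Sum.elim (fun y => ⟨s(gS y, y.1), hPmemS y⟩)
        (fun cb => ⟨s((gT cb.1 cb.2).1, (gT cb.1 cb.2).2), hPmemT cb.1 cb.2⟩) with hF
    have hFinj : Function.Injective F := by
      intro z z' hzz
      rcases z with y | ⟨c, b⟩ <;> rcases z' with y' | ⟨c', b'⟩ <;>
        simp only [hF, Sum.elim_inl, Sum.elim_inr, Subtype.mk_eq_mk] at hzz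
      · obtain ⟨-, h2⟩ := hkey _ _ _ _ (hgSspec y).1 (hSmem y.1 y.2).1
          (hgSspec y').1 (hSmem y'.1 y'.2).1 hzz
        exact congrArg Sum.inl (Subtype.ext h2)
      · exfalso
        obtain ⟨-, h2⟩ := hkey _ _ _ _ (hgSspec y).1 (hSmem y.1 y.2).1
          (hgTspec c' b').1 (hgTR c' b') hzz
        have himg : y.1 ∈ Subtype.val '' c'.1.supp := h2 ▸ (hgTspec c' b').2.1
        have hyR := (hSmem y.1 y.2).1
        have hmk := hmkimg c'.1 y.1 hyR himg
        have htree : IsTreeComponent K c'.1 := (Finset.mem_filter.1 c'.2).2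
        exact ((hSmem y.1 y.2).2.2 hyR) (hmk ▸ htree)
      · exfalso
        obtain ⟨-, h2⟩ := hkey _ _ _ _ (hgTspec c b).1 (hgTR c b)
          (hgSspec y').1 (hSmem y'.1 y'.2).1 hzz
        have himg : y'.1 ∈ Subtype.val '' c.1.supp := h2 ▸ (hgTspec c b).2.1
        have hyR := (hSmem y'.1 y'.2).1
        have hmk := hmkimg c.1 y'.1 hyR himg
        have htree : IsTreeComponent K c.1 := (Finset.mem_filter.1 c.2).2
        exact ((hSmem y'.1 y'.2).2.2 hyR) (hmk ▸ htree)
      · obtain ⟨h1, h2⟩ := hkey _ _ _ _ (hgTspec c b).1 (hgTR c b)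
          (hgTspec c' b').1 (hgTR c' b') hzz
        have e1 : K.connectedComponentMk ⟨(gT c b).2, hgTR c b⟩ = c.1 :=
          hmkimg c.1 _ _ (hgTspec c b).2.1
        have e2 : K.connectedComponentMk ⟨(gT c' b').2, hgTR c' b'⟩ = c'.1 :=
          hmkimg c'.1 _ _ (hgTspec c' b').2.1
        have hcc : c.1 = c'.1 := by
          rw [← e1, ← e2]
          congr 1
          exact Subtype.ext h2
        have hc : c = c' := Subtype.ext hcc
        subst hc
        have hb : b = b' := by
          by_contra hbb
          cases b <;> cases b'
          · exact hbb rfl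
          · exact hgTne c (h1.symm)
          · exact hgTne c h1
          · exact hbb rfl
        subst hb
        rfl
    have hcardDom : Fintype.card ((Sdec G v) ⊕ (TC × Bool))
        = (Sdec G v).ncard + 2 * TC.card := by
      rw [Fintype.card_sum, Fintype.card_prod, Fintype.card_bool, Fintype.card_coe]
      have hS : Fintype.card (Sdec G v) = (Sdec G v).ncard := by
        rw [← Set.toFinset_card, ← Set.ncard_eq_toFinset_card']
      omega
    have h7 : (Sdec G v).ncard + 2 * TC.card ≤ P1.card := by
      have hle := Fintype.card_le_of_injective F hFinj
      rwa [hcardDom, Fintype.card_coe] at hle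
    -- final arithmetic
    set k : ℕ := D + d + (Sdec G v).ncard with hk
    set z : ℕ := (k + k % 2) / 2 with hzdef
    have hz2 : 2 * z = k + k % 2 := by omega
    have h7' : (Sdec G v).ncard + 2 * TC.card + k % 2 ≤ P1.card := by omega
    have hmnat : Nat.card G.edgeSet + TC.card
        = Nat.card (TR K).edgeSet + d + P2.card + P1.card + t := by omega
    have hnnat : Nat.card V
        = Nat.card {x : R // ¬ IsTreeComponent K (K.connectedComponentMk x)} + 1 + d + t := by
      omega
    have hceil : ((⌈((D : ℝ) + (d : ℝ) + ((Sdec G v).ncard : ℝ)) / 2⌉ : ℤ) : ℝ) ≤ (z : ℝ) := by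
      have h1 : ((D : ℝ) + (d : ℝ) + ((Sdec G v).ncard : ℝ)) = (k : ℝ) := by
        rw [hk]; push_cast; ring
      rw [h1]
      have hkz : (k : ℝ) ≤ 2 * (z : ℝ) := by
        have : k ≤ 2 * z := by omega
        exact_mod_cast this
      have h2 : ((k : ℝ) / 2) ≤ ((z : ℤ) : ℝ) := by push_cast; linarith
      calc ((⌈(k : ℝ) / 2⌉ : ℤ) : ℝ) ≤ ((z : ℤ) : ℝ) := by exact_mod_cast Int.ceil_le.2 h2
        _ = (z : ℝ) := by push_cast; ring
    have hmR : (Nat.card G.edgeSet : ℝ)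
        = (Nat.card (TR K).edgeSet : ℝ) + d + P2.card + P1.card + t - TC.card := by
      have h := congrArg (fun n : ℕ => (n : ℝ)) hmnat
      push_cast at h
      linarith
    have hnRe : (Nat.card V : ℝ)
        = (Nat.card {x : R // ¬ IsTreeComponent K (K.connectedComponentMk x)} : ℝ)
          + 1 + d + t := by
      exact_mod_cast hnnat
    have hzle : (z : ℝ) ≤ (d : ℝ) + P2.card + P1.card - TC.card := by
      have h1 : 2 * z + 2 * TC.card ≤ 2 * d + 2 * P2.card + 2 * P1.card := by omega
      have h2 : 2 * (z : ℝ) + 2 * (TC.card : ℝ)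
          ≤ 2 * (d : ℝ) + 2 * (P2.card : ℝ) + 2 * (P1.card : ℝ) := by exact_mod_cast h1
      linarith
    simp only [sliceVal]
    rw [hmR, hnRe]
    have e1 : ρ * ((⌈((D : ℝ) + (d : ℝ) + ((Sdec G v).ncard : ℝ)) / 2⌉ : ℤ) : ℝ)
        ≤ ρ * (z : ℝ) := mul_le_mul_of_nonneg_left hceil hρ
    have e2 : ρ * (z : ℝ) ≤ ρ * ((d : ℝ) + P2.card + P1.card - TC.card) :=
      mul_le_mul_of_nonneg_left hzle hρ
    have e3 : 0 ≤ (ρ + σ) * (t : ℝ) := mul_nonneg hρσ (Nat.cast_nonneg t)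
    have e4 : (0:ℝ) ≤ ρ * (t : ℝ) := mul_nonneg hρ (Nat.cast_nonneg t)
    nlinarith [e1, e2, e3, e4]
end

section
/- Let G be a connected reduced bipartite graph, v ∈ V(G), and f(m,n) = ρm + σn a good slice with σ < 0. Let G_in = TR(G − v − Γ(v)), and let S be as in the standard decomposition of G from v. Then f(G) − f(G_in) ≥ ρ·d²(v) + σ·⌊(d²(v) + deg(v) + 2 − |S|)/2⌋. -/
open Finset SimpleGraph

private lemma hsk {α : Type*} [Fintype α] (K : SimpleGraph α) [DecidableRel K.Adj] :
    ∑ x : α, #(univ.filter (K.Adj x)) = 2 * Nat.card K.edgeSet := by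
  rw [Nat.card_eq_fintype_card, ← edgeFinset_card, ← K.sum_degrees_eq_twice_card_edges]
  exact Finset.sum_congr rfl fun x _ => by rw [← neighborFinset_eq_filter]; rfl

private lemma cfi {α : Type*} [Fintype α] (K : SimpleGraph α) [DecidableRel K.Adj]
    (s : Set α) [DecidablePred (· ∈ s)] [DecidableRel (K.induce s).Adj] (x : ↥s) :
    #(univ.filter ((K.induce s).Adj x)) = #((univ.filter (· ∈ s)).filter (fun y => K.Adj ↑x y)) := by
  refine card_bij' (fun y _ => (y : α)) (fun y hy => ⟨y, by simp at hy; exact hy.1⟩) ?_ ?_ ?_ ?_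
  · intro y hy; simp at hy ⊢; exact hy
  · intro y hy; simp at hy ⊢; exact hy.2
  · intro y hy; rfl
  · intro y hy; rfl

private lemma closed_hsk {α : Type*} [Fintype α] (K : SimpleGraph α) [DecidableRel K.Adj]
    (s : Set α) [DecidablePred (· ∈ s)] [DecidableRel (K.induce s).Adj]
    (hcl : ∀ ⦃x⦄, x ∈ s → ∀ ⦃y⦄, K.Adj x y → y ∈ s) :
    ∑ x ∈ univ.filter (· ∈ s), #(univ.filter (K.Adj x)) = 2 * Nat.card (K.induce s).edgeSet := by
  classical
  rw [← hsk (K.induce s)]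
  rw [Finset.sum_subtype (p := (· ∈ s)) (univ.filter (· ∈ s)) (by simp) (fun x => #(univ.filter (K.Adj x)))]
  refine Finset.sum_congr rfl fun x _ => ?_
  rw [cfi K s x]
  congr 1
  ext y
  simp only [mem_filter, mem_univ, true_and]
  exact ⟨fun h => ⟨hcl x.2 h, h⟩, fun h => h.2⟩

private lemma acyclic_of_hom_s11 {α β : Type*} {K1 : SimpleGraph α} {K2 : SimpleGraph β}
    (f : α → β) (hinj : Function.Injective f)
    (hom : ∀ ⦃a b⦄, K1.Adj a b → K2.Adj (f a) (f b)) (h : K2.IsAcyclic) : K1.IsAcyclic := by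
  intro v c hc
  exact h ((c.map ⟨f, fun ha => hom ha⟩)) (hc.map hinj)

private lemma treecomp_hsk {α : Type*} [Fintype α] (K : SimpleGraph α) [DecidableRel K.Adj]
    (c : K.ConnectedComponent) (hc : IsTreeComponent K c) [DecidablePred (· ∈ c.supp)]
    [DecidableRel (K.induce c.supp).Adj] :
    ∑ x ∈ univ.filter (· ∈ c.supp), #(univ.filter (K.Adj x)) + 2
      = 2 * #(univ.filter (· ∈ c.supp)) := by
  classical
  have hcl : ∀ ⦃x⦄, x ∈ c.supp → ∀ ⦃y⦄, K.Adj x y → y ∈ c.supp := by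
    intro x hx y hxy
    rw [SimpleGraph.ConnectedComponent.mem_supp_iff] at hx ⊢
    rw [← hx]
    exact SimpleGraph.ConnectedComponent.connectedComponentMk_eq_of_adj hxy.symm
  rw [closed_hsk K c.supp hcl]
  have ht := hc.card_edgeFinset
  have h1 : Nat.card (K.induce c.supp).edgeSet = #(K.induce c.supp).edgeFinset := by
    rw [Nat.card_eq_fintype_card, edgeFinset_card]
  have h2 : Fintype.card c.supp = #(univ.filter (· ∈ c.supp)) := by
    rw [Fintype.card_subtype]
  omega

/-- Bipartite branching bound: for a connected reduced bipartite graph `G`, a vertex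
`v` and a good slice `f(m,n) = ρm + σn` with `σ < 0`, writing
`G_in = TR(G − v − Γ(v))` and `S` as in the standard decomposition,
`f(G) − f(G_in) ≥ ρ·d²(v) + σ·⌊(d²(v) + deg(v) + 2 − |S|)/2⌋`. -/
theorem stmt_11 {V : Type*} [Fintype V] (G : SimpleGraph V) [DecidableRel G.Adj]
    (hconn : G.Connected) (hred : Reduced G) (hbip : G.Colorable 2) (v : V)
    (ρ σ : ℝ) (hρ : 0 ≤ ρ) (hρσ : 0 ≤ ρ + σ) (hσ : σ < 0) :
    sliceVal ρ σ G - sliceVal ρ σ (TR (G.induce {x | x ≠ v ∧ ¬G.Adj v x})) ≥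
      ρ * ((∑ w ∈ G.neighborFinset v, G.degree w : ℕ) : ℝ) +
      σ * (⌊(((∑ w ∈ G.neighborFinset v, G.degree w : ℕ) : ℝ) + (G.degree v : ℝ) + 2 -
              ((Sdec G v).ncard : ℝ)) / 2⌋ : ℝ) := by
  classical
  set D : Set V := {x | x ≠ v ∧ ¬G.Adj v x} with hDdef
  set Gi : SimpleGraph ↥D := G.induce D with hGidef
  set N : Finset V := G.neighborFinset v with hNdef
  set Df : Finset V := univ.filter (· ∈ D) with hDfdef
  set d2 : ℕ := ∑ w ∈ N, G.degree w with hd2def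
  set mkD : ↥D → Gi.ConnectedComponent := Gi.connectedComponentMk with hmkDdef
  set tree : Gi.ConnectedComponent → Prop := IsTreeComponent Gi with htreedef
  set tc : Finset Gi.ConnectedComponent := univ.filter tree with htcdef
  set Tsub : Finset ↥D := univ.filter (fun x => tree (mkD x)) with hTsubdef
  set Psub : Finset ↥D := univ.filter (fun x => ¬ tree (mkD x)) with hPsubdef
  set PF : Finset (V × V) := (N ×ˢ Df).filter (fun p => G.Adj p.1 p.2) with hPFdef
  set s0 : ℕ := (Sdec G v).ncard with hs0def
  set degi : ↥D → ℕ := fun x => #(univ.filter (Gi.Adj x)) with hdegidef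
  -- basic membership facts
  have hvN : v ∉ N := by simp [hNdef]
  have hvD : v ∉ D := by simp [hDdef]
  have hND : ∀ w ∈ N, w ∉ D := by
    intro w hw
    simp only [hNdef, mem_neighborFinset] at hw
    simp [hDdef, hw]
  have htrich : ∀ x : V, x = v ∨ x ∈ N ∨ x ∈ D := by
    intro x
    by_cases h1 : x = v
    · exact Or.inl h1
    by_cases h2 : G.Adj v x
    · exact Or.inr (Or.inl (by simp [hNdef, h2]))
    · exact Or.inr (Or.inr ⟨h1, h2⟩)
  have hNindep : ∀ ⦃a b : V⦄, a ∈ N → b ∈ N → ¬ G.Adj a b := by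
    intro a b ha hb hab
    obtain ⟨C⟩ := hbip
    simp only [hNdef, mem_neighborFinset] at ha hb
    have h1 : C v ≠ C a := C.valid ha
    have h2 : C v ≠ C b := C.valid hb
    have h3 : C a ≠ C b := C.valid hab
    have := (C v).isLt; have := (C a).isLt; have := (C b).isLt
    omega
  have hDfD : ∀ x : V, x ∈ Df ↔ x ∈ D := by intro x; simp [hDfdef]
  -- partition of the vertex set
  have huniv : (univ : Finset V) = ({v} ∪ N) ∪ Df := by
    ext x
    simp only [mem_univ, mem_union, mem_singleton, true_iff]
    rcases htrich x with h | h | h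
    · exact Or.inl (Or.inl h)
    · exact Or.inl (Or.inr h)
    · exact Or.inr ((hDfD x).mpr h)
  have hd12 : Disjoint ({v} : Finset V) N := by simp [hvN]
  have hd3 : Disjoint ({v} ∪ N) Df := by
    rw [Finset.disjoint_left]
    intro a ha haD
    have haD' : a ∈ D := (hDfD a).mp haD
    rcases mem_union.mp ha with h | h
    · exact hvD (mem_singleton.mp h ▸ haD')
    · exact hND a h haD'
  have hcardV : Fintype.card V = 1 + #N + #Df := by
    rw [← Finset.card_univ, huniv, card_union_of_disjoint hd3,
      card_union_of_disjoint hd12, card_singleton]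
  -- degrees of vertices of N
  have hdegN : ∀ w ∈ N, G.degree w = 1 + #(Df.filter (fun y => G.Adj w y)) := by
    intro w hw
    have hwv : G.Adj w v := ((mem_neighborFinset _ _ _).mp (hNdef ▸ hw)).symm
    have hnb : G.neighborFinset w = insert v (Df.filter (fun y => G.Adj w y)) := by
      ext y
      simp only [mem_neighborFinset, mem_insert, mem_filter]
      constructor
      · intro hadj
        rcases htrich y with h | h | h
        · exact Or.inl h
        · exact absurd hadj (hNindep hw h)
        · exact Or.inr ⟨(hDfD y).mpr h, hadj⟩
      · rintro (rfl | ⟨hy, hadj⟩)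
        · exact hwv
        · exact hadj
    have hvnot : v ∉ Df.filter (fun y => G.Adj w y) := by
      intro h
      exact hvD ((hDfD v).mp (mem_filter.mp h).1)
    have : G.degree w = #(G.neighborFinset w) := rfl
    rw [this, hnb, card_insert_of_notMem hvnot]
    omega
  have hPFfst : #PF = ∑ w ∈ N, #(Df.filter (fun y => G.Adj w y)) := by
    rw [card_eq_sum_card_fiberwise (f := Prod.fst) (t := N)
      (fun p hp => (mem_product.mp (mem_filter.mp hp).1).1)]
    refine sum_congr rfl fun w hw => ?_
    refine card_nbij' (fun p => p.2) (fun y => (w, y)) ?_ ?_ ?_ ?_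
    · intro p hp
      simp only [Finset.mem_coe, mem_filter, hPFdef, mem_product] at hp
      obtain ⟨⟨⟨h1, h2⟩, h3⟩, h4⟩ := hp
      subst h4
      exact mem_filter.mpr ⟨h2, h3⟩
    · intro y hy
      simp only [Finset.mem_coe, mem_filter] at hy
      simp only [Finset.mem_coe, mem_filter, hPFdef, mem_product]
      exact ⟨⟨⟨hw, hy.1⟩, hy.2⟩, trivial⟩
    · intro p hp
      simp only [Finset.mem_coe, mem_filter, hPFdef, mem_product] at hp
      obtain ⟨p1, p2⟩ := p
      simp only at hp ⊢
      rw [hp.2]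
    · intro y hy
      rfl
  have hPFsnd : #PF = ∑ x ∈ Df, #(N.filter (fun y => G.Adj x y)) := by
    rw [card_eq_sum_card_fiberwise (f := Prod.snd) (t := Df)
      (fun p hp => (mem_product.mp (mem_filter.mp hp).1).2)]
    refine sum_congr rfl fun x hx => ?_
    refine card_nbij' (fun p => p.1) (fun y => (y, x)) ?_ ?_ ?_ ?_
    · intro p hp
      simp only [Finset.mem_coe, mem_filter, hPFdef, mem_product] at hp
      obtain ⟨⟨⟨h1, h2⟩, h3⟩, h4⟩ := hp
      subst h4
      exact mem_filter.mpr ⟨h1, h3.symm⟩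
    · intro y hy
      simp only [Finset.mem_coe, mem_filter] at hy
      simp only [Finset.mem_coe, mem_filter, hPFdef, mem_product]
      exact ⟨⟨⟨hy.1, hx⟩, hy.2.symm⟩, trivial⟩
    · intro p hp
      simp only [Finset.mem_coe, mem_filter, hPFdef, mem_product] at hp
      obtain ⟨p1, p2⟩ := p
      simp only at hp ⊢
      rw [hp.2]
    · intro y hy
      rfl
  have hd2 : d2 = #N + #PF := by
    rw [hd2def, hPFfst, Finset.card_eq_sum_ones N, ← Finset.sum_add_distrib]
    exact sum_congr rfl hdegN
  -- handshake decomposition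
  have hdegfil : ∀ x : V, #(univ.filter (G.Adj x)) = G.degree x := by
    intro x
    rw [← neighborFinset_eq_filter]
    rfl
  have hdegD : ∀ x ∈ Df, G.degree x
      = #(N.filter (fun y => G.Adj x y)) + #(Df.filter (fun y => G.Adj x y)) := by
    intro x hx
    have hxD : x ∈ D := (hDfD x).mp hx
    have hnb : G.neighborFinset x
        = (N.filter (fun y => G.Adj x y)) ∪ (Df.filter (fun y => G.Adj x y)) := by
      ext y
      simp only [mem_neighborFinset, mem_union, mem_filter]
      constructor
      · intro hadj
        rcases htrich y with h | h | h
        · subst h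
          exact absurd hadj.symm hxD.2
        · exact Or.inl ⟨h, hadj⟩
        · exact Or.inr ⟨(hDfD y).mpr h, hadj⟩
      · rintro (⟨_, h⟩ | ⟨_, h⟩) <;> exact h
    have hdisj : Disjoint (N.filter (fun y => G.Adj x y)) (Df.filter (fun y => G.Adj x y)) := by
      rw [Finset.disjoint_left]
      intro a ha haD
      exact hND a (mem_filter.mp ha).1 ((hDfD a).mp (mem_filter.mp haD).1)
    have : G.degree x = #(G.neighborFinset x) := rfl
    rw [this, hnb, card_union_of_disjoint hdisj]
  have hsumDf : ∑ x ∈ Df, #(Df.filter (fun y => G.Adj x y)) = ∑ x : ↥D, degi x := by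
    rw [Finset.sum_subtype (p := (· ∈ D)) Df hDfD
      (fun x => #(Df.filter (fun y => G.Adj x y)))]
    refine Finset.sum_congr rfl fun x _ => ?_
    exact (cfi G D x).symm
  have hE : 2 * Nat.card G.edgeSet
      = G.degree v + d2 + #PF + ∑ x : ↥D, degi x := by
    have h0 := hsk G
    rw [Finset.sum_congr rfl (fun x _ => hdegfil x)] at h0
    rw [← h0, huniv, Finset.sum_union hd3, Finset.sum_union hd12, Finset.sum_singleton]
    rw [Finset.sum_congr rfl hdegD, Finset.sum_add_distrib, ← hPFsnd, ← hd2def, hsumDf]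
    ring
  have hsplit : ∑ x : ↥D, degi x = (∑ x ∈ Tsub, degi x) + (∑ x ∈ Psub, degi x) := by
    rw [hTsubdef, hPsubdef]
    exact (Finset.sum_filter_add_sum_filter_not univ (fun x => tree (mkD x)) degi).symm
  have hNpart : ∑ x ∈ Psub, degi x = 2 * Nat.card (TR Gi).edgeSet := by
    have hcl : ∀ ⦃x : ↥D⦄, x ∈ {z : ↥D | ¬ IsTreeComponent Gi (Gi.connectedComponentMk z)} →
        ∀ ⦃y : ↥D⦄, Gi.Adj x y → y ∈ {z : ↥D | ¬ IsTreeComponent Gi (Gi.connectedComponentMk z)} := by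
      intro x hx y hxy
      have : Gi.connectedComponentMk y = Gi.connectedComponentMk x :=
        SimpleGraph.ConnectedComponent.connectedComponentMk_eq_of_adj hxy.symm
      simpa [Set.mem_setOf_eq, this] using hx
    have h := closed_hsk Gi {z : ↥D | ¬ IsTreeComponent Gi (Gi.connectedComponentMk z)} hcl
    have heq : Psub = univ.filter
        (· ∈ {z : ↥D | ¬ IsTreeComponent Gi (Gi.connectedComponentMk z)}) := by
      rw [hPsubdef, htreedef, hmkDdef]
      rfl
    rw [heq]
    have hdeq : ∀ x : ↥D, degi x = #(univ.filter (Gi.Adj x)) := fun x => by rw [hdegidef]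
    rw [Finset.sum_congr rfl (fun x _ => hdeq x), h]
    rfl
  have hfib : ∀ c : Gi.ConnectedComponent,
      univ.filter (fun x => mkD x = c) = univ.filter (· ∈ c.supp) := by
    intro c
    ext x
    simp [SimpleGraph.ConnectedComponent.mem_supp_iff, hmkDdef]
  have hA : ∀ c ∈ tc, (∑ x ∈ univ.filter (fun x => mkD x = c), degi x) + 2
      = 2 * #(univ.filter (fun x => mkD x = c)) := by
    intro c hc
    rw [hfib c]
    have hct : IsTreeComponent Gi c := by
      have := (mem_filter.mp hc).2
      rwa [htreedef] at this
    have h := treecomp_hsk Gi c hct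
    rw [← h]
  have hTpart : (∑ x ∈ Tsub, degi x) + 2 * #tc = 2 * #Tsub := by
    have hstep : ∑ x ∈ Tsub, degi x
        = ∑ c ∈ tc, ∑ x ∈ univ.filter (fun x => mkD x = c), degi x := by
      rw [hTsubdef, Finset.sum_filter]
      rw [← Finset.sum_fiberwise_of_maps_to (g := mkD) (t := univ)
        (fun x _ => mem_univ _) (fun x => if tree (mkD x) then degi x else 0)]
      rw [htcdef, Finset.sum_filter]
      refine Finset.sum_congr rfl fun c _ => ?_
      by_cases h : tree c
      · rw [if_pos h]
        refine Finset.sum_congr rfl fun x hx => ?_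
        rw [(mem_filter.mp hx).2, if_pos h]
      · rw [if_neg h]
        refine Finset.sum_eq_zero fun x hx => ?_
        rw [(mem_filter.mp hx).2, if_neg h]
    have hcnt : #Tsub = ∑ c ∈ tc, #(univ.filter (fun x => mkD x = c)) := by
      rw [Finset.card_eq_sum_card_fiberwise (f := mkD) (t := univ) (fun x _ => mem_univ _)]
      rw [htcdef, Finset.sum_filter]
      refine Finset.sum_congr rfl fun c _ => ?_
      by_cases h : tree c
      · rw [if_pos h]
        congr 1
        rw [hTsubdef, Finset.filter_filter]
        ext x
        simp only [mem_filter, mem_univ, true_and]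
        exact ⟨fun hh => hh.2, fun hh => ⟨hh ▸ h, hh⟩⟩
      · rw [if_neg h, Finset.card_eq_zero, Finset.filter_eq_empty_iff]
        intro x hx heq
        exact h (heq ▸ (mem_filter.mp hx).2)
    have h2 : ∑ c ∈ tc, ((∑ x ∈ univ.filter (fun x => mkD x = c), degi x) + 2)
        = ∑ c ∈ tc, 2 * #(univ.filter (fun x => mkD x = c)) := Finset.sum_congr rfl hA
    rw [hstep, hcnt, Finset.mul_sum, ← h2, Finset.sum_add_distrib, Finset.sum_const,
      smul_eq_mul]
    omega
  have hDfsplit : #Df = #Tsub + #Psub := by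
    have h1 : #Tsub + #Psub = Fintype.card ↥D := by
      rw [hTsubdef, hPsubdef, Finset.card_filter_add_card_filter_not, card_univ]
    rw [h1, hDfdef, Fintype.card_subtype]
  have hnIn : Nat.card {x : ↥D // ¬ IsTreeComponent Gi (Gi.connectedComponentMk x)} = #Psub := by
    rw [Nat.card_eq_fintype_card, Fintype.card_subtype, hPsubdef, htreedef, hmkDdef]
  have hcomp : ∀ c : Gi.ConnectedComponent, tree c → ∃ q : (V × V) × (V × V),
      q.1.1 ≠ q.2.1 ∧ q.1 ∈ PF ∧ q.2 ∈ PF ∧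
      (∃ h : q.1.2 ∈ D, mkD ⟨q.1.2, h⟩ = c) ∧ (∃ h : q.2.2 ∈ D, mkD ⟨q.2.2, h⟩ = c) := by
    intro c hc
    have hct : IsTreeComponent Gi c := by rwa [htreedef] at hc
    set X : Set V := Subtype.val '' (c.supp : Set ↥D) with hXdef
    have hXD : ∀ ⦃z⦄, z ∈ X → z ∈ D := by rintro z ⟨z', _, rfl⟩; exact z'.2
    have hmemX : ∀ z (hz : z ∈ D), (⟨z, hz⟩ : ↥D) ∈ c.supp ↔ z ∈ X := by
      intro z hz
      constructor
      · intro h; exact ⟨⟨z, hz⟩, h, rfl⟩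
      · rintro ⟨z', hz', hzz⟩
        have hzz' : z' = ⟨z, hz⟩ := Subtype.ext hzz
        rwa [hzz'] at hz'
    have hXne : X.Nonempty := by
      obtain ⟨x0, hx0⟩ := c.exists_rep
      refine ⟨↑x0, x0, ?_, rfl⟩
      rw [SimpleGraph.ConnectedComponent.mem_supp_iff]
      exact hx0
    have hacy : (G.induce X).IsAcyclic := by
      refine acyclic_of_hom_s11
        (fun z => (⟨⟨z.1, hXD z.2⟩, (hmemX z.1 (hXD z.2)).mpr z.2⟩ :
          {y : ↥D // y ∈ c.supp})) ?_ ?_ hct.IsAcyclic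
      · intro a b hab
        exact Subtype.ext (congrArg (fun t => (t : {y : ↥D // y ∈ c.supp}).1.1) hab)
      · intro a b hab
        exact hab
    have hnf : NearForest (G.induce X) := by
      obtain ⟨z0, hz0⟩ := hXne
      exact Or.inr ⟨⟨z0, hz0⟩,
        acyclic_of_hom_s11 Subtype.val Subtype.val_injective (fun a b hab => hab) hacy⟩
    have happ := hred X hXne hnf
    have hfin : {y | y ∉ X ∧ ∃ x ∈ X, G.Adj x y}.Finite := Set.toFinite _
    obtain ⟨y1, y2, hy1, hy2, hne12⟩ :=
      (Set.one_lt_ncard_iff hfin).mp (by omega)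
    have hYN : ∀ y, y ∉ X → ∀ x, x ∈ X → G.Adj x y →
        y ∈ N ∧ ∃ h : x ∈ D, mkD ⟨x, h⟩ = c := by
      intro y hyX x hxX hadj
      have hxD : x ∈ D := hXD hxX
      have hxc : mkD ⟨x, hxD⟩ = c := by
        rw [hmkDdef, ← SimpleGraph.ConnectedComponent.mem_supp_iff]
        exact (hmemX x hxD).mpr hxX
      refine ⟨?_, hxD, hxc⟩
      rcases htrich y with rfl | h | h
      · exact absurd hadj.symm hxD.2
      · exact h
      · exfalso
        have hGi : Gi.Adj ⟨x, hxD⟩ ⟨y, h⟩ := hadj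
        have hyc : Gi.connectedComponentMk ⟨y, h⟩ = c := by
          rw [← hxc, hmkDdef]
          exact SimpleGraph.ConnectedComponent.connectedComponentMk_eq_of_adj hGi.symm
        apply hyX
        refine (hmemX y h).mp ?_
        rw [SimpleGraph.ConnectedComponent.mem_supp_iff]
        exact hyc
      
    obtain ⟨hy1X, x1, hx1X, hadj1⟩ := hy1
    obtain ⟨hy2X, x2, hx2X, hadj2⟩ := hy2
    obtain ⟨hy1N, hx1⟩ := hYN y1 hy1X x1 hx1X hadj1
    obtain ⟨hy2N, hx2⟩ := hYN y2 hy2X x2 hx2X hadj2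
    refine ⟨((y1, x1), (y2, x2)), hne12, ?_, ?_, hx1, hx2⟩
    · exact mem_filter.mpr ⟨mem_product.mpr ⟨hy1N, (hDfD x1).mpr (hXD hx1X)⟩, hadj1.symm⟩
    · exact mem_filter.mpr ⟨mem_product.mpr ⟨hy2N, (hDfD x2).mpr (hXD hx2X)⟩, hadj2.symm⟩
  have hKey : 2 * #tc + s0 ≤ #PF := by
    have hVne : Nonempty V := hconn.nonempty
    choose! q hne hm1 hm2 hcc1 hcc2 using hcomp
    set Rt : V × V → Prop := fun p => ∃ h : p.2 ∈ D, tree (mkD ⟨p.2, h⟩) with hRtdef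
    have hsplitPF : #(PF.filter Rt) + #(PF.filter (fun p => ¬ Rt p)) = #PF :=
      Finset.card_filter_add_card_filter_not _
    have h2t : 2 * #tc ≤ #(PF.filter Rt) := by
      have hcard : #(tc ×ˢ (univ : Finset Bool)) = 2 * #tc := by
        rw [Finset.card_product]
        simp [mul_comm]
      rw [← hcard]
      apply Finset.card_le_card_of_injOn (fun cb => if cb.2 then (q cb.1).1 else (q cb.1).2)
      · rintro ⟨c, b⟩ hcb
        have htc : tree c := by
          have h := (Finset.mem_product.mp hcb).1
          rw [htcdef] at h
          exact (mem_filter.mp h).2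
        cases b
        · simp only [Bool.false_eq_true, if_false]
          refine mem_filter.mpr ⟨hm2 c htc, ?_⟩
          obtain ⟨h, hcq⟩ := hcc2 c htc
          exact ⟨h, by rw [hcq]; exact htc⟩
        · simp only [if_true]
          refine mem_filter.mpr ⟨hm1 c htc, ?_⟩
          obtain ⟨h, hcq⟩ := hcc1 c htc
          exact ⟨h, by rw [hcq]; exact htc⟩
      · rintro ⟨c1, b1⟩ h1 ⟨c2, b2⟩ h2 heq
        have ht1 : tree c1 := by
          have h := (Finset.mem_product.mp (Finset.mem_coe.mp h1)).1
          rw [htcdef] at h; exact (mem_filter.mp h).2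
        have ht2 : tree c2 := by
          have h := (Finset.mem_product.mp (Finset.mem_coe.mp h2)).1
          rw [htcdef] at h; exact (mem_filter.mp h).2
        have hkey : ∀ (z : V × V), (∃ h : z.2 ∈ D, mkD ⟨z.2, h⟩ = c1) →
            (∃ h : z.2 ∈ D, mkD ⟨z.2, h⟩ = c2) → c1 = c2 := by
          rintro z ⟨ha1, e1⟩ ⟨ha2, e2⟩
          rw [← e1, ← e2]
        cases b1 <;> cases b2 <;>
          simp only [Bool.false_eq_true, if_false, if_true] at heq
        · exact Prod.ext (hkey _ (hcc2 c1 ht1) (by rw [heq]; exact hcc2 c2 ht2)) rfl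
        · exfalso
          have hc12 : c1 = c2 := hkey _ (hcc2 c1 ht1) (by rw [heq]; exact hcc1 c2 ht2)
          rw [← hc12] at heq
          exact hne c1 ht1 (congrArg Prod.fst heq).symm
        · exfalso
          have hc12 : c1 = c2 := hkey _ (hcc1 c1 ht1) (by rw [heq]; exact hcc2 c2 ht2)
          rw [← hc12] at heq
          exact hne c1 ht1 (congrArg Prod.fst heq)
        · exact Prod.ext (hkey _ (hcc1 c1 ht1) (by rw [heq]; exact hcc1 c2 ht2)) rfl
    have hs0le : s0 ≤ #(PF.filter (fun p => ¬ Rt p)) := by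
      have hwch : ∀ y, y ∈ Sdec G v → ∃ w, G.Adj v w ∧ G.Adj w y := by
        intro y hy
        obtain ⟨hy1, hy2, _⟩ := hy
        exact hy2
      choose! wf hwf1 hwf2 using hwch
      have hs0' : s0 = #(Sdec G v).toFinset := by
        rw [hs0def, Set.ncard_eq_toFinset_card']
      rw [hs0']
      apply Finset.card_le_card_of_injOn (fun y => (wf y, y))
      · intro y hy
        rw [Finset.mem_coe, Set.mem_toFinset] at hy
        obtain ⟨hyD, hyw, hynt⟩ := hy
        refine mem_filter.mpr ⟨mem_filter.mpr ⟨mem_product.mpr ⟨?_, ?_⟩, ?_⟩, ?_⟩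
        · rw [hNdef, mem_neighborFinset]
          exact hwf1 y ⟨hyD, hyw, hynt⟩
        · exact (hDfD y).mpr hyD
        · exact hwf2 y ⟨hyD, hyw, hynt⟩
        · rintro ⟨h, htr⟩
          exact hynt htr
      · intro a _ b _ heq
        exact congrArg Prod.snd heq
    omega
  -- final arithmetic
  have hdN : G.degree v = #N := by rw [hNdef]; rfl
  have ha : 2 * Nat.card G.edgeSet
      = 2 * d2 + (∑ x ∈ Tsub, degi x) + 2 * Nat.card (TR Gi).edgeSet := by omega
  have hnV : Nat.card V = 1 + G.degree v + #Tsub + #Psub := by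
    rw [Nat.card_eq_fintype_card]; omega
  have hK2 : 2 * #tc + s0 + G.degree v ≤ d2 := by omega
  simp only [sliceVal]
  rw [hnIn]
  have r1 : (2:ℝ) * (Nat.card G.edgeSet : ℝ)
      = 2 * (d2:ℝ) + ((∑ x ∈ Tsub, degi x : ℕ):ℝ) + 2 * (Nat.card (TR Gi).edgeSet : ℝ) := by
    exact_mod_cast ha
  have r2 : (Nat.card V : ℝ) = 1 + (G.degree v : ℝ) + (#Tsub : ℝ) + (#Psub : ℝ) := by
    exact_mod_cast hnV
  have r3 : (2:ℝ) * (#Tsub:ℝ) = ((∑ x ∈ Tsub, degi x : ℕ):ℝ) + 2 * (#tc:ℝ) := by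
    exact_mod_cast hTpart.symm
  have r4 : 2*(#tc:ℝ) + (s0:ℝ) + (G.degree v:ℝ) ≤ (d2:ℝ) := by exact_mod_cast hK2
  have hfl : ((1 + G.degree v + #tc : ℕ) : ℤ)
      ≤ ⌊((d2:ℝ) + (G.degree v:ℝ) + 2 - (s0:ℝ))/2⌋ := by
    rw [Int.le_floor]
    push_cast
    linarith
  have hflR : ((1:ℝ) + (G.degree v:ℝ) + (#tc:ℝ))
      ≤ ((⌊((d2:ℝ) + (G.degree v:ℝ) + 2 - (s0:ℝ))/2⌋ : ℤ) : ℝ) := by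
    have h := (Int.cast_le (R := ℝ)).mpr hfl
    push_cast at h
    linarith
  have hσfl : σ * ((⌊((d2:ℝ) + (G.degree v:ℝ) + 2 - (s0:ℝ))/2⌋ : ℤ) : ℝ)
      ≤ σ * ((1:ℝ) + (G.degree v:ℝ) + (#tc:ℝ)) :=
    mul_le_mul_of_nonpos_left hflR (le_of_lt hσ)
  have hm1 : ρ * ((2:ℝ) * (Nat.card G.edgeSet : ℝ))
      = ρ * (2 * (d2:ℝ) + ((∑ x ∈ Tsub, degi x : ℕ):ℝ) + 2 * (Nat.card (TR Gi).edgeSet : ℝ)) := by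
    rw [r1]
  have hm2 : σ * (Nat.card V : ℝ)
      = σ * (1 + (G.degree v : ℝ) + (#Tsub : ℝ) + (#Psub : ℝ)) := by rw [r2]
  have hm3 : σ * ((2:ℝ) * (#Tsub:ℝ))
      = σ * (((∑ x ∈ Tsub, degi x : ℕ):ℝ) + 2 * (#tc:ℝ)) := by rw [r3]
  have hm4 : 0 ≤ (ρ+σ) * ((∑ x ∈ Tsub, degi x : ℕ):ℝ) :=
    mul_nonneg hρσ (Nat.cast_nonneg _)
  linarith
end

section
/- Let 𝒢 = (G, w₊, w₋, W) be a 1-balanced weighted graph and S ⊆ V(G) with |Γ_G(S)| ≤ 1. Then Z(Prune(𝒢,S)) = Z(𝒢) and Prune(𝒢,S) is 1-balanced. -/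
open Classical in
/-- The multivariate hard-core partition function of the weighted graph
`(G restricted to the vertex set A, w₊, w₋, W)`. -/
noncomputable def Zw {V : Type*} [Fintype V] (G : SimpleGraph V) (A : Finset V)
    (wp wm : V → ℕ) (W : ℕ) : ℕ :=
  W * ∑ I ∈ A.powerset.filter (fun I => ∀ a ∈ I, ∀ b ∈ I, ¬G.Adj a b),
      (∏ v ∈ I, wp v) * ∏ v ∈ A \ I, wm v

section Defs

variable {V : Type*} [Fintype V] (G : SimpleGraph V)

open Classical in
/-- The finset of independent subsets of `A`. -/
noncomputable def iS (A : Finset V) : Finset (Finset V) :=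
  A.powerset.filter (fun I => ∀ a ∈ I, ∀ b ∈ I, ¬G.Adj a b)

open Classical in
/-- The unweighted (`W = 1`) partition function. -/
noncomputable def zs (A : Finset V) (wp wm : V → ℕ) : ℕ :=
  ∑ I ∈ iS G A, (∏ v ∈ I, wp v) * ∏ v ∈ A \ I, wm v

lemma Zw_eq (A : Finset V) (wp wm : V → ℕ) (W : ℕ) :
    Zw G A wp wm W = W * zs G A wp wm := rfl

lemma mem_iS {A I : Finset V} :
    I ∈ iS G A ↔ I ⊆ A ∧ ∀ a ∈ I, ∀ b ∈ I, ¬G.Adj a b := by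
  simp [iS, Finset.mem_filter, Finset.mem_powerset]

end Defs

section Aux

variable {V : Type*} [Fintype V] [DecidableEq V] (G : SimpleGraph V) [DecidableRel G.Adj]

lemma zs_eq (A : Finset V) (wp wm : V → ℕ) :
    zs G A wp wm = ∑ I ∈ iS G A, (∏ v ∈ I, wp v) * ∏ v ∈ A \ I, wm v := by
  unfold zs
  refine Finset.sum_congr rfl fun I _ => ?_
  refine congrArg _ ?_
  refine Finset.prod_congr ?_ fun _ _ => rfl
  ext y
  simp [Finset.mem_sdiff]

/-- Splitting sums over independent subsets of a disjoint union. -/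
lemma sum_iS_union (S T : Finset V) (hd : Disjoint S T) (f : Finset V → ℕ) :
    ∑ I ∈ iS G (S ∪ T), f I =
      ∑ J ∈ iS G T,
        ∑ K ∈ (iS G S).filter (fun K => ∀ a ∈ K, ∀ b ∈ J, ¬G.Adj a b), f (J ∪ K) := by
  rw [← Finset.sum_sigma (iS G T)
      (fun J => (iS G S).filter (fun K => ∀ a ∈ K, ∀ b ∈ J, ¬G.Adj a b))
      (fun x => f (x.1 ∪ x.2))]
  refine Finset.sum_nbij' (fun I => ⟨I ∩ T, I ∩ S⟩) (fun x => x.1 ∪ x.2) ?_ ?_ ?_ ?_ ?_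
  · intro I hI
    rw [mem_iS] at hI
    obtain ⟨hsub, hind⟩ := hI
    refine Finset.mem_sigma.2 ⟨?_, ?_⟩
    · rw [mem_iS]
      exact ⟨Finset.inter_subset_right, fun a ha b hb =>
        hind a (Finset.mem_of_mem_inter_left ha) b (Finset.mem_of_mem_inter_left hb)⟩
    · rw [Finset.mem_filter, mem_iS]
      exact ⟨⟨Finset.inter_subset_right, fun a ha b hb =>
        hind a (Finset.mem_of_mem_inter_left ha) b (Finset.mem_of_mem_inter_left hb)⟩,
        fun a ha b hb => hind a (Finset.mem_of_mem_inter_left ha) b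
          (Finset.mem_of_mem_inter_left hb)⟩
  · intro x hx
    rw [Finset.mem_sigma] at hx
    obtain ⟨h1, h2⟩ := hx
    rw [Finset.mem_filter] at h2
    obtain ⟨h2, hcross⟩ := h2
    rw [mem_iS] at h1 h2 ⊢
    refine ⟨Finset.union_subset (h1.1.trans Finset.subset_union_right)
      (h2.1.trans Finset.subset_union_left), ?_⟩
    intro a ha b hb
    rcases Finset.mem_union.1 ha with ha' | ha' <;> rcases Finset.mem_union.1 hb with hb' | hb'
    · exact h1.2 a ha' b hb'
    · intro h; exact hcross b hb' a ha' h.symm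
    · exact hcross a ha' b hb'
    · exact h2.2 a ha' b hb'
  · intro I hI
    rw [mem_iS] at hI
    show I ∩ T ∪ I ∩ S = I
    ext y
    simp only [Finset.mem_union, Finset.mem_inter]
    constructor
    · rintro (⟨hy, _⟩ | ⟨hy, _⟩) <;> exact hy
    · intro hy
      rcases Finset.mem_union.1 (hI.1 hy) with h | h
      · exact Or.inr ⟨hy, h⟩
      · exact Or.inl ⟨hy, h⟩
  · intro x hx
    obtain ⟨J, K⟩ := x
    rw [Finset.mem_sigma] at hx
    obtain ⟨h1, h2⟩ := hx
    rw [Finset.mem_filter] at h2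
    rw [mem_iS] at h1
    have h2' := (mem_iS G).1 h2.1
    have hJT : J ⊆ T := h1.1
    have hKS : K ⊆ S := h2'.1
    have e1 : (J ∪ K) ∩ T = J := by
      ext y
      simp only [Finset.mem_inter, Finset.mem_union]
      constructor
      · rintro ⟨hy | hy, hT⟩
        · exact hy
        · exact absurd hT (Finset.disjoint_left.1 hd (hKS hy))
      · intro hy; exact ⟨Or.inl hy, hJT hy⟩
    have e2 : (J ∪ K) ∩ S = K := by
      ext y
      simp only [Finset.mem_inter, Finset.mem_union]
      constructor
      · rintro ⟨hy | hy, hT⟩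
        · exact absurd hT (Finset.disjoint_left.1 hd.symm (hJT hy))
        · exact hy
      · intro hy; exact ⟨Or.inr hy, hKS hy⟩
    show (⟨(J ∪ K) ∩ T, (J ∪ K) ∩ S⟩ : (_ : Finset V) × Finset V) = ⟨J, K⟩
    rw [e1, e2]
  · intro I hI
    rw [mem_iS] at hI
    have h : I ∩ T ∪ I ∩ S = I := by
      ext y
      simp only [Finset.mem_union, Finset.mem_inter]
      constructor
      · rintro (⟨hy, _⟩ | ⟨hy, _⟩) <;> exact hy
      · intro hy
        rcases Finset.mem_union.1 (hI.1 hy) with h | h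
        · exact Or.inr ⟨hy, h⟩
        · exact Or.inl ⟨hy, h⟩
    exact congrArg f h.symm

/-- Weight of `J ∪ K` factorizes. -/
lemma weight_union (S T J K : Finset V) (hd : Disjoint S T) (hJ : J ⊆ T) (hK : K ⊆ S)
    (wp wm : V → ℕ) :
    (∏ v ∈ J ∪ K, wp v) * ∏ v ∈ (S ∪ T) \ (J ∪ K), wm v =
      ((∏ v ∈ J, wp v) * ∏ v ∈ T \ J, wm v) *
        ((∏ v ∈ K, wp v) * ∏ v ∈ S \ K, wm v) := by
  have hdJK : Disjoint J K := (Finset.disjoint_of_subset_left hJ hd.symm).mono_right hK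
  have e : (S ∪ T) \ (J ∪ K) = (T \ J) ∪ (S \ K) := by
    ext x
    simp only [Finset.mem_sdiff, Finset.mem_union, not_or]
    constructor
    · rintro ⟨hx | hx, hnJ, hnK⟩
      · exact Or.inr ⟨hx, hnK⟩
      · exact Or.inl ⟨hx, hnJ⟩
    · rintro (⟨hx, hnJ⟩ | ⟨hx, hnK⟩)
      · exact ⟨Or.inr hx, hnJ, fun h => Finset.disjoint_left.1 hd (hK h) hx⟩
      · exact ⟨Or.inl hx, fun h => Finset.disjoint_left.1 hd hx (hJ h), hnK⟩
  have hdTS : Disjoint (T \ J) (S \ K) :=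
    Finset.disjoint_of_subset_left (Finset.sdiff_subset)
      (Finset.disjoint_of_subset_right (Finset.sdiff_subset) hd.symm)
  rw [Finset.prod_union hdJK, e, Finset.prod_union hdTS]
  ring

end Aux

open Finset in
open Classical in
/-- Pruning preserves the partition function and `1`-balance. Let `𝒢` be the
`1`-balanced weighted graph `(G restricted to A, w₊, w₋, W)` and `S ⊆ A` with
`|Γ(S)| ≤ 1` (neighbourhoods taken inside `A`). If `Γ(S) = ∅` then
`Prune(𝒢,S) = (𝒢 − S with W replaced by Z(G[S],w₊,w₋,W))` has the same partition
function (and is trivially still `1`-balanced); if `Γ(S) = {v}` then the weighted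
graph obtained by deleting `S` and updating the weights of `v` as in the definition
of `Prune` has the same partition function and is still `1`-balanced. -/
theorem stmt_12 {V : Type*} [Fintype V] [DecidableEq V] (G : SimpleGraph V)
    [DecidableRel G.Adj] (A S : Finset V) (hS : S ⊆ A)
    (wp wm : V → ℕ) (W : ℕ)
    (hwp : ∀ u, 0 < wp u) (hwm : ∀ u, 0 < wm u) (hW : 0 < W)
    (hbal : ∀ u ∈ A, wp u ≤ wm u)
    (hΓ : ((A \ S).filter (fun y => ∃ x ∈ S, G.Adj x y)).card ≤ 1) :
    (((A \ S).filter (fun y => ∃ x ∈ S, G.Adj x y)) = ∅ →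
      Zw G (A \ S) wp wm (Zw G S wp wm W) = Zw G A wp wm W) ∧
    (∀ v, ((A \ S).filter (fun y => ∃ x ∈ S, G.Adj x y)) = {v} →
      (Zw G (A \ S)
          (Function.update wp v (wp v * (∏ x ∈ S.filter (fun x => G.Adj v x), wm x) *
            Zw G (S.filter (fun x => ¬G.Adj v x)) wp wm 1))
          (Function.update wm v (wm v * Zw G S wp wm 1)) W = Zw G A wp wm W) ∧
      (∀ u ∈ A \ S,
        Function.update wp v (wp v * (∏ x ∈ S.filter (fun x => G.Adj v x), wm x) *
            Zw G (S.filter (fun x => ¬G.Adj v x)) wp wm 1) u ≤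
        Function.update wm v (wm v * Zw G S wp wm 1) u)) := by
  set T : Finset V := A \ S with hT
  have hd : Disjoint S T := Finset.disjoint_sdiff
  have hST : S ∪ T = A := Finset.union_sdiff_of_subset hS
  constructor
  · -- empty neighbourhood case
    intro hemp
    have hnadj : ∀ x ∈ S, ∀ y ∈ T, ¬G.Adj x y := by
      intro x hx y hy hadj
      have : y ∈ T.filter (fun y => ∃ x ∈ S, G.Adj x y) :=
        Finset.mem_filter.2 ⟨hy, ⟨x, hx, hadj⟩⟩
      rw [hemp] at this
      exact absurd this (Finset.notMem_empty y)
    have step : ∀ J ∈ iS G T,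
        (∑ K ∈ (iS G S).filter (fun K => ∀ a ∈ K, ∀ b ∈ J, ¬G.Adj a b),
          ((∏ v ∈ J ∪ K, wp v) * ∏ v ∈ (S ∪ T) \ (J ∪ K), wm v))
        = ((∏ v ∈ J, wp v) * ∏ v ∈ T \ J, wm v) * zs G S wp wm := by
      intro J hJ
      have hfil : (iS G S).filter (fun K => ∀ a ∈ K, ∀ b ∈ J, ¬G.Adj a b) = iS G S :=
        Finset.filter_true_of_mem fun K hK => fun a ha b hb =>
          hnadj a (((mem_iS G).1 hK).1 ha) b (((mem_iS G).1 hJ).1 hb)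
      rw [hfil, zs_eq, Finset.mul_sum]
      exact Finset.sum_congr rfl fun K hK =>
        weight_union S T J K hd (((mem_iS G).1 hJ).1) (((mem_iS G).1 hK).1) wp wm
    have hzz : zs G (S ∪ T) wp wm = zs G T wp wm * zs G S wp wm := by
      rw [zs_eq G (S ∪ T), sum_iS_union G S T hd, Finset.sum_congr rfl step,
        ← Finset.sum_mul, ← zs_eq]
    rw [Zw_eq, Zw_eq, Zw_eq, ← hST, hzz]
    ring
  · -- singleton case
    intro v hv
    have hvT : v ∈ T := by
      have : v ∈ T.filter (fun y => ∃ x ∈ S, G.Adj x y) := by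
        rw [hv]; exact Finset.mem_singleton_self v
      exact (Finset.mem_filter.1 this).1
    have hnadj : ∀ y ∈ T, y ≠ v → ∀ x ∈ S, ¬G.Adj x y := by
      intro y hy hyv x hx hadj
      have : y ∈ T.filter (fun y => ∃ x ∈ S, G.Adj x y) :=
        Finset.mem_filter.2 ⟨hy, ⟨x, hx, hadj⟩⟩
      rw [hv, Finset.mem_singleton] at this
      exact hyv this
    set S' : Finset V := S.filter (fun x => G.Adj v x) with hS'
    set S'' : Finset V := S.filter (fun x => ¬G.Adj v x) with hS''
    set P : ℕ := ∏ x ∈ S', wm x with hP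
    have hiSS'' : ∀ K, K ∈ iS G S'' ↔ K ∈ iS G S ∧ ∀ a ∈ K, ¬G.Adj a v := by
      intro K
      rw [mem_iS, mem_iS]
      constructor
      · rintro ⟨hsub, hind⟩
        refine ⟨⟨hsub.trans (Finset.filter_subset _ _), hind⟩, fun a ha h => ?_⟩
        exact (Finset.mem_filter.1 (hsub ha)).2 h.symm
      · rintro ⟨⟨hsub, hind⟩, hnv⟩
        exact ⟨fun a ha => Finset.mem_filter.2 ⟨hsub ha, fun h => hnv a ha h.symm⟩, hind⟩
    have hinner : ∑ K ∈ iS G S'', (∏ x ∈ K, wp x) * ∏ x ∈ S \ K, wm x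
        = P * zs G S'' wp wm := by
      rw [zs_eq, Finset.mul_sum]
      refine Finset.sum_congr rfl (fun K hK => ?_)
      have hKsub : K ⊆ S'' := ((mem_iS G).1 hK).1
      have e : S \ K = S' ∪ (S'' \ K) := by
        ext x
        simp only [Finset.mem_sdiff, Finset.mem_union, hS', hS'', Finset.mem_filter]
        constructor
        · rintro ⟨hx, hnx⟩
          by_cases h : G.Adj v x
          · exact Or.inl ⟨hx, h⟩
          · exact Or.inr ⟨⟨hx, h⟩, hnx⟩
        · rintro (⟨hx, h⟩ | ⟨⟨hx, h⟩, hnx⟩)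
          · exact ⟨hx, fun hk => (Finset.mem_filter.1 (hKsub hk)).2 h⟩
          · exact ⟨hx, hnx⟩
      have hdisj : Disjoint S' (S'' \ K) := by
        refine Finset.disjoint_left.2 (fun x hx hx' => ?_)
        exact (Finset.mem_filter.1 (Finset.mem_sdiff.1 hx').1).2 (Finset.mem_filter.1 hx).2
      rw [e, Finset.prod_union hdisj]
      ring
    have hsubsum : P * zs G S'' wp wm ≤ zs G S wp wm := by
      rw [← hinner, zs_eq]
      exact Finset.sum_le_sum_of_subset (fun K hK => ((hiSS'' K).1 hK).1)
    set wpv : V → ℕ := Function.update wp v (wp v * P * Zw G S'' wp wm 1) with hwpv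
    set wmv : V → ℕ := Function.update wm v (wm v * Zw G S wp wm 1) with hwmv
    have key : zs G (S ∪ T) wp wm = zs G T wpv wmv := by
      rw [zs_eq G (S ∪ T), sum_iS_union G S T hd, zs_eq G T]
      refine Finset.sum_congr rfl fun J hJ => ?_
      have hJsub : J ⊆ T := ((mem_iS G).1 hJ).1
      by_cases hvJ : v ∈ J
      · -- v ∈ J
        have hfil : (iS G S).filter (fun K => ∀ a ∈ K, ∀ b ∈ J, ¬G.Adj a b) = iS G S'' := by
          ext K
          rw [Finset.mem_filter, hiSS'' K]
          constructor
          · rintro ⟨hK, hcross⟩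
            exact ⟨hK, fun a ha => hcross a ha v hvJ⟩
          · rintro ⟨hK, hnv⟩
            refine ⟨hK, fun a ha b hb => ?_⟩
            by_cases hbv : b = v
            · subst hbv; exact hnv a ha
            · intro h
              exact hnadj b (hJsub hb) hbv a (((mem_iS G).1 hK).1 ha) h
        have hwpJ : ∏ x ∈ J, wpv x = (∏ x ∈ J, wp x) * (P * Zw G S'' wp wm 1) := by
          rw [hwpv, Finset.prod_update_of_mem hvJ, Finset.sdiff_singleton_eq_erase, ← Finset.mul_prod_erase J wp hvJ]
          ring
        have hwmJ : ∏ x ∈ T \ J, wmv x = ∏ x ∈ T \ J, wm x := by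
          refine Finset.prod_congr rfl (fun x hx => ?_)
          have hxv : x ≠ v := fun h => (Finset.mem_sdiff.1 hx).2 (h ▸ hvJ)
          rw [hwmv]
          exact Function.update_of_ne hxv _ _
        calc ∑ K ∈ (iS G S).filter (fun K => ∀ a ∈ K, ∀ b ∈ J, ¬G.Adj a b),
              (∏ x ∈ J ∪ K, wp x) * ∏ x ∈ (S ∪ T) \ (J ∪ K), wm x
            = ∑ K ∈ iS G S'', ((∏ x ∈ J, wp x) * ∏ x ∈ T \ J, wm x) *
                ((∏ x ∈ K, wp x) * ∏ x ∈ S \ K, wm x) := by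
              rw [hfil]
              exact Finset.sum_congr rfl fun K hK =>
                weight_union S T J K hd hJsub
                  (((mem_iS G).1 (((hiSS'' K).1 hK).1)).1) wp wm
          _ = ((∏ x ∈ J, wp x) * ∏ x ∈ T \ J, wm x) * (P * zs G S'' wp wm) := by
              rw [← Finset.mul_sum, hinner]
          _ = (∏ x ∈ J, wpv x) * ∏ x ∈ T \ J, wmv x := by
              rw [hwpJ, hwmJ, Zw_eq, one_mul]
              ring
      · -- v ∉ J
        have hfil : (iS G S).filter (fun K => ∀ a ∈ K, ∀ b ∈ J, ¬G.Adj a b) = iS G S := by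
          refine Finset.filter_true_of_mem (fun K hK => ?_)
          intro a ha b hb h
          have hbv : b ≠ v := fun hb' => hvJ (hb' ▸ hb)
          exact hnadj b (hJsub hb) hbv a (((mem_iS G).1 hK).1 ha) h
        have hwpJ : ∏ x ∈ J, wpv x = ∏ x ∈ J, wp x := by
          refine Finset.prod_congr rfl (fun x hx => ?_)
          rw [hwpv]
          exact Function.update_of_ne (fun h => hvJ (by rwa [h] at hx)) _ _
        have hvTJ : v ∈ T \ J := Finset.mem_sdiff.2 ⟨hvT, hvJ⟩
        have hwmJ : ∏ x ∈ T \ J, wmv x = (∏ x ∈ T \ J, wm x) * Zw G S wp wm 1 := by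
          rw [hwmv, Finset.prod_update_of_mem hvTJ, Finset.sdiff_singleton_eq_erase, ← Finset.mul_prod_erase (T \ J) wm hvTJ]
          ring
        calc ∑ K ∈ (iS G S).filter (fun K => ∀ a ∈ K, ∀ b ∈ J, ¬G.Adj a b),
              (∏ x ∈ J ∪ K, wp x) * ∏ x ∈ (S ∪ T) \ (J ∪ K), wm x
            = ∑ K ∈ iS G S, ((∏ x ∈ J, wp x) * ∏ x ∈ T \ J, wm x) *
                ((∏ x ∈ K, wp x) * ∏ x ∈ S \ K, wm x) := by
              rw [hfil]
              exact Finset.sum_congr rfl fun K hK =>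
                weight_union S T J K hd hJsub (((mem_iS G).1 hK).1) wp wm
          _ = ((∏ x ∈ J, wp x) * ∏ x ∈ T \ J, wm x) * zs G S wp wm := by
              rw [← Finset.mul_sum, ← zs_eq]
          _ = (∏ x ∈ J, wpv x) * ∏ x ∈ T \ J, wmv x := by
              rw [hwpJ, hwmJ, Zw_eq, one_mul]
              ring
    refine ⟨?_, ?_⟩
    · rw [Zw_eq, Zw_eq, ← hST, key]
    · intro u hu
      by_cases huv : u = v
      · subst huv
        show wpv u ≤ wmv u
        rw [hwpv, hwmv, Function.update_self, Function.update_self]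
        have h1 : wp u ≤ wm u := hbal u (Finset.mem_sdiff.1 hu).1
        calc wp u * P * Zw G S'' wp wm 1 = wp u * (P * zs G S'' wp wm) := by
              rw [Zw_eq, one_mul]; ring
          _ ≤ wm u * zs G S wp wm := Nat.mul_le_mul h1 hsubsum
          _ = wm u * Zw G S wp wm 1 := by rw [Zw_eq, one_mul]
      · show wpv u ≤ wmv u
        rw [hwpv, hwmv, Function.update_of_ne huv, Function.update_of_ne huv]
        exact hbal u (Finset.mem_sdiff.1 hu).1
end
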